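/- arXiv:2603.06957 — 5 statements merged into one kernel-verified Lean document; each statement's English description precedes it below -/
import Mathlib

section
/- There is an absolute constant C > 0 such that the following holds. Assume the γ-margin assumption for (𝒟, y*, φ) and suppose T N k γ² ≥ e. Let (w_t)_{t=0}^{T-1} be the SGD iterates w_{t+1} = w_t + η_t ∇_w log p_{w_t}(y*(x^{(t)}) | x^{(t)}), where x^{(0)}, …, x^{(T-1)} are i.i.d. draws from 𝒟, w_0 = 0, and the adaptive learning rate is η_t = (2 + 4‖∇_w log p_{w_t}(y*(x^{(t)}) | x^{(t)})‖₂)^{-1}. Then 1 − (1/T) ∑_{t=0}^{T-1} E[p_{w_t}(y*(x) | x)] ≤ C (log(T N k γ²))² / (γ² T), where the expectation is over the training samples and an independent test context x ~ 𝒟; equivalently, for τ uniform on {0, …, T−1} independent of everything, 1 − E[p_{w_τ}(y*(x) | x)] ≤ C (log(T N k γ²))² / (γ² T). -/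
open MeasureTheory ProbabilityTheory
open scoped BigOperators RealInnerProductSpace ENNReal

noncomputable section

/-- Token-level autoregressive softmax probability:
`p_w(a | x, pre) = exp⟨w, φ(x, pre ++ [a])⟩ / ∑_b exp⟨w, φ(x, pre ++ [b])⟩`. -/
def pTok {𝒳 : Type*} {D k : ℕ} (φ : 𝒳 → List (Fin k) → EuclideanSpace ℝ (Fin D))
    (w : EuclideanSpace ℝ (Fin D)) (x : 𝒳) (pre : List (Fin k)) (a : Fin k) : ℝ :=
  Real.exp ⟪w, φ x (pre ++ [a])⟫ / ∑ b : Fin k, Real.exp ⟪w, φ x (pre ++ [b])⟫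

/-- Prefix `y_{1:i}` (the first `i` tokens) of a length-`N` response. -/
def pref {k N : ℕ} (y : Fin N → Fin k) (i : ℕ) : List (Fin k) := (List.ofFn y).take i

/-- Sequence-level autoregressive probability `p_w(y | x) = ∏_i p_w(y_i | x, y_{1:i-1})`. -/
def pSeq {𝒳 : Type*} {D k N : ℕ} (φ : 𝒳 → List (Fin k) → EuclideanSpace ℝ (Fin D))
    (w : EuclideanSpace ℝ (Fin D)) (x : 𝒳) (y : Fin N → Fin k) : ℝ :=
  ∏ i : Fin N, pTok φ w x (pref y i) (y i)

/-- The γ-margin assumption: some unit vector `w*` separates each correct token from every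
incorrect one with margin `γ`, `𝒟`-a.s., and all features of nonempty prefixes of length at
most `N` have norm at most `1`. -/
def Margin {𝒳 : Type*} [MeasurableSpace 𝒳] {D k N : ℕ}
    (φ : 𝒳 → List (Fin k) → EuclideanSpace ℝ (Fin D)) (𝒟 : Measure 𝒳)
    (ystar : 𝒳 → Fin N → Fin k) (γ : ℝ) : Prop :=
  (∃ wstar : EuclideanSpace ℝ (Fin D), ‖wstar‖ = 1 ∧
      ∀ᵐ x ∂𝒟, ∀ i : Fin N, ∀ a : Fin k, a ≠ ystar x i →
        ⟪wstar, φ x (pref (ystar x) ((i : ℕ) + 1))⟫ ≥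
          ⟪wstar, φ x (pref (ystar x) (i : ℕ) ++ [a])⟫ + γ) ∧
  ∀ x : 𝒳, ∀ l : List (Fin k), l ≠ [] → l.length ≤ N → ‖φ x l‖ ≤ 1

namespace SGDAux

variable {𝒳 : Type*} {D k N : ℕ} [NeZero k]

/-- partition function -/
def Zf (φ : 𝒳 → List (Fin k) → EuclideanSpace ℝ (Fin D)) (w : EuclideanSpace ℝ (Fin D)) (x : 𝒳) (pre : List (Fin k)) : ℝ :=
  ∑ b : Fin k, Real.exp ⟪w, φ x (pre ++ [b])⟫

variable {φ : 𝒳 → List (Fin k) → EuclideanSpace ℝ (Fin D)}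

lemma Zf_pos (w : EuclideanSpace ℝ (Fin D)) (x : 𝒳) (pre : List (Fin k)) : 0 < Zf φ w x pre :=
  Finset.sum_pos (fun b _ => Real.exp_pos _) ⟨⟨0, Nat.pos_of_ne_zero (NeZero.ne k)⟩, Finset.mem_univ _⟩

lemma pTok_pos (w : EuclideanSpace ℝ (Fin D)) (x : 𝒳) (pre : List (Fin k)) (a : Fin k) : 0 < pTok φ w x pre a :=
  div_pos (Real.exp_pos _) (Zf_pos w x pre)

lemma pTok_eq (w : EuclideanSpace ℝ (Fin D)) (x : 𝒳) (pre : List (Fin k)) (a : Fin k) :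
    pTok φ w x pre a = Real.exp ⟪w, φ x (pre ++ [a])⟫ / Zf φ w x pre := rfl

lemma pTok_le_one (w : EuclideanSpace ℝ (Fin D)) (x : 𝒳) (pre : List (Fin k)) (a : Fin k) :
    pTok φ w x pre a ≤ 1 := by
  rw [pTok_eq, div_le_one (Zf_pos w x pre)]
  exact Finset.single_le_sum (f := fun b => Real.exp ⟪w, φ x (pre ++ [b])⟫)
    (fun b _ => (Real.exp_pos _).le) (Finset.mem_univ a)

lemma sum_pTok (w : EuclideanSpace ℝ (Fin D)) (x : 𝒳) (pre : List (Fin k)) :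
    ∑ b : Fin k, pTok φ w x pre b = 1 := by
  simp only [pTok_eq]
  rw [← Finset.sum_div]
  exact div_self (Zf_pos w x pre).ne'

lemma pSeq_pos (w : EuclideanSpace ℝ (Fin D)) (x : 𝒳) (y : Fin N → Fin k) :
    0 < pSeq φ w x y :=
  Finset.prod_pos fun _ _ => pTok_pos w x _ _

lemma pSeq_le_one (w : EuclideanSpace ℝ (Fin D)) (x : 𝒳) (y : Fin N → Fin k) :
    pSeq φ w x y ≤ 1 :=
  Finset.prod_le_one (fun _ _ => (pTok_pos w x _ _).le) (fun _ _ => pTok_le_one w x _ _)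

lemma log_pTok (w : EuclideanSpace ℝ (Fin D)) (x : 𝒳) (pre : List (Fin k)) (a : Fin k) :
    Real.log (pTok φ w x pre a) = ⟪w, φ x (pre ++ [a])⟫ - Real.log (Zf φ w x pre) := by
  rw [pTok_eq, Real.log_div (Real.exp_pos _).ne' (Zf_pos w x pre).ne', Real.log_exp]

lemma log_pSeq (w : EuclideanSpace ℝ (Fin D)) (x : 𝒳) (y : Fin N → Fin k) :
    Real.log (pSeq φ w x y) =
      ∑ i : Fin N, (⟪w, φ x (pref y (i : ℕ) ++ [y i])⟫ - Real.log (Zf φ w x (pref y i))) := by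
  rw [pSeq, Real.log_prod (fun i _ => (pTok_pos w x _ _).ne')]
  exact Finset.sum_congr rfl fun i _ => log_pTok w x _ _

omit [NeZero k] in
lemma pref_succ (y : Fin N → Fin k) (i : Fin N) :
    pref y ((i : ℕ) + 1) = pref y (i : ℕ) ++ [y i] := by
  simp [pref, List.take_succ, List.getElem?_ofFn, i.isLt]

omit [NeZero k] in
lemma pref_length (y : Fin N → Fin k) (i : ℕ) (hi : i ≤ N) : (pref y i).length = i := by
  simp [pref, hi]

/-- softmax-weighted mean feature -/
def tokG (φ : 𝒳 → List (Fin k) → EuclideanSpace ℝ (Fin D)) (w : EuclideanSpace ℝ (Fin D))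
    (x : 𝒳) (pre : List (Fin k)) : EuclideanSpace ℝ (Fin D) :=
  ∑ b : Fin k, pTok φ w x pre b • φ x (pre ++ [b])

/-- gradient of `w ↦ log pSeq φ w x y` -/
def seqG (φ : 𝒳 → List (Fin k) → EuclideanSpace ℝ (Fin D)) (x : 𝒳) (y : Fin N → Fin k)
    (w : EuclideanSpace ℝ (Fin D)) : EuclideanSpace ℝ (Fin D) :=
  ∑ i : Fin N, (φ x (pref y (i : ℕ) ++ [y i]) - tokG φ w x (pref y i))

open InnerProductSpace in
lemma hasFDerivAt_inner_right (v w : EuclideanSpace ℝ (Fin D)) :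
    HasFDerivAt (fun w : EuclideanSpace ℝ (Fin D) => ⟪w, v⟫) (innerSL ℝ v) w := by
  have h := (innerSL ℝ v).hasFDerivAt (x := w)
  have he : (fun w : EuclideanSpace ℝ (Fin D) => ⟪w, v⟫) = ⇑(innerSL ℝ v) := by
    funext w'; exact (real_inner_comm w' v).symm
  rw [he]; exact h

open InnerProductSpace in
lemma hasFDerivAt_logZ (w : EuclideanSpace ℝ (Fin D)) (x : 𝒳) (pre : List (Fin k)) :
    HasFDerivAt (fun w : EuclideanSpace ℝ (Fin D) => Real.log (Zf φ w x pre))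
      (toDual ℝ (EuclideanSpace ℝ (Fin D)) (tokG φ w x pre)) w := by
  have h1 : HasFDerivAt (fun w : EuclideanSpace ℝ (Fin D) => Zf φ w x pre)
      (∑ b : Fin k, Real.exp ⟪w, φ x (pre ++ [b])⟫ • (innerSL ℝ (φ x (pre ++ [b])))) w := by
    apply HasFDerivAt.fun_sum
    intro b _
    exact (hasFDerivAt_inner_right _ w).exp
  have h2 := h1.log (Zf_pos w x pre).ne'
  refine h2.congr_fderiv (Eq.symm ?_)
  apply ContinuousLinearMap.ext
  intro z
  simp only [toDual_apply_apply, ContinuousLinearMap.smul_apply, ContinuousLinearMap.coe_sum',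
    Finset.sum_apply, innerSL_apply_apply, smul_eq_mul]
  rw [tokG, sum_inner, Finset.mul_sum]
  refine Finset.sum_congr rfl fun b _ => ?_
  rw [real_inner_smul_left, pTok_eq]
  ring

open InnerProductSpace in
lemma hasGradientAt_log_pSeq (w : EuclideanSpace ℝ (Fin D)) (x : 𝒳) (y : Fin N → Fin k) :
    HasGradientAt (fun w : EuclideanSpace ℝ (Fin D) => Real.log (pSeq φ w x y))
      (seqG φ x y w) w := by
  rw [hasGradientAt_iff_hasFDerivAt]
  have he : (fun w : EuclideanSpace ℝ (Fin D) => Real.log (pSeq φ w x y)) =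
      fun w : EuclideanSpace ℝ (Fin D) => ∑ i : Fin N,
        (⟪w, φ x (pref y (i : ℕ) ++ [y i])⟫ - Real.log (Zf φ w x (pref y i))) :=
    funext fun w => log_pSeq w x y
  rw [he]
  have h : HasFDerivAt (fun w : EuclideanSpace ℝ (Fin D) => ∑ i : Fin N,
      (⟪w, φ x (pref y (i : ℕ) ++ [y i])⟫ - Real.log (Zf φ w x (pref y i))))
      (∑ i : Fin N, (toDual ℝ (EuclideanSpace ℝ (Fin D)) (φ x (pref y (i : ℕ) ++ [y i])) -
        toDual ℝ (EuclideanSpace ℝ (Fin D)) (tokG φ w x (pref y i)))) w := by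
    apply HasFDerivAt.fun_sum
    intro i _
    refine HasFDerivAt.sub ?_ (hasFDerivAt_logZ w x _)
    have h0 := hasFDerivAt_inner_right (φ x (pref y (i : ℕ) ++ [y i])) w
    have he2 : toDual ℝ (EuclideanSpace ℝ (Fin D)) (φ x (pref y (i : ℕ) ++ [y i])) =
        innerSL ℝ (φ x (pref y (i : ℕ) ++ [y i])) := by
      apply ContinuousLinearMap.ext; intro z; simp [toDual_apply_apply]
    rw [he2]; exact h0
  refine h.congr_fderiv (Eq.symm ?_)
  rw [seqG, map_sum]
  exact Finset.sum_congr rfl fun i _ => (map_sub _ _ _)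

lemma gradient_log_pSeq (w : EuclideanSpace ℝ (Fin D)) (x : 𝒳) (y : Fin N → Fin k) :
    gradient (fun w : EuclideanSpace ℝ (Fin D) => Real.log (pSeq φ w x y)) w = seqG φ x y w :=
  (hasGradientAt_log_pSeq w x y).gradient


/-! ### Inequalities -/

lemma inner_tokG (z w : EuclideanSpace ℝ (Fin D)) (x : 𝒳) (pre : List (Fin k)) :
    ⟪z, tokG φ w x pre⟫ = ∑ b : Fin k, pTok φ w x pre b * ⟪z, φ x (pre ++ [b])⟫ := by
  rw [tokG, inner_sum]
  exact Finset.sum_congr rfl fun b _ => real_inner_smul_right _ _ _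

/-- convexity of log-sum-exp (subgradient inequality at `w`). -/
lemma logZ_ge (w u : EuclideanSpace ℝ (Fin D)) (x : 𝒳) (pre : List (Fin k)) :
    Real.log (Zf φ w x pre) + ⟪u - w, tokG φ w x pre⟫ ≤ Real.log (Zf φ u x pre) := by
  set t : Fin k → ℝ := fun b => ⟪u - w, φ x (pre ++ [b])⟫ with ht
  have hZu : Zf φ u x pre = Zf φ w x pre * ∑ b : Fin k, pTok φ w x pre b * Real.exp (t b) := by
    rw [Zf, Finset.mul_sum]
    refine Finset.sum_congr rfl fun b _ => ?_
    rw [pTok_eq]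
    have : ⟪u, φ x (pre ++ [b])⟫ = ⟪w, φ x (pre ++ [b])⟫ + t b := by
      rw [ht]; simp [inner_sub_left]
    rw [this, Real.exp_add]
    field_simp
    rw [div_self (Zf_pos w x pre).ne']
  have hsum_pos : 0 < ∑ b : Fin k, pTok φ w x pre b * Real.exp (t b) :=
    Finset.sum_pos (fun b _ => mul_pos (pTok_pos w x pre b) (Real.exp_pos _))
      Finset.univ_nonempty
  have hjensen : Real.exp (∑ b : Fin k, pTok φ w x pre b * t b) ≤
      ∑ b : Fin k, pTok φ w x pre b * Real.exp (t b) := by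
    have := convexOn_exp.map_sum_le (t := Finset.univ) (w := fun b => pTok φ w x pre b)
      (p := t) (fun b _ => (pTok_pos w x pre b).le) (sum_pTok w x pre)
      (fun b _ => Set.mem_univ _)
    simpa [smul_eq_mul] using this
  have h1 : ∑ b : Fin k, pTok φ w x pre b * t b ≤
      Real.log (∑ b : Fin k, pTok φ w x pre b * Real.exp (t b)) :=
    (Real.le_log_iff_exp_le hsum_pos).2 hjensen
  rw [hZu, Real.log_mul (Zf_pos w x pre).ne' hsum_pos.ne']
  have h2 : ⟪u - w, tokG φ w x pre⟫ = ∑ b : Fin k, pTok φ w x pre b * t b :=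
    inner_tokG _ _ _ _
  linarith

/-- concavity of `w ↦ log pSeq φ w x y` (supergradient inequality). -/
lemma log_pSeq_concave (w u : EuclideanSpace ℝ (Fin D)) (x : 𝒳) (y : Fin N → Fin k) :
    Real.log (pSeq φ u x y) ≤ Real.log (pSeq φ w x y) + ⟪u - w, seqG φ x y w⟫ := by
  rw [log_pSeq, log_pSeq]
  have hinner : ⟪u - w, seqG φ x y w⟫ =
      ∑ i : Fin N, (⟪u - w, φ x (pref y (i : ℕ) ++ [y i])⟫ - ⟪u - w, tokG φ w x (pref y i)⟫) := by
    rw [seqG, inner_sum]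
    exact Finset.sum_congr rfl fun i _ => inner_sub_right _ _ _
  rw [hinner, ← Finset.sum_add_distrib]
  refine Finset.sum_le_sum fun i _ => ?_
  have h1 := logZ_ge (φ := φ) w u x (pref y i)
  have h2 : ⟪u, φ x (pref y (i : ℕ) ++ [y i])⟫ =
      ⟪w, φ x (pref y (i : ℕ) ++ [y i])⟫ + ⟪u - w, φ x (pref y (i : ℕ) ++ [y i])⟫ := by
    simp [inner_sub_left]
  linarith

/-- norm bound on the gradient. -/
lemma norm_seqG_le (w : EuclideanSpace ℝ (Fin D)) (x : 𝒳) (y : Fin N → Fin k)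
    (hb : ∀ l : List (Fin k), l ≠ [] → l.length ≤ N → ‖φ x l‖ ≤ 1) :
    ‖seqG φ x y w‖ ≤ 2 * ∑ i : Fin N, (1 - pTok φ w x (pref y i) (y i)) := by
  rw [seqG]
  refine le_trans (norm_sum_le _ _) ?_
  rw [Finset.mul_sum]
  refine Finset.sum_le_sum fun i _ => ?_
  set v := φ x (pref y (i : ℕ) ++ [y i]) with hv
  have hsplit : v - tokG φ w x (pref y i) =
      ∑ b : Fin k, pTok φ w x (pref y i) b • (v - φ x (pref y (i : ℕ) ++ [b])) := by
    have h1 : ∑ b : Fin k, pTok φ w x (pref y i) b • (v - φ x (pref y (i : ℕ) ++ [b])) =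
        (∑ b : Fin k, pTok φ w x (pref y i) b • v) -
          ∑ b : Fin k, pTok φ w x (pref y i) b • φ x (pref y (i : ℕ) ++ [b]) := by
      rw [← Finset.sum_sub_distrib]
      exact Finset.sum_congr rfl fun b _ => smul_sub _ _ _
    rw [tokG, h1, ← Finset.sum_smul, sum_pTok, one_smul]
  rw [hsplit]
  refine le_trans (norm_sum_le _ _) ?_
  have hnorm : ∀ b : Fin k, ‖pTok φ w x (pref y i) b • (v - φ x (pref y (i : ℕ) ++ [b]))‖ =
      pTok φ w x (pref y i) b * ‖v - φ x (pref y (i : ℕ) ++ [b])‖ := by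
    intro b
    rw [norm_smul, Real.norm_eq_abs, abs_of_pos (pTok_pos w x _ b)]
  have hlen : ∀ b : Fin k, ‖φ x (pref y (i : ℕ) ++ [b])‖ ≤ 1 := by
    intro b
    refine hb _ (by simp) ?_
    rw [List.length_append, pref_length y i (le_of_lt i.isLt)]
    exact i.isLt
  have hdiff : ∀ b : Fin k, ‖v - φ x (pref y (i : ℕ) ++ [b])‖ ≤ 2 := by
    intro b
    refine le_trans (norm_sub_le _ _) ?_
    have := hlen (y i)
    have h2 := hlen b
    rw [hv]
    linarith
  calc ∑ b : Fin k, ‖pTok φ w x (pref y i) b • (v - φ x (pref y (i : ℕ) ++ [b]))‖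
      = ∑ b : Fin k, pTok φ w x (pref y i) b * ‖v - φ x (pref y (i : ℕ) ++ [b])‖ :=
        Finset.sum_congr rfl fun b _ => hnorm b
    _ = ∑ b ∈ Finset.univ.erase (y i),
          pTok φ w x (pref y i) b * ‖v - φ x (pref y (i : ℕ) ++ [b])‖ := by
        rw [← Finset.sum_erase_add _ _ (Finset.mem_univ (y i))]
        simp [hv]
    _ ≤ ∑ b ∈ Finset.univ.erase (y i), pTok φ w x (pref y i) b * 2 :=
        Finset.sum_le_sum fun b _ =>
          mul_le_mul_of_nonneg_left (hdiff b) (pTok_pos (φ := φ) w x (pref y i) b).le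
    _ = 2 * (1 - pTok φ w x (pref y i) (y i)) := by
        rw [← Finset.sum_mul]
        have := Finset.sum_erase_add Finset.univ (fun b => pTok φ w x (pref y i) b)
          (Finset.mem_univ (y i))
        rw [sum_pTok] at this
        have h3 : ∑ b ∈ Finset.univ.erase (y i), pTok φ w x (pref y i) b =
            1 - pTok φ w x (pref y i) (y i) := by linarith
        rw [h3]; ring

/-- `∑ (1 - pᵢ) ≤ -log ∏ pᵢ`. -/
lemma sum_one_sub_pTok_le (w : EuclideanSpace ℝ (Fin D)) (x : 𝒳) (y : Fin N → Fin k) :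
    ∑ i : Fin N, (1 - pTok φ w x (pref y i) (y i)) ≤ -Real.log (pSeq φ w x y) := by
  have h : Real.log (pSeq φ w x y) = ∑ i : Fin N, Real.log (pTok φ w x (pref y i) (y i)) :=
    Real.log_prod fun i _ => (pTok_pos w x _ _).ne'
  rw [h, ← Finset.sum_neg_distrib]
  refine Finset.sum_le_sum fun i _ => ?_
  have := Real.log_le_sub_one_of_pos (pTok_pos (φ := φ) w x (pref y i) (y i))
  linarith

/-- `1 - ∏ pᵢ ≤ ∑ (1 - pᵢ)`. -/
lemma one_sub_pSeq_le (w : EuclideanSpace ℝ (Fin D)) (x : 𝒳) (y : Fin N → Fin k) :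
    1 - pSeq φ w x y ≤ ∑ i : Fin N, (1 - pTok φ w x (pref y i) (y i)) := by
  rw [pSeq]
  have key : ∀ s : Finset (Fin N),
      1 - ∏ i ∈ s, pTok φ w x (pref y i) (y i) ≤
        ∑ i ∈ s, (1 - pTok φ w x (pref y i) (y i)) := by
    intro s
    induction s using Finset.induction_on with
    | empty => simp
    | insert a s hnotmem ih =>
      rw [Finset.prod_insert hnotmem, Finset.sum_insert hnotmem]
      have hp : 0 ≤ pTok φ w x (pref y a) (y a) := (pTok_pos w x _ _).le
      have hp1 : pTok φ w x (pref y a) (y a) ≤ 1 := pTok_le_one w x _ _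
      have hprod : ∏ i ∈ s, pTok φ w x (pref y i) (y i) ≤ 1 :=
        Finset.prod_le_one (fun _ _ => (pTok_pos w x _ _).le) (fun _ _ => pTok_le_one w x _ _)
      nlinarith
  exact key Finset.univ


/-- Margin bound: loss of the scaled comparator. -/
lemma loss_scaled_wstar (x : 𝒳) (y : Fin N → Fin k) (wstar : EuclideanSpace ℝ (Fin D))
    (γ R : ℝ) (hγ : 0 < γ) (hR : 0 ≤ R)
    (hm : ∀ i : Fin N, ∀ a : Fin k, a ≠ y i →
      ⟪wstar, φ x (pref y ((i : ℕ) + 1))⟫ ≥ ⟪wstar, φ x (pref y (i : ℕ) ++ [a])⟫ + γ) :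
    -Real.log (pSeq φ (R • wstar) x y) ≤ (N : ℝ) * k * Real.exp (-(γ * R)) := by
  rw [log_pSeq]
  have hbound : ∀ i : Fin N,
      Real.log (Zf φ (R • wstar) x (pref y i)) -
        ⟪R • wstar, φ x (pref y (i : ℕ) ++ [y i])⟫ ≤ (k : ℝ) * Real.exp (-(γ * R)) := by
    intro i
    set astar : ℝ := ⟪wstar, φ x (pref y (i : ℕ) ++ [y i])⟫ with hastar
    have hZle : Zf φ (R • wstar) x (pref y i) ≤
        Real.exp (R * astar) * (1 + (k : ℝ) * Real.exp (-(γ * R))) := by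
      rw [Zf]
      have hsum : ∑ b : Fin k, Real.exp ⟪R • wstar, φ x (pref y (i : ℕ) ++ [b])⟫ =
          Real.exp (R * astar) +
            ∑ b ∈ Finset.univ.erase (y i), Real.exp ⟪R • wstar, φ x (pref y (i : ℕ) ++ [b])⟫ := by
        rw [← Finset.sum_erase_add _ _ (Finset.mem_univ (y i))]
        rw [real_inner_smul_left]
        ring
      rw [hsum]
      have hterm : ∀ b ∈ Finset.univ.erase (y i),
          Real.exp ⟪R • wstar, φ x (pref y (i : ℕ) ++ [b])⟫ ≤
            Real.exp (R * astar) * Real.exp (-(γ * R)) := by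
        intro b hbmem
        have hbne : b ≠ y i := Finset.ne_of_mem_erase hbmem
        have := hm i b hbne
        rw [pref_succ] at this
        have h1 : ⟪wstar, φ x (pref y (i : ℕ) ++ [b])⟫ ≤ astar - γ := by
          rw [hastar]; linarith
        rw [real_inner_smul_left, ← Real.exp_add]
        apply Real.exp_le_exp.2
        have := mul_le_mul_of_nonneg_left h1 hR
        nlinarith
      have hsum2 : ∑ b ∈ Finset.univ.erase (y i),
          Real.exp ⟪R • wstar, φ x (pref y (i : ℕ) ++ [b])⟫ ≤
            (k : ℝ) * (Real.exp (R * astar) * Real.exp (-(γ * R))) := by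
        refine le_trans (Finset.sum_le_sum hterm) ?_
        rw [Finset.sum_const, nsmul_eq_mul]
        have hcard : ((Finset.univ.erase (y i)).card : ℝ) ≤ (k : ℝ) := by
          have := Finset.card_erase_le (s := (Finset.univ : Finset (Fin k))) (a := y i)
          simp only [Finset.card_univ, Fintype.card_fin] at this
          exact_mod_cast le_trans this (le_refl k)
        have hpos : 0 ≤ Real.exp (R * astar) * Real.exp (-(γ * R)) := by positivity
        exact mul_le_mul_of_nonneg_right hcard hpos
      nlinarith [Real.exp_pos (R * astar)]
    have hlog : Real.log (Zf φ (R • wstar) x (pref y i)) ≤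
        R * astar + Real.log (1 + (k : ℝ) * Real.exp (-(γ * R))) := by
      have h1 : Real.log (Zf φ (R • wstar) x (pref y i)) ≤
          Real.log (Real.exp (R * astar) * (1 + (k : ℝ) * Real.exp (-(γ * R)))) :=
        Real.log_le_log (Zf_pos _ x _) hZle
      rw [Real.log_mul (Real.exp_pos _).ne' (by positivity), Real.log_exp] at h1
      exact h1
    have hlog2 : Real.log (1 + (k : ℝ) * Real.exp (-(γ * R))) ≤
        (k : ℝ) * Real.exp (-(γ * R)) := by
      have := Real.log_le_sub_one_of_pos
        (x := 1 + (k : ℝ) * Real.exp (-(γ * R))) (by positivity)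
      linarith
    rw [real_inner_smul_left]
    linarith
  have := Finset.sum_le_sum (fun i (_ : i ∈ (Finset.univ : Finset (Fin N))) => hbound i)
  rw [Finset.sum_const, Finset.card_univ, Fintype.card_fin, nsmul_eq_mul] at this
  have heq : -∑ i : Fin N, (⟪R • wstar, φ x (pref y (i : ℕ) ++ [y i])⟫ -
      Real.log (Zf φ (R • wstar) x (pref y i))) =
      ∑ i : Fin N, (Real.log (Zf φ (R • wstar) x (pref y i)) -
        ⟪R • wstar, φ x (pref y (i : ℕ) ++ [y i])⟫) := by
    rw [← Finset.sum_neg_distrib]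
    exact Finset.sum_congr rfl fun i _ => by ring
  rw [heq]
  calc ∑ i : Fin N, (Real.log (Zf φ (R • wstar) x (pref y i)) -
        ⟪R • wstar, φ x (pref y (i : ℕ) ++ [y i])⟫)
      ≤ (N : ℝ) * ((k : ℝ) * Real.exp (-(γ * R))) := this
    _ = (N : ℝ) * k * Real.exp (-(γ * R)) := by ring

/-- One step of SGD: descent inequality. -/
lemma descent_step (w u : EuclideanSpace ℝ (Fin D)) (x : 𝒳) (y : Fin N → Fin k)
    (hb : ∀ l : List (Fin k), l ≠ [] → l.length ≤ N → ‖φ x l‖ ≤ 1) :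
    (2 + 4 * ‖seqG φ x y w‖)⁻¹ * (-Real.log (pSeq φ w x y)) ≤
      ‖w - u‖ ^ 2 - ‖w + (2 + 4 * ‖seqG φ x y w‖)⁻¹ • seqG φ x y w - u‖ ^ 2 +
        (-Real.log (pSeq φ u x y)) := by
  set g := seqG φ x y w with hg
  set η := (2 + 4 * ‖g‖)⁻¹ with hη
  set Lw := -Real.log (pSeq φ w x y) with hLw
  set Lu := -Real.log (pSeq φ u x y) with hLu
  have hgnorm : (0 : ℝ) ≤ ‖g‖ := norm_nonneg _
  have hden : (0 : ℝ) < 2 + 4 * ‖g‖ := by linarith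
  have hηpos : 0 < η := inv_pos.2 hden
  have hηle : η ≤ 1 / 2 := by
    rw [hη]
    rw [inv_le_comm₀ hden (by norm_num)]
    norm_num
  have hηg : η * ‖g‖ ≤ 1 / 4 := by
    rw [hη, inv_mul_le_iff₀ hden]
    linarith
  have hLw0 : 0 ≤ Lw := by
    rw [hLw]
    have := Real.log_nonpos (pSeq_pos (φ := φ) w x y).le (pSeq_le_one w x y)
    linarith
  have hLu0 : 0 ≤ Lu := by
    rw [hLu]
    have := Real.log_nonpos (pSeq_pos (φ := φ) u x y).le (pSeq_le_one u x y)
    linarith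
  have hgLw : ‖g‖ ≤ 2 * Lw := by
    refine le_trans (norm_seqG_le w x y hb) ?_
    have := sum_one_sub_pTok_le (φ := φ) w x y
    rw [← hLw] at this
    linarith
  have hconv : ⟪w - u, g⟫ ≤ Lu - Lw := by
    have := log_pSeq_concave (φ := φ) w u x y
    have h2 : ⟪u - w, g⟫ = -⟪w - u, g⟫ := by
      rw [← inner_neg_left]
      congr 1
      abel
    rw [← hg, h2] at this
    rw [hLu, hLw] at *
    linarith
  have hexpand : ‖w + η • g - u‖ ^ 2 = ‖w - u‖ ^ 2 + 2 * η * ⟪w - u, g⟫ + η ^ 2 * ‖g‖ ^ 2 := by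
    have h1 : w + η • g - u = (w - u) + η • g := by abel
    rw [h1, norm_add_sq_real, real_inner_smul_right, norm_smul, Real.norm_eq_abs,
      abs_of_pos hηpos, mul_pow]
    ring
  have hsq : η ^ 2 * ‖g‖ ^ 2 ≤ η * Lw / 2 := by
    have h1 : η ^ 2 * ‖g‖ ^ 2 = (η * ‖g‖) * (η * ‖g‖) := by ring
    have h2 : (η * ‖g‖) * (η * ‖g‖) ≤ (1 / 4) * (η * ‖g‖) :=
      mul_le_mul_of_nonneg_right hηg (by positivity)
    have h3 : η * ‖g‖ ≤ η * (2 * Lw) := mul_le_mul_of_nonneg_left hgLw hηpos.le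
    nlinarith
  have h2ηLu : 2 * η * Lu ≤ Lu := by nlinarith
  nlinarith [mul_le_mul_of_nonneg_left hconv (by positivity : (0:ℝ) ≤ 2 * η)]

/-- Key per-step bound: `1 - pSeq ≤ 10 η L`. -/
lemma one_sub_pSeq_le_eta_loss (w : EuclideanSpace ℝ (Fin D)) (x : 𝒳) (y : Fin N → Fin k)
    (hb : ∀ l : List (Fin k), l ≠ [] → l.length ≤ N → ‖φ x l‖ ≤ 1) :
    1 - pSeq φ w x y ≤
      10 * ((2 + 4 * ‖seqG φ x y w‖)⁻¹ * (-Real.log (pSeq φ w x y))) := by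
  set g := seqG φ x y w with hg
  set Lw := -Real.log (pSeq φ w x y) with hLw
  have hgnorm : (0 : ℝ) ≤ ‖g‖ := norm_nonneg _
  have hden : (0 : ℝ) < 2 + 4 * ‖g‖ := by linarith
  have hLw0 : 0 ≤ Lw := by
    rw [hLw]
    have := Real.log_nonpos (pSeq_pos (φ := φ) w x y).le (pSeq_le_one w x y)
    linarith
  have hgLw : ‖g‖ ≤ 2 * Lw := by
    refine le_trans (norm_seqG_le w x y hb) ?_
    have := sum_one_sub_pTok_le (φ := φ) w x y
    rw [← hLw] at this
    linarith
  have hp1 : 1 - pSeq φ w x y ≤ Lw := by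
    have h1 := one_sub_pSeq_le (φ := φ) w x y
    have h2 := sum_one_sub_pTok_le (φ := φ) w x y
    rw [← hLw] at h2
    linarith
  have hp2 : 1 - pSeq φ w x y ≤ 1 := by
    have := pSeq_pos (φ := φ) w x y
    linarith
  have hp0 : 0 ≤ 1 - pSeq φ w x y := by
    have := pSeq_le_one (φ := φ) w x y
    linarith
  have hkey : (1 - pSeq φ w x y) * (2 + 4 * ‖g‖) ≤ 10 * Lw := by nlinarith
  have h5 : 1 - pSeq φ w x y ≤ 10 * Lw / (2 + 4 * ‖g‖) := by
    rw [le_div_iff₀ hden]; linarith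
  have heq : 10 * ((2 + 4 * ‖g‖)⁻¹ * Lw) = 10 * Lw / (2 + 4 * ‖g‖) := by
    field_simp
  rw [heq]
  exact h5


/-! ### Measurability -/

section Meas

variable [MeasurableSpace 𝒳]

lemma measurable_inner_joint (hφ : ∀ l : List (Fin k), Measurable fun x => φ x l)
    (l : List (Fin k)) :
    Measurable fun p : EuclideanSpace ℝ (Fin D) × 𝒳 => (⟪p.1, φ p.2 l⟫ : ℝ) :=
  Measurable.inner measurable_fst ((hφ l).comp measurable_snd)

lemma measurable_pTok_joint (hφ : ∀ l : List (Fin k), Measurable fun x => φ x l)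
    (pre : List (Fin k)) (a : Fin k) :
    Measurable fun p : EuclideanSpace ℝ (Fin D) × 𝒳 => pTok φ p.1 p.2 pre a := by
  apply Measurable.div
  · exact (Real.measurable_exp).comp (measurable_inner_joint hφ _)
  · exact Finset.measurable_sum _ fun b _ =>
      (Real.measurable_exp).comp (measurable_inner_joint hφ _)

lemma measurable_pSeq_joint_fixed (hφ : ∀ l : List (Fin k), Measurable fun x => φ x l)
    (y : Fin N → Fin k) :
    Measurable fun p : EuclideanSpace ℝ (Fin D) × 𝒳 => pSeq φ p.1 p.2 y := by
  unfold pSeq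
  exact Finset.measurable_prod _ fun i _ => measurable_pTok_joint hφ _ _

lemma measurable_seqG_joint_fixed (hφ : ∀ l : List (Fin k), Measurable fun x => φ x l)
    (y : Fin N → Fin k) :
    Measurable fun p : EuclideanSpace ℝ (Fin D) × 𝒳 => seqG φ p.2 y p.1 := by
  unfold seqG
  apply Finset.measurable_sum
  intro i _
  apply Measurable.sub
  · exact (hφ _).comp measurable_snd
  · unfold tokG
    apply Finset.measurable_sum
    intro b _
    have h1 : Measurable fun p : EuclideanSpace ℝ (Fin D) × 𝒳 =>
        (pTok φ p.1 p.2 (pref y i) b, φ p.2 (pref y (i : ℕ) ++ [b])) :=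
      (measurable_pTok_joint hφ _ _).prodMk ((hφ _).comp measurable_snd)
    exact (continuous_smul.measurable).comp h1

variable {ystar : 𝒳 → Fin N → Fin k}

lemma measurable_pSeq_joint (hφ : ∀ l : List (Fin k), Measurable fun x => φ x l)
    (hyst : Measurable ystar) :
    Measurable fun p : EuclideanSpace ℝ (Fin D) × 𝒳 => pSeq φ p.1 p.2 (ystar p.2) := by
  have hrw : (fun p : EuclideanSpace ℝ (Fin D) × 𝒳 => pSeq φ p.1 p.2 (ystar p.2)) =
      fun p => ∑ y : Fin N → Fin k, if ystar p.2 = y then pSeq φ p.1 p.2 y else 0 := by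
    funext p
    rw [Finset.sum_ite_eq]
    simp
  rw [hrw]
  apply Finset.measurable_sum
  intro y _
  exact Measurable.ite ((hyst.comp measurable_snd) (measurableSet_singleton y))
    (measurable_pSeq_joint_fixed hφ y) measurable_const

lemma measurable_seqG_joint (hφ : ∀ l : List (Fin k), Measurable fun x => φ x l)
    (hyst : Measurable ystar) :
    Measurable fun p : EuclideanSpace ℝ (Fin D) × 𝒳 => seqG φ p.2 (ystar p.2) p.1 := by
  have hrw : (fun p : EuclideanSpace ℝ (Fin D) × 𝒳 => seqG φ p.2 (ystar p.2) p.1) =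
      fun p => ∑ y : Fin N → Fin k, if ystar p.2 = y then seqG φ p.2 y p.1 else 0 := by
    funext p
    rw [Finset.sum_ite_eq]
    simp
  rw [hrw]
  apply Finset.measurable_sum
  intro y _
  exact Measurable.ite ((hyst.comp measurable_snd) (measurableSet_singleton y))
    (measurable_seqG_joint_fixed hφ y) measurable_const

end Meas

end SGDAux

section MeasurePart

open SGDAux

variable {𝒳 : Type*} [MeasurableSpace 𝒳]

/-- Updating one coordinate of an i.i.d. sample with a fresh sample is measure preserving. -/
lemma map_update_pi (𝒟 : Measure 𝒳) [IsProbabilityMeasure 𝒟] {T : ℕ} (t : Fin T) :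
    Measure.map (fun p : (Fin T → 𝒳) × 𝒳 => Function.update p.1 t p.2)
      ((Measure.pi fun _ : Fin T => 𝒟).prod 𝒟) = Measure.pi fun _ : Fin T => 𝒟 := by
  have he : Measurable (fun p : (Fin T → 𝒳) × 𝒳 => Function.update p.1 t p.2) := by
    apply measurable_pi_iff.2
    intro j
    simp only [Function.update_apply]
    by_cases hj : j = t
    · subst hj; simp only [if_pos rfl]; exact measurable_snd
    · simp only [if_neg hj]; exact (measurable_pi_apply j).comp measurable_fst
  refine (Measure.pi_eq fun s hs => ?_).symm
  rw [Measure.map_apply he (MeasurableSet.univ_pi hs)]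
  have hpre : (fun p : (Fin T → 𝒳) × 𝒳 => Function.update p.1 t p.2) ⁻¹' (Set.univ.pi s) =
      (Set.univ.pi (Function.update s t Set.univ)) ×ˢ (s t) := by
    ext p
    simp only [Set.mem_preimage, Set.mem_pi, Set.mem_univ, forall_true_left, Set.mem_prod,
      Function.update_apply]
    constructor
    · intro h
      refine ⟨fun j => ?_, by have := h t; rwa [if_pos rfl] at this⟩
      by_cases hj : j = t
      · subst hj; simp
      · have := h j; rw [if_neg hj] at this; simpa [hj] using this
    · intro h j
      by_cases hj : j = t
      · subst hj; rw [if_pos rfl]; exact h.2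
      · rw [if_neg hj]
        have := h.1 j
        simpa [hj] using this
  rw [hpre, Measure.prod_prod, Measure.pi_pi]
  have h1 : (∏ i : Fin T, 𝒟 (Function.update s t Set.univ i)) =
      ∏ i ∈ Finset.univ.erase t, 𝒟 (s i) := by
    rw [← Finset.prod_erase_mul Finset.univ _ (Finset.mem_univ t), Function.update_self,
      measure_univ, mul_one]
    exact Finset.prod_congr rfl fun i hi => by
      rw [Function.update_of_ne (Finset.ne_of_mem_erase hi)]
  rw [h1]
  exact Finset.prod_erase_mul _ _ (Finset.mem_univ t)

/-- Fubini step: replace evaluation at the `t`-th training point by a fresh test point. -/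
lemma integral_step (𝒟 : Measure 𝒳) [IsProbabilityMeasure 𝒟] {T D : ℕ}
    (q : EuclideanSpace ℝ (Fin D) × 𝒳 → ℝ) (hq : Measurable q)
    (hq0 : ∀ p, 0 ≤ q p) (hq1 : ∀ p, q p ≤ 1)
    (t : Fin T) (Wt : (Fin T → 𝒳) → EuclideanSpace ℝ (Fin D)) (hWt : Measurable Wt)
    (hdep : ∀ xs z, Wt (Function.update xs t z) = Wt xs) :
    ∫ xs, q (Wt xs, xs t) ∂(Measure.pi fun _ : Fin T => 𝒟) =
      ∫ xs, (∫ x, q (Wt xs, x) ∂𝒟) ∂(Measure.pi fun _ : Fin T => 𝒟) := by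
  have he : Measurable (fun p : (Fin T → 𝒳) × 𝒳 => Function.update p.1 t p.2) := by
    apply measurable_pi_iff.2
    intro j
    simp only [Function.update_apply]
    by_cases hj : j = t
    · subst hj; simp only [if_pos rfl]; exact measurable_snd
    · simp only [if_neg hj]; exact (measurable_pi_apply j).comp measurable_fst
  have hfmeas : Measurable fun xs : Fin T → 𝒳 => q (Wt xs, xs t) :=
    hq.comp (hWt.prodMk (measurable_pi_apply t))
  have haes : AEStronglyMeasurable (fun xs : Fin T → 𝒳 => q (Wt xs, xs t))
      (Measure.map (fun p : (Fin T → 𝒳) × 𝒳 => Function.update p.1 t p.2)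
        (((Measure.pi fun _ : Fin T => 𝒟)).prod 𝒟)) := by
    rw [map_update_pi 𝒟 t]; exact hfmeas.aestronglyMeasurable
  have h1 := integral_map he.aemeasurable haes
  rw [map_update_pi 𝒟 t] at h1
  have h2 : ∀ p : (Fin T → 𝒳) × 𝒳,
      q (Wt (Function.update p.1 t p.2), (Function.update p.1 t p.2) t) = q (Wt p.1, p.2) := by
    intro p
    rw [hdep, Function.update_self]
  have h3 : ∫ p, q (Wt (Function.update p.1 t p.2), (Function.update p.1 t p.2) t) ∂((Measure.pi fun _ : Fin T => 𝒟).prod 𝒟) =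
      ∫ p, q (Wt p.1, p.2) ∂((Measure.pi fun _ : Fin T => 𝒟).prod 𝒟) := by
    exact integral_congr_ae (Filter.Eventually.of_forall h2)
  have hint : MeasureTheory.Integrable (fun p : (Fin T → 𝒳) × 𝒳 => q (Wt p.1, p.2)) ((Measure.pi fun _ : Fin T => 𝒟).prod 𝒟) := by
    refine MeasureTheory.Integrable.mono' (integrable_const 1)
      ((hq.comp ((hWt.comp measurable_fst).prodMk measurable_snd)).aestronglyMeasurable)
      (Filter.Eventually.of_forall fun p => ?_)
    rw [Real.norm_eq_abs, abs_le]
    exact ⟨by linarith [hq0 (Wt p.1, p.2)], hq1 _⟩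
  have h4 := MeasureTheory.integral_prod (μ := (Measure.pi fun _ : Fin T => 𝒟)) (ν := 𝒟)
    (fun p : (Fin T → 𝒳) × 𝒳 => q (Wt p.1, p.2)) hint
  rw [h1, h3, h4]

end MeasurePart


open SGDAux in
set_option maxHeartbeats 1000000 in
/-- Proposition: SGD with adaptive learning rate
`η_t = (2 + 4‖∇ log p_{w_t}(y*(x^{(t)})|x^{(t)})‖)⁻¹`.  Under the γ-margin assumption and
`T N k γ² ≥ e`, the SGD iterates on `T` i.i.d. samples satisfy
`1 − (1/T) ∑_t E[p_{w_t}(y*(x)|x)] ≤ C (log(T N k γ²))² / (γ² T)` for an absolute constant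
`C`; equivalently, this is the guarantee for an iterate `w_τ` with `τ` uniform on
`{0, …, T−1}`.  The expectation is over the training samples and an independent test
context `x ~ 𝒟`. -/
theorem sgd_adaptive_lr :
    ∃ C : ℝ, 0 < C ∧
      ∀ (𝒳 : Type) [MeasurableSpace 𝒳] (D k N T : ℕ),
        2 ≤ k → 1 ≤ N → 1 ≤ D → 1 ≤ T →
        ∀ (φ : 𝒳 → List (Fin k) → EuclideanSpace ℝ (Fin D))
          (𝒟 : Measure 𝒳) (_ : IsProbabilityMeasure 𝒟)
          (ystar : 𝒳 → Fin N → Fin k) (γ : ℝ),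
          0 < γ →
          Margin φ 𝒟 ystar γ →
          Real.exp 1 ≤ (T : ℝ) * N * k * γ ^ 2 →
          Measurable ystar →
          (∀ l : List (Fin k), Measurable fun x => φ x l) →
          ∀ W : (Fin T → 𝒳) → ℕ → EuclideanSpace ℝ (Fin D),
            (∀ xs, W xs 0 = 0) →
            (∀ xs (t : Fin T),
              W xs ((t : ℕ) + 1) = W xs (t : ℕ) +
                (2 + 4 * ‖gradient (fun w => Real.log (pSeq φ w (xs t) (ystar (xs t))))
                    (W xs (t : ℕ))‖)⁻¹ •
                gradient (fun w => Real.log (pSeq φ w (xs t) (ystar (xs t)))) (W xs (t : ℕ))) →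
            1 - (1 / (T : ℝ)) * ∑ t : Fin T,
                  ∫ xs, (∫ x, pSeq φ (W xs (t : ℕ)) x (ystar x) ∂𝒟)
                    ∂(Measure.pi fun _ : Fin T => 𝒟) ≤
              C * (Real.log ((T : ℝ) * N * k * γ ^ 2)) ^ 2 / (γ ^ 2 * T) := by
  refine ⟨50, by norm_num, ?_⟩
  intro 𝒳 _ D k N T hk hN hD hT φ 𝒟 hprob ystar γ hγ hmargin hTNk hyst hφ W hW0 hWrec
  haveI : NeZero k := ⟨by omega⟩
  haveI : IsProbabilityMeasure 𝒟 := hprob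
  obtain ⟨⟨wstar, hwnorm, hwae⟩, hfeat⟩ := hmargin
  -- notation
  set X : ℝ := (T : ℝ) * N * k * γ ^ 2 with hX
  have hXpos : 0 < X := lt_of_lt_of_le (Real.exp_pos 1) hTNk
  set LX : ℝ := Real.log X with hLX
  have hLX1 : 1 ≤ LX := (Real.le_log_iff_exp_le hXpos).2 hTNk
  set R : ℝ := 2 * LX / γ with hR
  have hR0 : 0 ≤ R := by positivity
  set u : EuclideanSpace ℝ (Fin D) := R • wstar with hu
  have hTpos : (0 : ℝ) < T := by exact_mod_cast hT
  -- rewritten recursion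
  have hWrec' : ∀ xs (t : Fin T), W xs ((t : ℕ) + 1) = W xs (t : ℕ) +
      (2 + 4 * ‖seqG φ (xs t) (ystar (xs t)) (W xs (t : ℕ))‖)⁻¹ •
        seqG φ (xs t) (ystar (xs t)) (W xs (t : ℕ)) := by
    intro xs t
    have h := hWrec xs t
    rwa [gradient_log_pSeq] at h
  -- dependence of W on initial coordinates only
  have hWdep : ∀ m : ℕ, m ≤ T → ∀ xs xs' : Fin T → 𝒳,
      (∀ s : Fin T, (s : ℕ) < m → xs s = xs' s) → W xs m = W xs' m := by
    intro m
    induction m with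
    | zero => intro _ xs xs' _; rw [hW0, hW0]
    | succ m ih =>
      intro hm xs xs' hagree
      have hmT : m < T := by omega
      set t : Fin T := ⟨m, hmT⟩ with htdef
      have h1 : W xs m = W xs' m :=
        ih (by omega) xs xs' fun s hs => hagree s (by omega)
      have h2 : xs t = xs' t := hagree t (by simp [htdef])
      have e1 := hWrec' xs t
      have e2 := hWrec' xs' t
      simp only [htdef] at e1 e2
      rw [e1, e2, h1, h2]
  -- measurability of the iterates
  have hWmeas : ∀ m : ℕ, m ≤ T → Measurable fun xs : Fin T → 𝒳 => W xs m := by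
    intro m
    induction m with
    | zero =>
      intro _
      have : (fun xs : Fin T → 𝒳 => W xs 0) = fun _ => 0 := funext fun xs => hW0 xs
      rw [this]; exact measurable_const
    | succ m ih =>
      intro hm
      have hmT : m < T := by omega
      set t : Fin T := ⟨m, hmT⟩ with htdef
      have hG := measurable_seqG_joint (φ := φ) hφ hyst
      have hc : Measurable fun p : EuclideanSpace ℝ (Fin D) × 𝒳 =>
          (2 + 4 * ‖seqG φ p.2 (ystar p.2) p.1‖)⁻¹ :=
        (measurable_const.add (measurable_const.mul hG.norm)).inv
      have hsm : Measurable fun p : EuclideanSpace ℝ (Fin D) × 𝒳 =>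
          (2 + 4 * ‖seqG φ p.2 (ystar p.2) p.1‖)⁻¹ • seqG φ p.2 (ystar p.2) p.1 :=
        continuous_smul.measurable.comp (hc.prodMk hG)
      have hF : Measurable fun p : EuclideanSpace ℝ (Fin D) × 𝒳 =>
          p.1 + (2 + 4 * ‖seqG φ p.2 (ystar p.2) p.1‖)⁻¹ • seqG φ p.2 (ystar p.2) p.1 :=
        measurable_fst.add hsm
      have hcomp : Measurable fun xs : Fin T → 𝒳 => (W xs m, xs t) :=
        (ih (by omega)).prodMk (measurable_pi_apply t)
      have heq : (fun xs : Fin T → 𝒳 => W xs (m + 1)) =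
          (fun p : EuclideanSpace ℝ (Fin D) × 𝒳 =>
            p.1 + (2 + 4 * ‖seqG φ p.2 (ystar p.2) p.1‖)⁻¹ • seqG φ p.2 (ystar p.2) p.1) ∘
            (fun xs => (W xs m, xs t)) := by
        funext xs
        exact hWrec' xs t
      rw [heq]
      exact hF.comp hcomp
  -- per-sample comparator loss bound constant
  set ε : ℝ := (N : ℝ) * k * Real.exp (-(γ * R)) with hε
  have hε0 : 0 ≤ ε := by positivity
  -- pathwise bound
  set B : ℝ := 10 * (R ^ 2 + (T : ℝ) * ε) with hB
  have hpath : ∀ xs : Fin T → 𝒳,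
      (∀ t : Fin T, ∀ i : Fin N, ∀ a : Fin k, a ≠ ystar (xs t) i →
        ⟪wstar, φ (xs t) (pref (ystar (xs t)) ((i : ℕ) + 1))⟫ ≥
          ⟪wstar, φ (xs t) (pref (ystar (xs t)) (i : ℕ) ++ [a])⟫ + γ) →
      ∑ t : Fin T, (1 - pSeq φ (W xs (t : ℕ)) (xs t) (ystar (xs t))) ≤ B := by
    intro xs hmxs
    classical
    set F : ℕ → ℝ := fun m => if h : m < T then
      (1 - pSeq φ (W xs m) (xs ⟨m, h⟩) (ystar (xs ⟨m, h⟩))) else 0 with hF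
    set Lc : ℕ → ℝ := fun m => if h : m < T then
      (-Real.log (pSeq φ u (xs ⟨m, h⟩) (ystar (xs ⟨m, h⟩)))) else 0 with hLc
    have key : ∀ m : ℕ, m ≤ T →
        ∑ s ∈ Finset.range m, F s ≤
          10 * (‖W xs 0 - u‖ ^ 2 - ‖W xs m - u‖ ^ 2 + ∑ s ∈ Finset.range m, Lc s) := by
      intro m
      induction m with
      | zero => intro _; simp
      | succ m ih =>
        intro hm
        have hmT : m < T := by omega
        set t : Fin T := ⟨m, hmT⟩ with htdef
        have hb : ∀ l : List (Fin k), l ≠ [] → l.length ≤ N → ‖φ (xs t) l‖ ≤ 1 :=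
          fun l h1 h2 => hfeat (xs t) l h1 h2
        have hstep1 := one_sub_pSeq_le_eta_loss (φ := φ) (W xs m) (xs t) (ystar (xs t)) hb
        have hstep2 := descent_step (φ := φ) (W xs m) u (xs t) (ystar (xs t)) hb
        have hupd : W xs (m + 1) = W xs m +
            (2 + 4 * ‖seqG φ (xs t) (ystar (xs t)) (W xs m)‖)⁻¹ •
              seqG φ (xs t) (ystar (xs t)) (W xs m) := hWrec' xs t
        have hFm : F m = 1 - pSeq φ (W xs m) (xs t) (ystar (xs t)) := by
          rw [hF]; simp only [dif_pos hmT]; rfl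
        have hLcm : Lc m = -Real.log (pSeq φ u (xs t) (ystar (xs t))) := by
          rw [hLc]; simp only [dif_pos hmT]; rfl
        have hstep : F m ≤
            10 * (‖W xs m - u‖ ^ 2 - ‖W xs (m + 1) - u‖ ^ 2 + Lc m) := by
          rw [hFm, hLcm, hupd]
          calc 1 - pSeq φ (W xs m) (xs t) (ystar (xs t))
              ≤ 10 * ((2 + 4 * ‖seqG φ (xs t) (ystar (xs t)) (W xs m)‖)⁻¹ *
                (-Real.log (pSeq φ (W xs m) (xs t) (ystar (xs t))))) := hstep1
            _ ≤ 10 * (‖W xs m - u‖ ^ 2 -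
                  ‖W xs m + (2 + 4 * ‖seqG φ (xs t) (ystar (xs t)) (W xs m)‖)⁻¹ •
                    seqG φ (xs t) (ystar (xs t)) (W xs m) - u‖ ^ 2 +
                  (-Real.log (pSeq φ u (xs t) (ystar (xs t))))) := by
                have := hstep2
                linarith
        have ihm := ih (by omega)
        rw [Finset.sum_range_succ, Finset.sum_range_succ]
        linarith
    have hkeyT := key T le_rfl
    have hsum_eq : ∑ t : Fin T, (1 - pSeq φ (W xs (t : ℕ)) (xs t) (ystar (xs t))) =
        ∑ s ∈ Finset.range T, F s := by
      rw [← Fin.sum_univ_eq_sum_range]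
      refine Finset.sum_congr rfl fun t _ => ?_
      rw [hF]
      simp only [dif_pos t.isLt]
    have hLc_le : ∀ s ∈ Finset.range T, Lc s ≤ ε := by
      intro s hs
      have hsT : s < T := Finset.mem_range.1 hs
      rw [hLc]
      simp only [dif_pos hsT]
      exact loss_scaled_wstar (φ := φ) (xs ⟨s, hsT⟩) (ystar (xs ⟨s, hsT⟩)) wstar γ R hγ hR0
        (hmxs ⟨s, hsT⟩)
    have hLc_sum : ∑ s ∈ Finset.range T, Lc s ≤ (T : ℝ) * ε := by
      calc ∑ s ∈ Finset.range T, Lc s ≤ ∑ s ∈ Finset.range T, ε := Finset.sum_le_sum hLc_le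
        _ = (T : ℝ) * ε := by rw [Finset.sum_const, Finset.card_range, nsmul_eq_mul]
    have hW0u : ‖W xs 0 - u‖ ^ 2 = R ^ 2 := by
      rw [hW0, zero_sub, norm_neg, hu, norm_smul, Real.norm_eq_abs, abs_of_nonneg hR0,
        hwnorm, mul_one]
    have hWTu : 0 ≤ ‖W xs T - u‖ ^ 2 := by positivity
    rw [hsum_eq, hB]
    rw [hW0u] at hkeyT
    linarith
  -- the measure-theoretic part
  set π : Measure (Fin T → 𝒳) := Measure.pi fun _ : Fin T => 𝒟 with hπ
  haveI : IsProbabilityMeasure π := by rw [hπ]; infer_instance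
  set q : EuclideanSpace ℝ (Fin D) × 𝒳 → ℝ := fun p => pSeq φ p.1 p.2 (ystar p.2) with hq
  have hqmeas : Measurable q := measurable_pSeq_joint hφ hyst
  have hq0 : ∀ p, 0 ≤ q p := fun p => (pSeq_pos _ _ _).le
  have hq1 : ∀ p, q p ≤ 1 := fun p => pSeq_le_one _ _ _
  -- Step A: Fubini replacement
  have hstepA : ∀ t : Fin T,
      ∫ xs, (∫ x, pSeq φ (W xs (t : ℕ)) x (ystar x) ∂𝒟) ∂π =
        ∫ xs, q (W xs (t : ℕ), xs t) ∂π := by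
    intro t
    have hdep : ∀ xs z, W (Function.update xs t z) (t : ℕ) = W xs (t : ℕ) := by
      intro xs z
      refine hWdep (t : ℕ) (le_of_lt t.isLt) _ _ fun s hs => ?_
      have hst : s ≠ t := by
        intro hcontra
        rw [hcontra] at hs
        omega
      rw [Function.update_of_ne hst]
    have := integral_step 𝒟 q hqmeas hq0 hq1 t (fun xs => W xs (t : ℕ))
      (hWmeas (t : ℕ) (le_of_lt t.isLt)) hdep
    rw [hπ]
    exact this.symm
  -- integrability of q along the iterates
  have hqt_meas : ∀ t : Fin T, Measurable fun xs : Fin T → 𝒳 => q (W xs (t : ℕ), xs t) :=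
    fun t => hqmeas.comp ((hWmeas (t : ℕ) (le_of_lt t.isLt)).prodMk (measurable_pi_apply t))
  have hqt_int : ∀ t : Fin T, Integrable (fun xs : Fin T → 𝒳 => q (W xs (t : ℕ), xs t)) π := by
    intro t
    refine Integrable.mono' (integrable_const 1) (hqt_meas t).aestronglyMeasurable
      (Filter.Eventually.of_forall fun xs => ?_)
    rw [Real.norm_eq_abs, abs_le]
    exact ⟨by linarith [hq0 (W xs (t : ℕ), xs t)], hq1 _⟩
  -- a.e. margin along the sample path
  have hae : ∀ᵐ xs ∂π, ∀ t : Fin T, ∀ i : Fin N, ∀ a : Fin k, a ≠ ystar (xs t) i →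
      ⟪wstar, φ (xs t) (pref (ystar (xs t)) ((i : ℕ) + 1))⟫ ≥
        ⟪wstar, φ (xs t) (pref (ystar (xs t)) (i : ℕ) ++ [a])⟫ + γ := by
    rw [MeasureTheory.ae_all_iff]
    intro t
    exact Filter.Tendsto.eventually
      (MeasureTheory.Measure.tendsto_eval_ae_ae (μ := fun _ : Fin T => 𝒟) (i := t)) hwae
  -- putting it together
  have hmain : ∑ t : Fin T, ∫ xs, (1 - q (W xs (t : ℕ), xs t)) ∂π ≤ B := by
    have hsum_int : ∫ xs, (∑ t : Fin T, (1 - q (W xs (t : ℕ), xs t))) ∂π ≤ B := by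
      have hint : Integrable (fun xs => ∑ t : Fin T, (1 - q (W xs (t : ℕ), xs t))) π :=
        integrable_finset_sum _ fun t _ => (integrable_const 1).sub (hqt_int t)
      calc ∫ xs, (∑ t : Fin T, (1 - q (W xs (t : ℕ), xs t))) ∂π
          ≤ ∫ _, B ∂π := by
            refine integral_mono_ae hint (integrable_const B) ?_
            filter_upwards [hae] with xs hxs
            exact hpath xs hxs
        _ = B := by rw [integral_const]; simp
    calc ∑ t : Fin T, ∫ xs, (1 - q (W xs (t : ℕ), xs t)) ∂π
        = ∫ xs, (∑ t : Fin T, (1 - q (W xs (t : ℕ), xs t))) ∂π :=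
          (integral_finset_sum _ fun t _ => (integrable_const 1).sub (hqt_int t)).symm
      _ ≤ B := hsum_int
  have hone : ∀ t : Fin T, ∫ xs, (1 - q (W xs (t : ℕ), xs t)) ∂π =
      1 - ∫ xs, q (W xs (t : ℕ), xs t) ∂π := by
    intro t
    rw [integral_sub (integrable_const 1) (hqt_int t), integral_const]
    simp
  -- numeric conclusion
  have hcollect : 1 - (1 / (T : ℝ)) * ∑ t : Fin T,
      ∫ xs, (∫ x, pSeq φ (W xs (t : ℕ)) x (ystar x) ∂𝒟) ∂π ≤ B / T := by
    have h1 : ∑ t : Fin T, ∫ xs, (∫ x, pSeq φ (W xs (t : ℕ)) x (ystar x) ∂𝒟) ∂π =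
        ∑ t : Fin T, ∫ xs, q (W xs (t : ℕ), xs t) ∂π :=
      Finset.sum_congr rfl fun t _ => hstepA t
    rw [h1]
    have h2 : ∑ t : Fin T, (1 - ∫ xs, q (W xs (t : ℕ), xs t) ∂π) ≤ B := by
      calc ∑ t : Fin T, (1 - ∫ xs, q (W xs (t : ℕ), xs t) ∂π)
          = ∑ t : Fin T, ∫ xs, (1 - q (W xs (t : ℕ), xs t)) ∂π :=
            Finset.sum_congr rfl fun t _ => (hone t).symm
        _ ≤ B := hmain
    have h3 : ∑ t : Fin T, (1 - ∫ xs, q (W xs (t : ℕ), xs t) ∂π) =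
        (T : ℝ) - ∑ t : Fin T, ∫ xs, q (W xs (t : ℕ), xs t) ∂π := by
      rw [Finset.sum_sub_distrib, Finset.sum_const, Finset.card_univ, Fintype.card_fin,
        nsmul_eq_mul, mul_one]
    rw [h3] at h2
    rw [sub_le_iff_le_add]
    have hexp : B / (T : ℝ) + (1 / (T : ℝ)) * ∑ t : Fin T,
        ∫ xs, q (W xs (t : ℕ), xs t) ∂π =
        (B + ∑ t : Fin T, ∫ xs, q (W xs (t : ℕ), xs t) ∂π) / (T : ℝ) := by
      ring
    rw [hexp, le_div_iff₀ hTpos, one_mul]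
    linarith
  refine le_trans hcollect ?_
  -- final numerics: B / T ≤ 50 * LX^2 / (γ^2 * T)
  have hR2 : R ^ 2 = 4 * LX ^ 2 / γ ^ 2 := by
    rw [hR]; field_simp; ring
  have hexpval : Real.exp (-(γ * R)) = (X ^ 2)⁻¹ := by
    have hγR : γ * R = 2 * LX := by rw [hR]; field_simp
    rw [hγR, Real.exp_neg]
    congr 1
    rw [two_mul, Real.exp_add, hLX, Real.exp_log hXpos]
    ring
  have hTNkX : (T : ℝ) * N * k = X / γ ^ 2 := by
    rw [hX]; field_simp
  have hTε : (T : ℝ) * ε = 1 / (γ ^ 2 * X) := by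
    rw [hε, hexpval]
    have : (T : ℝ) * ((N : ℝ) * k * (X ^ 2)⁻¹) = ((T : ℝ) * N * k) * (X ^ 2)⁻¹ := by ring
    rw [this, hTNkX]
    field_simp
  have hX1 : 1 ≤ X := le_trans (by nlinarith [Real.add_one_le_exp 1]) hTNk
  have hTε_le : (T : ℝ) * ε ≤ LX ^ 2 / γ ^ 2 := by
    rw [hTε]
    have h3 : 1 / (γ ^ 2 * X) ≤ 1 / (γ ^ 2) := by
      apply one_div_le_one_div_of_le (by positivity)
      nlinarith
    have h4 : 1 / (γ ^ 2) ≤ LX ^ 2 / γ ^ 2 := by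
      gcongr
      nlinarith
    linarith
  have hBle : B ≤ 50 * LX ^ 2 / γ ^ 2 := by
    rw [hB, hR2]
    have h1 : 10 * (4 * LX ^ 2 / γ ^ 2 + (T : ℝ) * ε) ≤
        10 * (4 * LX ^ 2 / γ ^ 2 + LX ^ 2 / γ ^ 2) := by linarith
    refine le_trans h1 (le_of_eq ?_)
    field_simp
    ring
  calc B / (T : ℝ) ≤ (50 * LX ^ 2 / γ ^ 2) / (T : ℝ) := by
        gcongr
    _ = 50 * LX ^ 2 / (γ ^ 2 * (T : ℝ)) := by
        rw [div_div]
end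
end

section
/- Let ℓ_0, …, ℓ_{T-1} : ℝ^D → ℝ be convex, nonnegative, twice continuously differentiable functions with ‖∇²ℓ_t(w)‖_op ≤ L for all w ∈ ℝ^D and all t, where L > 0. Let η ∈ (0, 1/L) and define the online gradient descent iterates w_{t+1} = w_t − η ∇ℓ_t(w_t) from an arbitrary w_0 ∈ ℝ^D. Then for every v ∈ ℝ^D, (1/T) ∑_{t=0}^{T-1} ℓ_t(w_t) ≤ (1/(1 − ηL)) · ( (1/T) ∑_{t=0}^{T-1} ℓ_t(v) + ‖v − w_0‖₂² / (2ηT) ). -/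
open scoped BigOperators RealInnerProductSpace

noncomputable section


variable {E : Type*} [NormedAddCommGroup E] [InnerProductSpace ℝ E] [CompleteSpace E]

lemma my_hasDerivAt_line (f : E → ℝ) (hf : Differentiable ℝ f) (c d : E) (s : ℝ) :
    HasDerivAt (fun s : ℝ => f (c + s • d)) (fderiv ℝ f (c + s • d) d) s := by
  have h1 : HasDerivAt (fun s : ℝ => c + s • d) d s := by
    simpa using ((hasDerivAt_id s).smul_const d).const_add c
  exact (hf _).hasFDerivAt.comp_hasDerivAt s h1

/-- first-order convexity inequality -/
lemma my_convex_fderiv_le {f : E → ℝ} (hconv : ConvexOn ℝ Set.univ f)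
    (hf : Differentiable ℝ f) (x y : E) :
    fderiv ℝ f x (y - x) ≤ f y - f x := by
  set d := y - x with hd
  set g : ℝ → ℝ := fun s => f (x + s • d) with hg
  have hgd : ∀ s, HasDerivAt g (fderiv ℝ f (x + s • d) d) s :=
    fun s => my_hasDerivAt_line f hf x d s
  have hgc : ConvexOn ℝ Set.univ g := by
    have h := hconv.comp_affineMap (AffineMap.lineMap x (x + d))
    have : (f ∘ (AffineMap.lineMap x (x + d))) = g := by
      funext s
      simp [AffineMap.lineMap_apply, hg, add_comm]
    rw [this] at h
    simpa using h
  have hs := hgc.deriv_le_slope (Set.mem_univ 0) (Set.mem_univ 1) zero_lt_one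
    (hgd 0).differentiableAt
  have h0 : deriv g 0 = fderiv ℝ f x d := by
    have := (hgd 0).deriv
    simpa using this
  have h1 : slope g 0 1 = f y - f x := by
    simp [slope, hg, hd]
  rw [h0, h1] at hs
  exact hs

/-- gradient Lipschitz from Hessian bound -/
lemma my_grad_lip {f : E → ℝ} {L : ℝ} (hL : 0 ≤ L) (hf : ContDiff ℝ 2 f)
    (hH : ∀ x, ‖fderiv ℝ (fderiv ℝ f) x‖ ≤ L) (a b : E) :
    ‖fderiv ℝ f a - fderiv ℝ f b‖ ≤ L * ‖a - b‖ := by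
  have hdf : Differentiable ℝ (fderiv ℝ f) :=
    (hf.fderiv_right (m := 1) (by norm_num)).differentiable one_ne_zero
  have hlip : LipschitzWith L.toNNReal (fderiv ℝ f) := by
    apply lipschitzWith_of_nnnorm_fderiv_le hdf
    intro x
    rw [← NNReal.coe_le_coe]
    simpa [Real.coe_toNNReal _ hL] using hH x
  have := hlip.dist_le_mul a b
  simpa [dist_eq_norm, Real.coe_toNNReal _ hL] using this

/-- descent lemma -/
lemma my_descent {f : E → ℝ} {L : ℝ} (hL : 0 ≤ L) (hf : ContDiff ℝ 2 f)
    (hH : ∀ x, ‖fderiv ℝ (fderiv ℝ f) x‖ ≤ L) (x y : E) :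
    f y ≤ f x + fderiv ℝ f x (y - x) + L / 2 * ‖y - x‖ ^ 2 := by
  have hdiff : Differentiable ℝ f := hf.differentiable (by norm_num)
  set d := y - x with hd
  set A : ℝ := fderiv ℝ f x d with hA
  set B : ℝ := L * ‖d‖ ^ 2 with hB
  set h : ℝ → ℝ := fun s => f (x + s • d) - (A * s + B / 2 * s ^ 2) with hh
  have hhd : ∀ s, HasDerivAt h (fderiv ℝ f (x + s • d) d - (A + B * s)) s := by
    intro s
    have h1 := my_hasDerivAt_line f hdiff x d s
    have h2 : HasDerivAt (fun s : ℝ => A * s + B / 2 * s ^ 2) (A + B * s) s := by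
      have ha : HasDerivAt (fun s : ℝ => A * s) A s := by
        simpa using (hasDerivAt_id s).const_mul A
      have hb : HasDerivAt (fun s : ℝ => B / 2 * s ^ 2) (B * s) s := by
        have := (hasDerivAt_pow 2 s).const_mul (B / 2)
        refine this.congr_deriv ?_
        ring
      exact ha.add hb
    exact h1.sub h2
  have hanti : AntitoneOn h (Set.Icc 0 1) := by
    apply antitoneOn_of_deriv_nonpos (convex_Icc 0 1)
    · exact (Continuous.continuousOn (by
        have : Continuous h := by
          have : Differentiable ℝ h := fun s => (hhd s).differentiableAt
          exact this.continuous
        exact this))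
    · exact fun s _ => ((hhd s).differentiableAt).differentiableWithinAt
    · intro s hs
      rw [interior_Icc] at hs
      rw [(hhd s).deriv]
      have hkey : fderiv ℝ f (x + s • d) d - fderiv ℝ f x d ≤ B * s := by
        have h1 : fderiv ℝ f (x + s • d) d - fderiv ℝ f x d
            = (fderiv ℝ f (x + s • d) - fderiv ℝ f x) d := by simp
        rw [h1]
        calc (fderiv ℝ f (x + s • d) - fderiv ℝ f x) d
            ≤ ‖(fderiv ℝ f (x + s • d) - fderiv ℝ f x) d‖ := le_abs_self _
          _ ≤ ‖fderiv ℝ f (x + s • d) - fderiv ℝ f x‖ * ‖d‖ :=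
              ContinuousLinearMap.le_opNorm _ _
          _ ≤ (L * ‖(x + s • d) - x‖) * ‖d‖ := by
              apply mul_le_mul_of_nonneg_right _ (norm_nonneg d)
              exact my_grad_lip hL hf hH _ _
          _ = B * s := by
              simp [hB, norm_smul, abs_of_nonneg hs.1.le]
              ring
      have : fderiv ℝ f (x + s • d) d ≤ A + B * s := by
        rw [hA]; linarith
      linarith
  have := hanti (Set.left_mem_Icc.2 zero_le_one) (Set.right_mem_Icc.2 zero_le_one) zero_le_one
  simp only [hh] at this
  have hy1 : x + (1 : ℝ) • d = y := by simp [hd]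
  have hy0 : x + (0 : ℝ) • d = x := by simp
  rw [hy1, hy0] at this
  have : f y - (A + B / 2) ≤ f x := by
    simpa using this
  rw [hA, hB] at this
  linarith

/-- self-bounding: ‖∇f x‖² ≤ 2 L f x -/
lemma my_self_bounding {f : E → ℝ} {L : ℝ} (hL : 0 < L) (hf : ContDiff ℝ 2 f)
    (hnn : ∀ w, 0 ≤ f w)
    (hH : ∀ x, ‖fderiv ℝ (fderiv ℝ f) x‖ ≤ L) (x : E) :
    ‖gradient f x‖ ^ 2 ≤ 2 * L * f x := by
  set g := gradient f x with hg
  have hinner : ∀ u : E, ⟪g, u⟫ = fderiv ℝ f x u := by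
    intro u
    simp [hg, gradient, InnerProductSpace.toDual_symm_apply]
  have hdesc := my_descent hL.le hf hH x (x - L⁻¹ • g)
  have h1 : fderiv ℝ f x ((x - L⁻¹ • g) - x) = -(L⁻¹ * ‖g‖ ^ 2) := by
    have : (x - L⁻¹ • g) - x = -(L⁻¹ • g) := by abel
    rw [this, map_neg, map_smul]
    rw [← hinner g, real_inner_self_eq_norm_sq]
    simp
  have h2 : ‖(x - L⁻¹ • g) - x‖ ^ 2 = L⁻¹ ^ 2 * ‖g‖ ^ 2 := by
    have : (x - L⁻¹ • g) - x = -(L⁻¹ • g) := by abel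
    rw [this, norm_neg, norm_smul, mul_pow, Real.norm_eq_abs, abs_inv, abs_of_pos hL]
  rw [h1, h2] at hdesc
  have h3 := hnn (x - L⁻¹ • g)
  have hL' : L ≠ 0 := hL.ne'
  have : 0 ≤ f x - L⁻¹ * ‖g‖ ^ 2 + L / 2 * (L⁻¹ ^ 2 * ‖g‖ ^ 2) := by linarith
  have hfield : L / 2 * (L⁻¹ ^ 2 * ‖g‖ ^ 2) = L⁻¹ / 2 * ‖g‖ ^ 2 := by
    field_simp
  rw [hfield] at this
  have h4 : L⁻¹ / 2 * ‖g‖ ^ 2 ≤ f x := by linarith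
  calc ‖g‖ ^ 2 = 2 * L * (L⁻¹ / 2 * ‖g‖ ^ 2) := by field_simp
    _ ≤ 2 * L * f x := by
        apply mul_le_mul_of_nonneg_left h4 (by positivity)

/-- Proposition: online gradient descent with constant learning rate on
smooth convex nonnegative losses.  `ℓ 0, …, ℓ (T-1) : ℝ^D → ℝ` are convex, nonnegative,
twice continuously differentiable with Hessian operator norm bounded by `L`; the iterates
satisfy `w (t+1) = w t - η • ∇ℓ t (w t)` with `η ∈ (0, 1/L)`; then the average regret bound
holds for every comparator `v`. -/
theorem online_gd_constant_lr
    (D T : ℕ) (hT : 1 ≤ T)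
    (ℓ : Fin T → EuclideanSpace ℝ (Fin D) → ℝ)
    (L η : ℝ) (hL : 0 < L)
    (hconv : ∀ t, ConvexOn ℝ Set.univ (ℓ t))
    (hnonneg : ∀ t w, 0 ≤ ℓ t w)
    (hsmooth : ∀ t, ContDiff ℝ 2 (ℓ t))
    (hHess : ∀ t w, ‖fderiv ℝ (fderiv ℝ (ℓ t)) w‖ ≤ L)
    (hη : η ∈ Set.Ioo 0 (1 / L))
    (w : ℕ → EuclideanSpace ℝ (Fin D))
    (hrec : ∀ t : Fin T, w (t + 1) = w t - η • gradient (ℓ t) (w t)) :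
    ∀ v : EuclideanSpace ℝ (Fin D),
      (1 / (T : ℝ)) * ∑ t : Fin T, ℓ t (w t) ≤
        (1 / (1 - η * L)) *
          ((1 / (T : ℝ)) * ∑ t : Fin T, ℓ t v + ‖v - w 0‖ ^ 2 / (2 * η * T)) := by
  intro v
  obtain ⟨hη0, hη1⟩ := hη
  have hηL : η * L < 1 := by
    rw [lt_div_iff₀ hL] at hη1; linarith
  have hx : (0:ℝ) < 1 - η * L := by linarith
  have hT0 : (0:ℝ) < (T:ℝ) := by exact_mod_cast Nat.lt_of_lt_of_le Nat.zero_lt_one hT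
  set a : ℕ → ℝ := fun n => ‖w n - v‖ ^ 2 with ha
  set A : ℝ := ∑ t : Fin T, ℓ t (w t) with hA
  set B : ℝ := ∑ t : Fin T, ℓ t v with hB
  set R : ℝ := ‖v - w 0‖ ^ 2 with hR
  -- per-step inequality
  have hstep : ∀ t : Fin T,
      2 * η * (ℓ t (w t) - ℓ t v) ≤ (a t - a (t + 1)) + 2 * η ^ 2 * L * ℓ t (w t) := by
    intro t
    set gt := gradient (ℓ t) (w t) with hgt
    have hdiff : Differentiable ℝ (ℓ t) := (hsmooth t).differentiable (by norm_num)
    have hinner : ∀ u, ⟪gt, u⟫ = fderiv ℝ (ℓ t) (w t) u := by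
      intro u
      simp [hgt, gradient, InnerProductSpace.toDual_symm_apply]
    have hconv' : ℓ t (w t) - ℓ t v ≤ ⟪gt, w (t:ℕ) - v⟫ := by
      have h1 := my_convex_fderiv_le (hconv t) hdiff (w t) v
      have h2 : fderiv ℝ (ℓ t) (w t) (v - w t) = -⟪gt, w (t:ℕ) - v⟫ := by
        rw [show v - w (t:ℕ) = -(w (t:ℕ) - v) by abel, map_neg, hinner]
      rw [h2] at h1
      linarith
    have hexp : a (t + 1) = a t - 2 * η * ⟪gt, w (t:ℕ) - v⟫ + η ^ 2 * ‖gt‖ ^ 2 := by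
      have hw : w ((t:ℕ) + 1) - v = (w (t:ℕ) - v) - η • gt := by
        rw [hrec t]; abel
      simp only [ha]
      rw [hw, norm_sub_sq_real, real_inner_smul_right, real_inner_comm, norm_smul]
      rw [Real.norm_eq_abs, mul_pow, sq_abs]
      ring
    have hsb : ‖gt‖ ^ 2 ≤ 2 * L * ℓ t (w t) :=
      my_self_bounding hL (hsmooth t) (hnonneg t) (hHess t) (w t)
    have h3 := mul_le_mul_of_nonneg_left hconv' (by positivity : (0:ℝ) ≤ 2 * η)
    have h4 := mul_le_mul_of_nonneg_left hsb (sq_nonneg η)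
    nlinarith
  -- sum it up
  have hsum : 2 * η * (A - B) ≤ (a 0 - a T) + 2 * η ^ 2 * L * A := by
    have h1 : ∑ t : Fin T, (2 * η * (ℓ t (w t) - ℓ t v)) ≤
        ∑ t : Fin T, ((a t - a (t + 1)) + 2 * η ^ 2 * L * ℓ t (w t)) :=
      Finset.sum_le_sum fun t _ => hstep t
    have htel : ∑ t : Fin T, (a (t:ℕ) - a ((t:ℕ) + 1)) = a 0 - a T := by
      rw [Fin.sum_univ_eq_sum_range (fun i => a i - a (i + 1))]
      exact Finset.sum_range_sub' a T
    have hlhs : ∑ t : Fin T, (2 * η * (ℓ t (w t) - ℓ t v)) = 2 * η * (A - B) := by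
      rw [← Finset.mul_sum, hA, hB, ← Finset.sum_sub_distrib]
    have hrhs : ∑ t : Fin T, ((a t - a (t + 1)) + 2 * η ^ 2 * L * ℓ t (w t)) =
        (a 0 - a T) + 2 * η ^ 2 * L * A := by
      rw [Finset.sum_add_distrib, htel, ← Finset.mul_sum, hA]
    rw [hlhs, hrhs] at h1
    exact h1
  have haT : 0 ≤ a T := sq_nonneg _
  have ha0 : a 0 = R := by
    simp only [ha, hR, ← norm_sub_rev (w 0) v]
  have hkey : (1 - η * L) * A ≤ B + R / (2 * η) := by
    rw [← mul_le_mul_iff_right₀ (by positivity : (0:ℝ) < 2 * η)]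
    have : 2 * η * (B + R / (2 * η)) = 2 * η * B + R := by
      field_simp
    rw [this]
    nlinarith
  -- final algebra
  have hrhs2 : (1 / (1 - η * L)) * ((1 / (T:ℝ)) * B + R / (2 * η * (T:ℝ))) =
      (B + R / (2 * η)) / ((1 - η * L) * (T:ℝ)) := by
    field_simp
  rw [hrhs2, one_div, inv_mul_eq_div, div_le_div_iff₀ hT0 (by positivity)]
  nlinarith [mul_le_mul_of_nonneg_right hkey hT0.le]
end
end

section
/- Let ℓ_0, …, ℓ_{T-1} : ℝ^D → ℝ be convex, nonnegative, differentiable functions satisfying ‖∇ℓ_t(w)‖₂ ≤ C ℓ_t(w) for all w ∈ ℝ^D and all t, where C > 0. Fix λ > 0 and η ∈ (0, 2/C), and define the adaptive online gradient descent iterates w_{t+1} = w_t − η_t ∇ℓ_t(w_t) with η_t = η / (λ + ‖∇ℓ_t(w_t)‖₂), from an arbitrary w_0 ∈ ℝ^D. Then for every v ∈ ℝ^D, (1/T) ∑_{t=0}^{T-1} ℓ_t(w_t) / (1 + C λ^{-1} ℓ_t(w_t)) ≤ (1/(1 − Cη/2)) · ( (1/T) ∑_{t=0}^{T-1} ℓ_t(v)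 + λ‖v − w_0‖₂² / (2ηT) ). -/
open scoped BigOperators

set_option maxHeartbeats 800000

noncomputable section

lemma grad_convex_ineq {E : Type*} [NormedAddCommGroup E] [InnerProductSpace ℝ E]
    [CompleteSpace E] {f : E → ℝ} (hconv : ConvexOn ℝ Set.univ f)
    (hdiff : Differentiable ℝ f) (x y : E) :
    f x + inner ℝ (gradient f x) (y - x) ≤ f y := by
  set φ : ℝ → ℝ := fun s => f (x + s • (y - x)) with hφ
  have hline : ∀ s : ℝ, HasDerivAt (fun s : ℝ => x + s • (y - x)) (y - x) s := by
    intro s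
    simpa using ((hasDerivAt_id s).smul_const (y - x)).const_add x
  have hder : ∀ s : ℝ, HasDerivAt φ (fderiv ℝ f (x + s • (y - x)) (y - x)) s := by
    intro s
    exact ((hdiff _).hasFDerivAt.comp_hasDerivAt s (hline s))
  have hconvφ : ConvexOn ℝ Set.univ φ := by
    have := hconv.comp_affineMap (AffineMap.lineMap x y)
    have heq : (f ∘ AffineMap.lineMap x y) = φ := by
      funext s
      simp [hφ, AffineMap.lineMap_apply, add_comm]
    rw [heq] at this
    simpa using this
  have h01 : (0:ℝ) < 1 := one_pos
  have hslope := hconvφ.deriv_le_slope (Set.mem_univ (0:ℝ)) (Set.mem_univ (1:ℝ)) h01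
      (hder 0).differentiableAt
  rw [(hder 0).deriv] at hslope
  have hφ0 : φ 0 = f x := by simp [hφ]
  have hφ1 : φ 1 = f y := by simp [hφ]
  have hsl : slope φ 0 1 = f y - f x := by
    simp [slope, hφ0, hφ1]
  rw [hsl] at hslope
  have hgrad : fderiv ℝ f x (y - x) = inner ℝ (gradient f x) (y - x) := by
    rw [gradient]
    rw [← InnerProductSpace.toDual_apply_apply, LinearIsometryEquiv.apply_symm_apply]
  simp only [zero_smul, add_zero] at hslope
  rw [hgrad] at hslope
  linarith

/-- Proposition: online gradient descent with adaptive,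
gradient-norm-dependent learning rate on convex nonnegative losses whose gradient norm is
bounded by `C` times the loss value.  The iterates satisfy
`w (t+1) = w t - (η / (λ + ‖∇ℓ t (w t)‖)) • ∇ℓ t (w t)` with `η ∈ (0, 2/C)`; then the
stated regret bound on the saturated losses holds for every comparator `v`. -/
theorem online_gd_adaptive_lr
    (D T : ℕ) (hT : 1 ≤ T)
    (ℓ : Fin T → EuclideanSpace ℝ (Fin D) → ℝ)
    (C lam η : ℝ) (hC : 0 < C) (hlam : 0 < lam)
    (hconv : ∀ t, ConvexOn ℝ Set.univ (ℓ t))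
    (hnonneg : ∀ t w, 0 ≤ ℓ t w)
    (hdiff : ∀ t, Differentiable ℝ (ℓ t))
    (hgrad : ∀ t w, ‖gradient (ℓ t) w‖ ≤ C * ℓ t w)
    (hη : η ∈ Set.Ioo 0 (2 / C))
    (w : ℕ → EuclideanSpace ℝ (Fin D))
    (hrec : ∀ t : Fin T,
      w (t + 1) = w t - (η / (lam + ‖gradient (ℓ t) (w t)‖)) • gradient (ℓ t) (w t)) :
    ∀ v : EuclideanSpace ℝ (Fin D),
      (1 / (T : ℝ)) * ∑ t : Fin T, ℓ t (w t) / (1 + C * lam⁻¹ * ℓ t (w t)) ≤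
        (1 / (1 - C * η / 2)) *
          ((1 / (T : ℝ)) * ∑ t : Fin T, ℓ t v + lam * ‖v - w 0‖ ^ 2 / (2 * η * T)) := by
  intro v
  obtain ⟨hη0, hη2⟩ := hη
  have hk : 0 < 1 - C * η / 2 := by
    have h1 : C * η < C * (2 / C) := by exact mul_lt_mul_of_pos_left hη2 hC
    have h2 : C * (2 / C) = 2 := by field_simp
    nlinarith
  have hT' : (0:ℝ) < T := by exact_mod_cast Nat.lt_of_lt_of_le Nat.zero_lt_one hT
  -- per-step inequality
  have hstep : ∀ t : Fin T,
      (1 - C * η / 2) * (ℓ t (w t) / (1 + C * lam⁻¹ * ℓ t (w t))) ≤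
        ℓ t v + (lam / (2 * η)) * (‖w t - v‖ ^ 2 - ‖w (t + 1) - v‖ ^ 2) := by
    intro t
    set g := gradient (ℓ t) (w t) with hg_def
    set L := ℓ t (w t) with hL_def
    have hL : 0 ≤ L := hnonneg t _
    have hg : ‖g‖ ≤ C * L := hgrad t _
    have hgn : (0:ℝ) ≤ ‖g‖ := norm_nonneg _
    have hLd : (0:ℝ) < lam + ‖g‖ := by positivity
    set a := η / (lam + ‖g‖) with ha_def
    have ha : 0 < a := div_pos hη0 hLd
    have haη : a * (lam + ‖g‖) = η := div_mul_cancel₀ η hLd.ne'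
    -- norm expansion
    have h1 : w (t + 1) - v = (w t - v) - a • g := by
      rw [hrec t]; abel
    have hnorm : ‖w (t + 1) - v‖ ^ 2
        = ‖w t - v‖ ^ 2 - 2 * a * inner ℝ g (w t - v) + a ^ 2 * ‖g‖ ^ 2 := by
      rw [h1, norm_sub_sq_real]
      rw [real_inner_smul_right, real_inner_comm, norm_smul]
      simp [mul_pow, Real.norm_eq_abs, sq_abs]
      ring
    -- convexity
    have hconvx : L - ℓ t v ≤ inner ℝ g (w t - v) := by
      have h2 := grad_convex_ineq (hconv t) (hdiff t) (w t) v
      have h3 : (inner ℝ g (v - w t) : ℝ) = - inner ℝ g (w t - v) := by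
        rw [← inner_neg_right, neg_sub]
      rw [← hg_def, h3] at h2
      linarith
    -- middle inequality
    have hacl : a * ‖g‖ ≤ a * (C * L) := mul_le_mul_of_nonneg_left hg ha.le
    have hagn : a * ‖g‖ ≤ η := by nlinarith [mul_pos ha hlam]
    have h7 : a * ‖g‖ * (a * ‖g‖) ≤ η * (a * (C * L)) :=
      mul_le_mul hagn hacl (by positivity) hη0.le
    have hinner := mul_le_mul_of_nonneg_left hconvx ha.le
    have hmid : a * L * (1 - C * η / 2) ≤
        a * ℓ t v + (‖w t - v‖ ^ 2 - ‖w (t + 1) - v‖ ^ 2) / 2 := by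
      nlinarith [hnorm, hinner, h7]
    -- fraction bound
    have hd1 : (0:ℝ) < 1 + C * lam⁻¹ * L := by positivity
    have hd1e : 1 + C * lam⁻¹ * L = (lam + C * L) / lam := by
      field_simp
    have hfrac : L / (1 + C * lam⁻¹ * L) ≤ (lam / η) * (a * L) := by
      have h2 : (lam / η) * (a * L) = lam * L / (lam + ‖g‖) := by
        rw [ha_def]; field_simp
      rw [h2, hd1e, div_div_eq_mul_div, mul_comm L lam]
      gcongr
      all_goals first | positivity | linarith
    have hfac : (lam / η) * a ≤ 1 := by
      have h2 : (lam / η) * a = lam / (lam + ‖g‖) := by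
        rw [ha_def]; field_simp
      rw [h2]
      exact div_le_one_of_le₀ (by linarith) hLd.le
    have h8 : (lam / η) * (a * ℓ t v) ≤ ℓ t v := by
      have h3 := mul_le_mul_of_nonneg_right hfac (hnonneg t v)
      calc (lam / η) * (a * ℓ t v) = (lam / η) * a * ℓ t v := by ring
        _ ≤ 1 * ℓ t v := h3
        _ = ℓ t v := one_mul _
    calc (1 - C * η / 2) * (L / (1 + C * lam⁻¹ * L))
        ≤ (1 - C * η / 2) * ((lam / η) * (a * L)) :=
          mul_le_mul_of_nonneg_left hfrac hk.le
      _ = (lam / η) * (a * L * (1 - C * η / 2)) := by ring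
      _ ≤ (lam / η) * (a * ℓ t v + (‖w t - v‖ ^ 2 - ‖w (t + 1) - v‖ ^ 2) / 2) :=
          mul_le_mul_of_nonneg_left hmid (by positivity)
      _ = (lam / η) * (a * ℓ t v)
            + (lam / (2 * η)) * (‖w t - v‖ ^ 2 - ‖w (t + 1) - v‖ ^ 2) := by ring
      _ ≤ ℓ t v + (lam / (2 * η)) * (‖w t - v‖ ^ 2 - ‖w (t + 1) - v‖ ^ 2) := by
          linarith
  -- sum up
  have hsum := Finset.sum_le_sum (fun t (_ : t ∈ Finset.univ) => hstep t)
  have htel : ∑ t : Fin T, (‖w t - v‖ ^ 2 - ‖w (t + 1) - v‖ ^ 2)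
      = ‖w 0 - v‖ ^ 2 - ‖w T - v‖ ^ 2 := by
    rw [Fin.sum_univ_eq_sum_range (fun i => ‖w i - v‖ ^ 2 - ‖w (i + 1) - v‖ ^ 2)]
    exact Finset.sum_range_sub' (fun i => ‖w i - v‖ ^ 2) T
  set S := ∑ t : Fin T, ℓ t (w t) / (1 + C * lam⁻¹ * ℓ t (w t)) with hS
  set B := ∑ t : Fin T, ℓ t v with hB
  have hmain : (1 - C * η / 2) * S ≤ B + lam / (2 * η) * ‖v - w 0‖ ^ 2 := by
    have hL1 : ∑ t : Fin T, (1 - C * η / 2) * (ℓ t (w t) / (1 + C * lam⁻¹ * ℓ t (w t)))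
        = (1 - C * η / 2) * S := by rw [hS, Finset.mul_sum]
    have hR1 : ∑ t : Fin T,
        (ℓ t v + (lam / (2 * η)) * (‖w t - v‖ ^ 2 - ‖w (t + 1) - v‖ ^ 2))
        = B + (lam / (2 * η)) * (‖w 0 - v‖ ^ 2 - ‖w T - v‖ ^ 2) := by
      rw [Finset.sum_add_distrib, ← Finset.mul_sum, htel, hB]
    rw [hL1, hR1] at hsum
    have hrev : ‖w 0 - v‖ ^ 2 = ‖v - w 0‖ ^ 2 := by rw [norm_sub_rev]
    have h2 : (lam / (2 * η)) * (‖w 0 - v‖ ^ 2 - ‖w T - v‖ ^ 2)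
        ≤ (lam / (2 * η)) * ‖v - w 0‖ ^ 2 := by
      apply mul_le_mul_of_nonneg_left _ (by positivity)
      rw [← hrev]
      nlinarith [sq_nonneg ‖w T - v‖]
    linarith
  -- conclusion
  have hfin : S ≤ (1 / (1 - C * η / 2)) * (B + lam * ‖v - w 0‖ ^ 2 / (2 * η)) := by
    rw [one_div, inv_mul_eq_div, le_div_iff₀ hk, mul_comm]
    have he : lam / (2 * η) * ‖v - w 0‖ ^ 2 = lam * ‖v - w 0‖ ^ 2 / (2 * η) := by
      ring
    linarith [hmain, he]
  calc (1 / (T : ℝ)) * S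
      ≤ (1 / (T : ℝ)) * ((1 / (1 - C * η / 2)) * (B + lam * ‖v - w 0‖ ^ 2 / (2 * η))) :=
        mul_le_mul_of_nonneg_left hfin (by positivity)
    _ = (1 / (1 - C * η / 2)) *
          ((1 / (T : ℝ)) * B + lam * ‖v - w 0‖ ^ 2 / (2 * η * T)) := by
        ring
end
end

section
/- Let (x^{(t)}, y*(x^{(t)}))_{t=0}^{T-1} be an arbitrary (possibly adversarial, non-random) sequence of contexts and correct responses which satisfies the γ-margin inequalities with a common unit vector w*, with k T γ² ≥ e. Consider PG-OR iterates on this sequence with constant learning rate η_t = 1/(2N) and initialization ‖w_0‖₂ ≤ (1/γ) log(k T γ²), where each behavior policy q_t may depend measurably on the past draws. Then, in expectation over the random draws y^{(0)}, …, y^{(T-1)}, E[ (1/T) ∑_{t=0}^{T-1} − q_t(y*(x^{(t)}) | x^{(t)}) · log p_{w_t}(y*(x^{(t)}) | x^{(t)}) ] ≤ 10 N (log(k T γ²))² / (γ² T). -/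
open MeasureTheory ProbabilityTheory
open scoped BigOperators RealInnerProductSpace ENNReal

noncomputable section

variable {E : Type*} [NormedAddCommGroup E] [InnerProductSpace ℝ E] [CompleteSpace E]
variable {k : ℕ}


lemma two_sq_le_neg_log {p : ℝ} (h0 : 0 < p) (h1 : p ≤ 1) : 2*(1-p)^2 ≤ -Real.log p := by
  have hder : ∀ z ∈ interior (Set.Icc p 1), HasDerivAt (fun x : ℝ => -Real.log x - 2*(1-x)^2)
      (-z⁻¹ - 2*(2*(1-z)^1*(0-1))) z := by
    intro z hz
    rw [interior_Icc] at hz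
    exact ((Real.hasDerivAt_log (ne_of_gt (lt_trans h0 hz.1))).neg).sub
      ((((hasDerivAt_const z (1:ℝ)).sub (hasDerivAt_id z)).pow 2).const_mul 2)
  have key : AntitoneOn (fun x : ℝ => -Real.log x - 2*(1-x)^2) (Set.Icc p 1) := by
    apply antitoneOn_of_deriv_nonpos (convex_Icc p 1)
    · apply ContinuousOn.sub
      · exact (Real.continuousOn_log.mono (by
          intro z hz; simp only [Set.mem_compl_iff, Set.mem_singleton_iff]
          exact ne_of_gt (lt_of_lt_of_le h0 hz.1))).neg
      · fun_prop
    · exact fun z hz => (hder z hz).differentiableAt.differentiableWithinAt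
    · intro z hz
      rw [(hder z hz).deriv]
      rw [interior_Icc] at hz
      have hz0 : (0:ℝ) < z := lt_trans h0 hz.1
      have heq : -z⁻¹ - 2*(2*(1-z)^1*(0-1)) = (-(1-2*z)^2)/z := by
        field_simp; ring
      rw [heq]
      exact div_nonpos_of_nonpos_of_nonneg (by nlinarith [sq_nonneg (1-2*z)]) hz0.le
  have h := key (Set.mem_Icc.2 ⟨le_refl p, h1⟩) (Set.mem_Icc.2 ⟨h1, le_refl 1⟩) h1
  simp only [Real.log_one] at h
  nlinarith [h]

/-- softmax weight -/
noncomputable def smx (u : Fin k → E) (w : E) (b : Fin k) : ℝ :=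
  Real.exp ⟪w, u b⟫ / ∑ c : Fin k, Real.exp ⟪w, u c⟫

lemma sumexp_pos (hk : 0 < k) (u : Fin k → E) (w : E) :
    0 < ∑ c : Fin k, Real.exp ⟪w, u c⟫ := by
  have : Nonempty (Fin k) := Fin.pos_iff_nonempty.mp hk
  exact Finset.sum_pos (fun c _ => Real.exp_pos _) Finset.univ_nonempty

lemma smx_pos (hk : 0 < k) (u : Fin k → E) (w : E) (b : Fin k) : 0 < smx u w b :=
  div_pos (Real.exp_pos _) (sumexp_pos hk u w)

lemma smx_sum (hk : 0 < k) (u : Fin k → E) (w : E) : ∑ b : Fin k, smx u w b = 1 := by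
  simp only [smx]; rw [← Finset.sum_div]
  exact div_self (ne_of_gt (sumexp_pos hk u w))

lemma smx_le_one (hk : 0 < k) (u : Fin k → E) (w : E) (b : Fin k) : smx u w b ≤ 1 := by
  have := smx_sum hk u w
  have h := Finset.single_le_sum (f := fun b => smx u w b)
    (fun c _ => (smx_pos hk u w c).le) (Finset.mem_univ b)
  linarith

lemma log_smx (hk : 0 < k) (u : Fin k → E) (w : E) (b : Fin k) :
    Real.log (smx u w b) = ⟪w, u b⟫ - Real.log (∑ c : Fin k, Real.exp ⟪w, u c⟫) := by
  rw [smx, Real.log_div (Real.exp_ne_zero _) (ne_of_gt (sumexp_pos hk u w)), Real.log_exp]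

/-- gradient of `w ↦ log smx u w a` -/
noncomputable def gTok (u : Fin k → E) (w : E) (a : Fin k) : E := u a - ∑ b : Fin k, smx u w b • u b

lemma hasGradientAt_log_smx (hk : 0 < k) (u : Fin k → E) (a : Fin k) (w : E) :
    HasGradientAt (fun v => ⟪v, u a⟫ - Real.log (∑ c : Fin k, Real.exp ⟪v, u c⟫))
      (gTok u w a) w := by
  rw [hasGradientAt_iff_hasFDerivAt]
  have hS : HasFDerivAt (fun v : E => ∑ c : Fin k, Real.exp ⟪v, u c⟫)
      (∑ c : Fin k, Real.exp ⟪w, u c⟫ • (innerSL ℝ (u c) : E →L[ℝ] ℝ)) w := by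
    apply HasFDerivAt.fun_sum
    intro c _
    have h1 : HasFDerivAt (fun v : E => ⟪v, u c⟫) (innerSL ℝ (u c) : E →L[ℝ] ℝ) w := by
      have := (innerSL ℝ (u c)).hasFDerivAt (x := w)
      apply this.congr_of_eventuallyEq
      filter_upwards with v
      simp [real_inner_comm]
    exact h1.exp
  have hL : HasFDerivAt (fun v : E => Real.log (∑ c : Fin k, Real.exp ⟪v, u c⟫))
      ((∑ c : Fin k, Real.exp ⟪w, u c⟫)⁻¹ •
        (∑ c : Fin k, Real.exp ⟪w, u c⟫ • (innerSL ℝ (u c) : E →L[ℝ] ℝ))) w :=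
    hS.log (ne_of_gt (sumexp_pos hk u w))
  have hA : HasFDerivAt (fun v : E => ⟪v, u a⟫) (innerSL ℝ (u a) : E →L[ℝ] ℝ) w := by
    have := (innerSL ℝ (u a)).hasFDerivAt (x := w)
    apply this.congr_of_eventuallyEq
    filter_upwards with v
    simp [real_inner_comm]
  have := hA.sub hL
  apply this.congr_fderiv
  apply ContinuousLinearMap.ext
  intro z
  have hterm : ∀ c : Fin k, (inner ℝ (smx u w c • u c) z : ℝ) =
      (∑ c' : Fin k, Real.exp (inner ℝ w (u c')))⁻¹ * (Real.exp (inner ℝ w (u c)) * inner ℝ (u c) z) := by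
    intro c
    rw [real_inner_smul_left]
    simp only [smx]
    field_simp
  simp only [ContinuousLinearMap.sub_apply, ContinuousLinearMap.smul_apply,
    ContinuousLinearMap.coe_sum', Finset.sum_apply, innerSL_apply_apply,
    InnerProductSpace.toDual_apply_apply, gTok, inner_sub_left, smul_eq_mul,
    sum_inner, hterm, Finset.mul_sum]

lemma concave_log_smx (hk : 0 < k) (u : Fin k → E) (a : Fin k) (w v : E) :
    (⟪v, u a⟫ - Real.log (∑ c : Fin k, Real.exp ⟪v, u c⟫)) -
      (⟪w, u a⟫ - Real.log (∑ c : Fin k, Real.exp ⟪w, u c⟫)) ≤ ⟪gTok u w a, v - w⟫ := by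
  set S : E → ℝ := fun z => ∑ c : Fin k, Real.exp ⟪z, u c⟫ with hS
  have hSw : 0 < S w := sumexp_pos hk u w
  have hSv : 0 < S v := sumexp_pos hk u v
  have hratio : S v / S w = ∑ b : Fin k, smx u w b * Real.exp ⟪v - w, u b⟫ := by
    rw [Finset.sum_div]
    apply Finset.sum_congr rfl
    intro b _
    rw [smx, inner_sub_left]
    rw [Real.exp_sub]
    rw [hS]
    field_simp
  have hjen : Real.exp (∑ b : Fin k, smx u w b * ⟪v - w, u b⟫) ≤
      ∑ b : Fin k, smx u w b * Real.exp ⟪v - w, u b⟫ := by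
    have := convexOn_exp.map_sum_le (t := Finset.univ) (w := fun b => smx u w b)
      (p := fun b : Fin k => (⟪v - w, u b⟫ : ℝ)) (fun b _ => (smx_pos hk u w b).le)
      (smx_sum hk u w) (fun b _ => Set.mem_univ _)
    simpa [smul_eq_mul] using this
  have hlog : ∑ b : Fin k, smx u w b * ⟪v - w, u b⟫ ≤ Real.log (S v) - Real.log (S w) := by
    rw [← Real.log_div (ne_of_gt hSv) (ne_of_gt hSw), hratio]
    calc ∑ b : Fin k, smx u w b * ⟪v - w, u b⟫
        = Real.log (Real.exp (∑ b : Fin k, smx u w b * ⟪v - w, u b⟫)) := (Real.log_exp _).symm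
      _ ≤ Real.log (∑ b : Fin k, smx u w b * Real.exp ⟪v - w, u b⟫) := by
          apply Real.log_le_log (Real.exp_pos _) hjen
  have hg : ⟪gTok u w a, v - w⟫ = ⟪v - w, u a⟫ - ∑ b : Fin k, smx u w b * ⟪v - w, u b⟫ := by
    rw [gTok, inner_sub_left, sum_inner]
    rw [real_inner_comm]
    congr 1
    apply Finset.sum_congr rfl
    intro b _
    rw [real_inner_smul_left, real_inner_comm]
  rw [hg]
  have : ⟪v, u a⟫ - ⟪w, u a⟫ = ⟪v - w, u a⟫ := (inner_sub_left _ _ _).symm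
  linarith [hlog, this.ge, this.le]

lemma norm_gTok_le (hk : 0 < k) (u : Fin k → E) (a : Fin k) (w : E)
    (hu : ∀ b, ‖u b‖ ≤ 1) : ‖gTok u w a‖ ≤ 2 * (1 - smx u w a) := by
  have hrw : gTok u w a = ∑ b : Fin k, smx u w b • (u a - u b) := by
    rw [gTok]
    have h1 : u a = ∑ b : Fin k, smx u w b • u a := by
      rw [← Finset.sum_smul, smx_sum hk u w, one_smul]
    calc u a - ∑ b : Fin k, smx u w b • u b
        = (∑ b : Fin k, smx u w b • u a) - ∑ b : Fin k, smx u w b • u b := by rw [← h1]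
      _ = ∑ b : Fin k, smx u w b • (u a - u b) := by
          rw [← Finset.sum_sub_distrib]
          apply Finset.sum_congr rfl
          intro b _
          rw [smul_sub]
  rw [hrw]
  calc ‖∑ b : Fin k, smx u w b • (u a - u b)‖
      ≤ ∑ b : Fin k, ‖smx u w b • (u a - u b)‖ := norm_sum_le _ _
    _ = ∑ b : Fin k, smx u w b * ‖u a - u b‖ := by
        apply Finset.sum_congr rfl
        intro b _
        rw [norm_smul, Real.norm_eq_abs, abs_of_pos (smx_pos hk u w b)]
    _ ≤ 2 * (1 - smx u w a) := by
        rw [← Finset.sum_erase_add _ _ (Finset.mem_univ a)]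
        have ha : smx u w a * ‖u a - u a‖ = 0 := by simp
        rw [ha, add_zero]
        have hsum : ∑ b ∈ Finset.univ.erase a, smx u w b = 1 - smx u w a := by
          have := Finset.sum_erase_add Finset.univ (fun b => smx u w b) (Finset.mem_univ a)
          rw [smx_sum hk u w] at this
          linarith
        calc ∑ b ∈ Finset.univ.erase a, smx u w b * ‖u a - u b‖
            ≤ ∑ b ∈ Finset.univ.erase a, smx u w b * 2 := by
              apply Finset.sum_le_sum
              intro b _
              apply mul_le_mul_of_nonneg_left _ (smx_pos hk u w b).le
              calc ‖u a - u b‖ ≤ ‖u a‖ + ‖u b‖ := norm_sub_le _ _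
                _ ≤ 2 := by have := hu a; have := hu b; linarith
          _ = 2 * (1 - smx u w a) := by rw [← Finset.sum_mul, hsum]; ring

lemma neg_log_smx_le_of_margin (hk : 0 < k) (u : Fin k → E) (a : Fin k) (w : E) (M : ℝ)
    (hM : ∀ b, b ≠ a → ⟪w, u a⟫ ≥ ⟪w, u b⟫ + M) :
    -Real.log (smx u w a) ≤ (k : ℝ) * Real.exp (-M) := by
  have hpos := sumexp_pos hk u w
  have h0 : ∑ b : Fin k, Real.exp (⟪w, u b⟫ - ⟪w, u a⟫) =
      (∑ c : Fin k, Real.exp ⟪w, u c⟫) / Real.exp ⟪w, u a⟫ := by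
    rw [Finset.sum_div]
    apply Finset.sum_congr rfl
    intro b _
    rw [Real.exp_sub]
  have h1 : -Real.log (smx u w a) =
      Real.log (∑ b : Fin k, Real.exp (⟪w, u b⟫ - ⟪w, u a⟫)) := by
    rw [h0, Real.log_div (ne_of_gt hpos) (Real.exp_ne_zero _), Real.log_exp,
      log_smx hk u w a, neg_sub]
  rw [h1]
  have h2 : ∑ b : Fin k, Real.exp (⟪w, u b⟫ - ⟪w, u a⟫) ≤ 1 + (k : ℝ) * Real.exp (-M) := by
    rw [← Finset.sum_erase_add _ _ (Finset.mem_univ a), sub_self, Real.exp_zero]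
    have h3 : ∑ b ∈ Finset.univ.erase a, Real.exp (⟪w, u b⟫ - ⟪w, u a⟫) ≤
        (k : ℝ) * Real.exp (-M) := by
      calc ∑ b ∈ Finset.univ.erase a, Real.exp (⟪w, u b⟫ - ⟪w, u a⟫)
          ≤ ∑ _b ∈ Finset.univ.erase a, Real.exp (-M) := by
            apply Finset.sum_le_sum
            intro b hb
            apply Real.exp_le_exp.2
            have := hM b (Finset.ne_of_mem_erase hb)
            linarith
        _ = ((Finset.univ.erase a).card : ℝ) * Real.exp (-M) := by
            rw [Finset.sum_const, nsmul_eq_mul]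
        _ ≤ (k : ℝ) * Real.exp (-M) := by
            apply mul_le_mul_of_nonneg_right _ (Real.exp_pos _).le
            have : (Finset.univ.erase a).card ≤ k := by
              calc (Finset.univ.erase a).card ≤ (Finset.univ : Finset (Fin k)).card :=
                    Finset.card_le_card (Finset.erase_subset _ _)
                _ = k := by simp
            exact_mod_cast this
    linarith
  calc Real.log (∑ b : Fin k, Real.exp (⟪w, u b⟫ - ⟪w, u a⟫))
      ≤ Real.log (1 + (k : ℝ) * Real.exp (-M)) := by
        apply Real.log_le_log (Finset.sum_pos (fun b _ => Real.exp_pos _)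
          (by haveI : Nonempty (Fin k) := Fin.pos_iff_nonempty.mp hk; exact Finset.univ_nonempty)) h2
    _ ≤ (k : ℝ) * Real.exp (-M) := by
        have := Real.log_le_sub_one_of_pos
          (show (0:ℝ) < 1 + (k : ℝ) * Real.exp (-M) by positivity)
        linarith


section SeqLemmas

variable {𝒳 : Type*} {D k N : ℕ} (φ : 𝒳 → List (Fin k) → EuclideanSpace ℝ (Fin D))
  (x : 𝒳) (y : Fin N → Fin k)

/-- feature family for token `i` -/
def uFam (i : Fin N) : Fin k → EuclideanSpace ℝ (Fin D) := fun b => φ x (pref y i ++ [b])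

lemma pTok_eq_smx (w : EuclideanSpace ℝ (Fin D)) (i : Fin N) (b : Fin k) :
    pTok φ w x (pref y i) b = smx (uFam φ x y i) w b := rfl

/-- gradient of `w ↦ log pSeq φ w x y` -/
def gSeq (w : EuclideanSpace ℝ (Fin D)) : EuclideanSpace ℝ (Fin D) :=
  ∑ i : Fin N, gTok (uFam φ x y i) w (y i)

lemma log_pSeq (hk : 0 < k) (w : EuclideanSpace ℝ (Fin D)) :
    Real.log (pSeq φ w x y) = ∑ i : Fin N, Real.log (smx (uFam φ x y i) w (y i)) := by
  rw [pSeq, Real.log_prod]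
  · exact Finset.sum_congr rfl (fun i _ => by rw [pTok_eq_smx])
  · intro i _
    rw [pTok_eq_smx]
    exact ne_of_gt (smx_pos hk _ w _)

lemma pSeq_pos (hk : 0 < k) (w : EuclideanSpace ℝ (Fin D)) : 0 < pSeq φ w x y :=
  Finset.prod_pos (fun i _ => by rw [pTok_eq_smx]; exact smx_pos hk _ w _)

lemma pSeq_le_one (hk : 0 < k) (w : EuclideanSpace ℝ (Fin D)) : pSeq φ w x y ≤ 1 :=
  Finset.prod_le_one (fun i _ => by rw [pTok_eq_smx]; exact (smx_pos hk _ w _).le)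
    (fun i _ => by rw [pTok_eq_smx]; exact smx_le_one hk _ w _)

lemma hasGradientAt_log_pSeq (hk : 0 < k) (w : EuclideanSpace ℝ (Fin D)) :
    HasGradientAt (fun v => Real.log (pSeq φ v x y)) (gSeq φ x y w) w := by
  have hfun : (fun v => Real.log (pSeq φ v x y)) =
      fun v => ∑ i : Fin N, (⟪v, uFam φ x y i (y i)⟫ -
        Real.log (∑ c : Fin k, Real.exp ⟪v, uFam φ x y i c⟫)) := by
    funext v
    rw [log_pSeq φ x y hk v]
    exact Finset.sum_congr rfl (fun i _ => log_smx hk _ v _)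
  rw [hfun, hasGradientAt_iff_hasFDerivAt]
  have hsum := HasFDerivAt.fun_sum (fun i (_ : i ∈ Finset.univ) =>
    (hasGradientAt_log_smx hk (uFam φ x y i) (y i) w).hasFDerivAt)
  have hdual : (InnerProductSpace.toDual ℝ (EuclideanSpace ℝ (Fin D))) (gSeq φ x y w) =
      ∑ i : Fin N, (InnerProductSpace.toDual ℝ (EuclideanSpace ℝ (Fin D)))
        (gTok (uFam φ x y i) w (y i)) := by
    rw [gSeq, map_sum]
  rw [hdual]
  exact hsum

lemma concave_log_pSeq (hk : 0 < k) (w v : EuclideanSpace ℝ (Fin D)) :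
    Real.log (pSeq φ v x y) - Real.log (pSeq φ w x y) ≤ ⟪gSeq φ x y w, v - w⟫ := by
  rw [log_pSeq φ x y hk v, log_pSeq φ x y hk w, gSeq, sum_inner, ← Finset.sum_sub_distrib]
  apply Finset.sum_le_sum
  intro i _
  have := concave_log_smx hk (uFam φ x y i) (y i) w v
  rw [log_smx hk _ v _, log_smx hk _ w _]
  linarith

lemma norm_gSeq_sq_le (hk : 0 < k) (w : EuclideanSpace ℝ (Fin D))
    (hfeat : ∀ i : Fin N, ∀ b : Fin k, ‖uFam φ x y i b‖ ≤ 1) :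
    ‖gSeq φ x y w‖ ^ 2 ≤ 2 * N * (-Real.log (pSeq φ w x y)) := by
  set p : Fin N → ℝ := fun i => smx (uFam φ x y i) w (y i) with hp
  have hp0 : ∀ i, 0 < p i := fun i => smx_pos hk _ w _
  have hp1 : ∀ i, p i ≤ 1 := fun i => smx_le_one hk _ w _
  have h1 : ‖gSeq φ x y w‖ ≤ ∑ i : Fin N, 2 * (1 - p i) := by
    calc ‖gSeq φ x y w‖ ≤ ∑ i : Fin N, ‖gTok (uFam φ x y i) w (y i)‖ := norm_sum_le _ _
      _ ≤ ∑ i : Fin N, 2 * (1 - p i) :=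
          Finset.sum_le_sum (fun i _ => norm_gTok_le hk _ _ w (hfeat i))
  have h2 : ‖gSeq φ x y w‖ ^ 2 ≤ (∑ i : Fin N, 2 * (1 - p i)) ^ 2 := by
    apply pow_le_pow_left₀ (norm_nonneg _) h1
  have h3 : (∑ i : Fin N, 2 * (1 - p i)) ^ 2 ≤
      (N : ℝ) * ∑ i : Fin N, (2 * (1 - p i)) ^ 2 := by
    have := sq_sum_le_card_mul_sum_sq (s := (Finset.univ : Finset (Fin N)))
      (f := fun i => 2 * (1 - p i))
    simpa using this
  have h4 : ∀ i : Fin N, (2 * (1 - p i)) ^ 2 ≤ 2 * (-Real.log (p i)) := by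
    intro i
    have := two_sq_le_neg_log (hp0 i) (hp1 i)
    nlinarith [this]
  have h5 : -Real.log (pSeq φ w x y) = ∑ i : Fin N, -Real.log (p i) := by
    rw [log_pSeq φ x y hk w, ← Finset.sum_neg_distrib]
  calc ‖gSeq φ x y w‖ ^ 2 ≤ (N : ℝ) * ∑ i : Fin N, (2 * (1 - p i)) ^ 2 := le_trans h2 h3
    _ ≤ (N : ℝ) * ∑ i : Fin N, 2 * (-Real.log (p i)) := by
        apply mul_le_mul_of_nonneg_left (Finset.sum_le_sum (fun i _ => h4 i)) (Nat.cast_nonneg N)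
    _ = (N : ℝ) * (2 * (-Real.log (pSeq φ w x y))) := by
        rw [h5, Finset.mul_sum, Finset.mul_sum, Finset.mul_sum]
    _ = 2 * N * (-Real.log (pSeq φ w x y)) := by ring

lemma neg_log_pSeq_le_of_margin (hk : 0 < k) (w : EuclideanSpace ℝ (Fin D)) (M : ℝ)
    (hmar : ∀ i : Fin N, ∀ b : Fin k, b ≠ y i →
      ⟪w, uFam φ x y i (y i)⟫ ≥ ⟪w, uFam φ x y i b⟫ + M) :
    -Real.log (pSeq φ w x y) ≤ (N : ℝ) * ((k : ℝ) * Real.exp (-M)) := by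
  rw [log_pSeq φ x y hk w, ← Finset.sum_neg_distrib]
  calc ∑ i : Fin N, -Real.log (smx (uFam φ x y i) w (y i))
      ≤ ∑ _i : Fin N, (k : ℝ) * Real.exp (-M) :=
        Finset.sum_le_sum (fun i _ => neg_log_smx_le_of_margin hk _ _ w M (hmar i))
    _ = (N : ℝ) * ((k : ℝ) * Real.exp (-M)) := by
        rw [Finset.sum_const, nsmul_eq_mul]; simp

end SeqLemmas

section ProbHelpers

open MeasureTheory

variable {Ω : Type} [MeasurableSpace Ω] (P : Measure Ω) [IsFiniteMeasure P]
  {α : Type*} [Fintype α] [MeasurableSpace α] [MeasurableSingletonClass α]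

lemma aux_integrable {H : Ω → α} (hH : Measurable H) (F : α → ℝ) :
    Integrable (fun ω => F (H ω)) P := by
  haveI := P.isFiniteMeasure_map H
  have hF : Measurable F := measurable_of_countable F
  have h1 : Integrable F (P.map H) := Integrable.of_finite
  have := (integrable_map_measure hF.aestronglyMeasurable hH.aemeasurable).mp h1
  exact this

lemma aux_integral {H : Ω → α} (hH : Measurable H) (F : α → ℝ) :
    ∫ ω, F (H ω) ∂P = ∑ a : α, F a * (P (H ⁻¹' {a})).toReal := by
  haveI := P.isFiniteMeasure_map H
  have hF : Measurable F := measurable_of_countable F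
  rw [← integral_map hH.aemeasurable hF.aestronglyMeasurable,
    integral_fintype Integrable.of_finite]
  apply Finset.sum_congr rfl
  intro a _
  rw [measureReal_def, Measure.map_apply hH (measurableSet_singleton a), smul_eq_mul, mul_comm]

lemma aux_integral' {H : Ω → α} (hH : Measurable H) (F : α → ℝ) {f : Ω → ℝ}
    (hf : ∀ ω, f ω = F (H ω)) :
    ∫ ω, f ω ∂P = ∑ a : α, F a * (P (H ⁻¹' {a})).toReal := by
  have hfe : f = fun ω => F (H ω) := funext hf
  rw [hfe]
  exact aux_integral P hH F

lemma aux_integrable' {H : Ω → α} (hH : Measurable H) (F : α → ℝ) {f : Ω → ℝ}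
    (hf : ∀ ω, f ω = F (H ω)) : Integrable f P := by
  have hfe : f = fun ω => F (H ω) := funext hf
  rw [hfe]
  exact aux_integrable P hH F

end ProbHelpers

/-- deterministic PG-OR iterate as a function of the history of draws -/
noncomputable def Wit {𝒳 : Type} {D k N : ℕ}
    (φ : 𝒳 → List (Fin k) → EuclideanSpace ℝ (Fin D)) (x : ℕ → 𝒳)
    (ystar : 𝒳 → Fin N → Fin k) (w0 : EuclideanSpace ℝ (Fin D)) :
    (t : ℕ) → (Fin t → (Fin N → Fin k)) → EuclideanSpace ℝ (Fin D)
  | 0, _ => w0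
  | t+1, h =>
      Wit φ x ystar w0 t (fun s => h s.castSucc) + (1/(2*(N:ℝ))) •
        ((if h (Fin.last t) = ystar (x t) then (1:ℝ) else 0) •
          gradient (fun w => Real.log (pSeq φ w (x t) (h (Fin.last t))))
            (Wit φ x ystar w0 t (fun s => h s.castSucc)))

lemma pref_length {k N : ℕ} (y : Fin N → Fin k) (i : ℕ) (h : i ≤ N) :
    (pref y i).length = i := by
  simp [pref, h]

lemma pref_succ {k N : ℕ} (y : Fin N → Fin k) (i : Fin N) :
    pref y ((i : ℕ) + 1) = pref y (i : ℕ) ++ [y i] := by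
  simp [pref, List.take_succ, List.getElem?_ofFn, i.isLt]


set_option maxHeartbeats 1600000 in
/-- (Proposition: online PG with outcome reward and constant learning
rate `1/(2N)` on an arbitrary, possibly adversarial, sequence of contexts satisfying the
γ-margin inequalities with a common unit vector `w*`).  The behavior policy at round `t`
is an arbitrary function `q t` of the past draws; conditionally on the history the draw
`Y t` has law `q t`.  Then the expected average of
`− q_t(y*(x^{(t)})|x^{(t)}) log p_{w_t}(y*(x^{(t)})|x^{(t)})` is at most
`10 N (log(k T γ²))² / (γ² T)`. -/
theorem pg_or_constant_lr_online
    (𝒳 : Type) (D k N T : ℕ) (hk : 2 ≤ k) (hN : 1 ≤ N) (hD : 1 ≤ D) (hT : 1 ≤ T)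
    (φ : 𝒳 → List (Fin k) → EuclideanSpace ℝ (Fin D))
    (x : ℕ → 𝒳) (ystar : 𝒳 → Fin N → Fin k) (γ : ℝ) (hγ : 0 < γ)
    -- γ-margin inequalities along the sequence, with a common unit vector
    (hmargin : ∃ wstar : EuclideanSpace ℝ (Fin D), ‖wstar‖ = 1 ∧
      ∀ t : Fin T, ∀ i : Fin N, ∀ a : Fin k, a ≠ ystar (x t) i →
        ⟪wstar, φ (x t) (pref (ystar (x t)) ((i : ℕ) + 1))⟫ ≥
          ⟪wstar, φ (x t) (pref (ystar (x t)) (i : ℕ) ++ [a])⟫ + γ)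
    (hφnorm : ∀ x' : 𝒳, ∀ l : List (Fin k), l ≠ [] → l.length ≤ N → ‖φ x' l‖ ≤ 1)
    (hscale : Real.exp 1 ≤ (k : ℝ) * T * γ ^ 2)
    -- behavior policies: arbitrary functions of the history of past draws
    (q : (t : ℕ) → (Fin t → (Fin N → Fin k)) → (Fin N → Fin k) → ℝ)
    (hq0 : ∀ t h y, 0 ≤ q t h y) (hq1 : ∀ t h, ∑ y : Fin N → Fin k, q t h y = 1)
    -- probability space carrying the draws
    (Ω : Type) [MeasurableSpace Ω] (P : Measure Ω) [IsProbabilityMeasure P]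
    (Y : ℕ → Ω → (Fin N → Fin k)) (hYm : ∀ t, Measurable (Y t))
    -- conditional law of `Y t` given the history equals `q t`
    (hYlaw : ∀ t < T, ∀ (h : Fin t → (Fin N → Fin k)) (y : Fin N → Fin k),
      P {ω | (∀ s : Fin t, Y s ω = h s) ∧ Y t ω = y} =
        ENNReal.ofReal (q t h y) * P {ω | ∀ s : Fin t, Y s ω = h s})
    -- PG-OR iterates
    (w0 : EuclideanSpace ℝ (Fin D)) (hw0 : ‖w0‖ ≤ γ⁻¹ * Real.log ((k : ℝ) * T * γ ^ 2))
    (W : Ω → ℕ → EuclideanSpace ℝ (Fin D))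
    (hW0 : ∀ ω, W ω 0 = w0)
    (hWrec : ∀ ω, ∀ t : Fin T,
      W ω ((t : ℕ) + 1) = W ω (t : ℕ) + (1 / (2 * (N : ℝ))) •
        ((if Y t ω = ystar (x t) then (1 : ℝ) else 0) •
          gradient (fun w => Real.log (pSeq φ w (x t) (Y t ω))) (W ω (t : ℕ)))) :
    ∫ ω, (1 / (T : ℝ)) * ∑ t : Fin T,
        (- q (t : ℕ) (fun s : Fin (t : ℕ) => Y s ω) (ystar (x t)) *
          Real.log (pSeq φ (W ω (t : ℕ)) (x t) (ystar (x t)))) ∂P ≤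
      10 * N * (Real.log ((k : ℝ) * T * γ ^ 2)) ^ 2 / (γ ^ 2 * T) := by
  obtain ⟨wstar, hwsnorm, hmar⟩ := hmargin
  have hk0 : 0 < k := lt_of_lt_of_le (by norm_num) hk
  have hN0 : (0:ℝ) < N := by exact_mod_cast lt_of_lt_of_le one_pos hN
  have hT0 : (0:ℝ) < T := by exact_mod_cast lt_of_lt_of_le one_pos hT
  have hKT : (0:ℝ) < (k:ℝ) * T * γ ^ 2 := lt_of_lt_of_le (Real.exp_pos 1) hscale
  set L : ℝ := Real.log ((k:ℝ) * T * γ ^ 2) with hLdef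
  have hL1 : (1:ℝ) ≤ L := by
    have := Real.log_le_log (Real.exp_pos 1) hscale
    rwa [Real.log_exp] at this
  set R : ℝ := γ⁻¹ * L with hRdef
  have hR0 : 0 ≤ R := mul_nonneg (inv_nonneg.2 hγ.le) (by linarith)
  set wbar : EuclideanSpace ℝ (Fin D) := R • wstar with hwbardef
  have hwbarnorm : ‖wbar‖ = R := by
    rw [hwbardef, norm_smul, hwsnorm, Real.norm_eq_abs, abs_of_nonneg hR0, mul_one]
  have hRγ : R * γ = L := by
    rw [hRdef]; field_simp
  have hεexp : Real.exp (-(R * γ)) = ((k:ℝ) * T * γ ^ 2)⁻¹ := by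
    rw [hRγ, Real.exp_neg, Real.exp_log hKT]
  -- features norm bound
  have hfeat : ∀ (x' : 𝒳) (yy : Fin N → Fin k) (i : Fin N) (b : Fin k),
      ‖uFam φ x' yy i b‖ ≤ 1 := by
    intro x' yy i b
    apply hφnorm
    · simp [uFam]
    · have : (pref yy (i:ℕ)).length = (i:ℕ) := pref_length yy _ (le_of_lt i.isLt)
      simp only [uFam, List.length_append, List.length_singleton, this]
      omega
  -- margin for wbar, per token
  have hmarbar : ∀ t : Fin T, ∀ i : Fin N, ∀ b : Fin k, b ≠ ystar (x ↑t) i →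
      ⟪wbar, uFam φ (x ↑t) (ystar (x ↑t)) i (ystar (x ↑t) i)⟫ ≥
        ⟪wbar, uFam φ (x ↑t) (ystar (x ↑t)) i b⟫ + R * γ := by
    intro t i b hb
    have h1 := hmar t i b hb
    have hpref : uFam φ (x ↑t) (ystar (x ↑t)) i (ystar (x ↑t) i) =
        φ (x ↑t) (pref (ystar (x ↑t)) ((i:ℕ) + 1)) := by
      rw [uFam, pref_succ]
    have h2 : (⟪wstar, uFam φ (x ↑t) (ystar (x ↑t)) i b⟫ : ℝ) + γ ≤
        ⟪wstar, uFam φ (x ↑t) (ystar (x ↑t)) i (ystar (x ↑t) i)⟫ := by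
      rw [hpref]
      exact h1
    rw [hwbardef]
    simp only [real_inner_smul_left]
    nlinarith [mul_le_mul_of_nonneg_left h2 hR0]
  -- sequence-level margin bound at wbar
  have hseqmar : ∀ t : Fin T,
      -Real.log (pSeq φ wbar (x ↑t) (ystar (x ↑t))) ≤ (N:ℝ) / (T * γ ^ 2) := by
    intro t
    have h1 := neg_log_pSeq_le_of_margin φ (x ↑t) (ystar (x ↑t)) hk0 wbar (R * γ)
      (fun i b hb => hmarbar t i b hb)
    have h2 : (N:ℝ) * ((k:ℝ) * Real.exp (-(R * γ))) = (N:ℝ) / (T * γ ^ 2) := by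
      rw [hεexp]
      have hkne : (k:ℝ) ≠ 0 := by positivity
      field_simp
    rw [h2] at h1
    exact h1
  -- pathwise bound
  have hpath : ∀ ω, ∑ t : Fin T, ((if Y ↑t ω = ystar (x ↑t) then (1:ℝ) else 0) *
      (-Real.log (pSeq φ (W ω ↑t) (x ↑t) (ystar (x ↑t))))) ≤ 10 * N * L ^ 2 / γ ^ 2 := by
    intro ω
    set d : ℕ → ℝ := fun s => ‖W ω s - wbar‖ ^ 2 with hd
    have hstep : ∀ t : Fin T, (if Y ↑t ω = ystar (x ↑t) then (1:ℝ) else 0) *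
        (-Real.log (pSeq φ (W ω ↑t) (x ↑t) (ystar (x ↑t)))) ≤
        2 * N * (d ↑t - d (↑t + 1)) + 2 * ((N:ℝ) / (T * γ ^ 2)) := by
      intro t
      by_cases hy : Y ↑t ω = ystar (x ↑t)
      · rw [if_pos hy, one_mul]
        set wt := W ω (↑t : ℕ) with hwt
        set g := gSeq φ (x ↑t) (ystar (x ↑t)) wt with hg
        set ℓ := -Real.log (pSeq φ wt (x ↑t) (ystar (x ↑t))) with hℓ
        set ℓb := -Real.log (pSeq φ wbar (x ↑t) (ystar (x ↑t))) with hℓb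
        have hupd : W ω (↑t + 1) = wt + (1/(2*(N:ℝ))) • g := by
          rw [hWrec ω t, hy, if_pos rfl, one_smul, hg, hwt]
          congr 2
          exact (hasGradientAt_log_pSeq φ (x ↑t) (ystar (x ↑t)) hk0 wt).gradient
        set η : ℝ := 1/(2*(N:ℝ)) with hη
        have hη0 : 0 < η := by rw [hη]; positivity
        have hη2N : η * (2 * (N:ℝ)) = 1 := by rw [hη]; field_simp
        have e1 : d (↑t + 1) = d ↑t + 2 * η * ⟪wt - wbar, g⟫ + η ^ 2 * ‖g‖ ^ 2 := by
          rw [hd]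
          simp only []
          rw [hupd]
          have : wt + η • g - wbar = (wt - wbar) + η • g := by abel
          rw [this, norm_add_sq_real, real_inner_smul_right, norm_smul,
            Real.norm_eq_abs, abs_of_pos hη0, mul_pow]
          ring
        have e2 : (⟪wt - wbar, g⟫ : ℝ) ≤ -ℓ + ℓb := by
          have hc := concave_log_pSeq φ (x ↑t) (ystar (x ↑t)) hk0 wt wbar
          have : (⟪wt - wbar, g⟫ : ℝ) = -⟪g, wbar - wt⟫ := by
            rw [real_inner_comm]
            rw [show wt - wbar = -(wbar - wt) by abel, inner_neg_right]
          rw [this, hℓ, hℓb]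
          linarith [hc]
        have e3 : ‖g‖ ^ 2 ≤ 2 * N * ℓ := by
          rw [hg, hℓ]
          exact norm_gSeq_sq_le φ (x ↑t) (ystar (x ↑t)) hk0 wt (fun i b => hfeat _ _ i b)
        have e4 : ℓb ≤ (N:ℝ) / (T * γ ^ 2) := hseqmar t
        have e5 : η ^ 2 * ‖g‖ ^ 2 ≤ η * ℓ := by
          calc η ^ 2 * ‖g‖ ^ 2 ≤ η ^ 2 * (2 * N * ℓ) :=
              mul_le_mul_of_nonneg_left e3 (sq_nonneg η)
            _ = (η * (2 * (N:ℝ))) * (η * ℓ) := by ring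
            _ = η * ℓ := by rw [hη2N, one_mul]
        have e2' : 2 * η * ⟪wt - wbar, g⟫ ≤ 2 * η * (-ℓ + ℓb) :=
          mul_le_mul_of_nonneg_left e2 (by positivity)
        have hd1 : η * ℓ ≤ (d ↑t - d (↑t + 1)) + 2 * η * ℓb := by linarith [e1, e2', e5]
        have h6 := mul_le_mul_of_nonneg_left hd1 (show (0:ℝ) ≤ 2 * N by positivity)
        have e7 : 2 * (N:ℝ) * (η * ℓ) = ℓ := by
          calc 2 * (N:ℝ) * (η * ℓ) = (η * (2 * (N:ℝ))) * ℓ := by ring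
            _ = ℓ := by rw [hη2N, one_mul]
        have e8 : 2 * (N:ℝ) * ((d ↑t - d (↑t + 1)) + 2 * η * ℓb) =
            2 * N * (d ↑t - d (↑t + 1)) + 2 * ℓb := by
          calc 2 * (N:ℝ) * ((d ↑t - d (↑t + 1)) + 2 * η * ℓb)
              = 2 * N * (d ↑t - d (↑t + 1)) + (η * (2 * (N:ℝ))) * (2 * ℓb) := by ring
            _ = _ := by rw [hη2N, one_mul]
        rw [e7, e8] at h6
        linarith [h6, e4]
      · rw [if_neg hy, zero_mul]
        have hsame : W ω (↑t + 1) = W ω ↑t := by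
          rw [hWrec ω t, if_neg hy, zero_smul, smul_zero, add_zero]
        have : d (↑t + 1) = d ↑t := by rw [hd]; simp only []; rw [hsame]
        rw [this]
        have : (0:ℝ) ≤ 2 * ((N:ℝ) / (T * γ ^ 2)) := by positivity
        linarith
    calc ∑ t : Fin T, ((if Y ↑t ω = ystar (x ↑t) then (1:ℝ) else 0) *
        (-Real.log (pSeq φ (W ω ↑t) (x ↑t) (ystar (x ↑t)))))
        ≤ ∑ t : Fin T, (2 * N * (d ↑t - d (↑t + 1)) + 2 * ((N:ℝ) / (T * γ ^ 2))) :=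
          Finset.sum_le_sum (fun t _ => hstep t)
      _ = 2 * N * (d 0 - d T) + T * (2 * ((N:ℝ) / (T * γ ^ 2))) := by
          rw [Finset.sum_add_distrib, Finset.sum_const, Finset.card_univ, Fintype.card_fin,
            nsmul_eq_mul, ← Finset.mul_sum,
            Fin.sum_univ_eq_sum_range (fun s => d s - d (s + 1)) T,
            Finset.sum_range_sub' d T]
      _ ≤ 2 * N * d 0 + 2 * N / γ ^ 2 := by
          have hdT : 0 ≤ d T := by rw [hd]; positivity
          have : (T:ℝ) * (2 * ((N:ℝ) / (T * γ ^ 2))) = 2 * N / γ ^ 2 := by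
            field_simp
          rw [this]
          nlinarith [hdT, hN0]
      _ ≤ 10 * N * L ^ 2 / γ ^ 2 := by
          have hd0 : d 0 ≤ 4 * R ^ 2 := by
            rw [hd]
            simp only []
            rw [hW0]
            have h1 : ‖w0 - wbar‖ ≤ 2 * R := by
              calc ‖w0 - wbar‖ ≤ ‖w0‖ + ‖wbar‖ := norm_sub_le _ _
                _ ≤ R + R := by rw [hwbarnorm]; linarith [hw0]
                _ = 2 * R := by ring
            nlinarith [norm_nonneg (w0 - wbar), h1]
          have hR2 : R ^ 2 = L ^ 2 / γ ^ 2 := by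
            rw [hRdef]
            field_simp
          have hL2 : 1 ≤ L ^ 2 := by nlinarith [hL1]
          rw [hR2] at hd0
          have hγ2 : (0:ℝ) < γ ^ 2 := by positivity
          have h8 : 2*(N:ℝ)*d 0 ≤ 8*N*(L^2/γ^2) := by nlinarith [hd0, hN0]
          have h10 : 2*(N:ℝ) ≤ 2*N*L^2 := by nlinarith [hL2, hN0]
          have h9 : 2*(N:ℝ)/γ^2 ≤ (2*N*L^2)/γ^2 := (div_le_div_iff_of_pos_right hγ2).mpr h10
          have h11 : 8*(N:ℝ)*(L^2/γ^2) + (2*N*L^2)/γ^2 = 10 * N * L ^ 2 / γ ^ 2 := by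
            field_simp; ring
          linarith [h8, h9, h11]

  -- correctness of the deterministic iterate function
  have hWit : ∀ ω, ∀ t : ℕ, t ≤ T → W ω t = Wit φ x ystar w0 t (fun s : Fin t => Y ↑s ω) := by
    intro ω t
    induction t with
    | zero => intro _; rw [hW0 ω]; rfl
    | succ t ih =>
        intro ht
        have htT : t < T := Nat.lt_of_succ_le ht
        have hunf : Wit φ x ystar w0 (t+1) (fun s : Fin (t+1) => Y ↑s ω) =
            Wit φ x ystar w0 t (fun s : Fin t => Y ↑(s.castSucc) ω) + (1/(2*(N:ℝ))) •
              ((if Y ↑(Fin.last t) ω = ystar (x t) then (1:ℝ) else 0) •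
                gradient (fun w => Real.log (pSeq φ w (x t) (Y ↑(Fin.last t) ω)))
                  (Wit φ x ystar w0 t (fun s : Fin t => Y ↑(s.castSucc) ω))) := rfl
    /- nothing -/
        rw [hunf]
        simp only [Fin.coe_castSucc, Fin.val_last]
        rw [← ih htT.le]
        exact hWrec ω ⟨t, htT⟩
  -- notation for the loss as a function of the history
  set Lam : (t : ℕ) → (Fin t → (Fin N → Fin k)) → ℝ := fun t h =>
    -Real.log (pSeq φ (Wit φ x ystar w0 t h) (x t) (ystar (x t))) with hLamdef
  have hHmeas : ∀ t : ℕ, Measurable (fun ω => (fun s : Fin t => Y ↑s ω)) := by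
    intro t
    exact measurable_pi_lambda _ (fun s => hYm ↑s)
  -- the key exchange identity
  have hkey : ∀ t : Fin T,
      ∫ ω, q ↑t (fun s : Fin ↑t => Y ↑s ω) (ystar (x ↑t)) *
        Lam ↑t (fun s : Fin ↑t => Y ↑s ω) ∂P =
      ∫ ω, (if Y ↑t ω = ystar (x ↑t) then (1:ℝ) else 0) *
        Lam ↑t (fun s : Fin ↑t => Y ↑s ω) ∂P := by
    intro t
    have hq : ∫ ω, q ↑t (fun s : Fin ↑t => Y ↑s ω) (ystar (x ↑t)) *
        Lam ↑t (fun s : Fin ↑t => Y ↑s ω) ∂P =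
        ∑ h : Fin ↑t → (Fin N → Fin k), (q ↑t h (ystar (x ↑t)) * Lam ↑t h) *
          (P {ω | ∀ s : Fin ↑t, Y ↑s ω = h s}).toReal := by
      rw [aux_integral' P (hHmeas ↑t)
        (fun h => q ↑t h (ystar (x ↑t)) * Lam ↑t h) (fun ω => rfl)]
      apply Finset.sum_congr rfl
      intro h _
      have hset : ((fun ω => (fun s : Fin ↑t => Y ↑s ω)) ⁻¹' {h}) =
          {ω | ∀ s : Fin ↑t, Y ↑s ω = h s} := by
        ext ω
        simp [funext_iff]
      rw [hset]
    have hr : ∫ ω, (if Y ↑t ω = ystar (x ↑t) then (1:ℝ) else 0) *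
        Lam ↑t (fun s : Fin ↑t => Y ↑s ω) ∂P =
        ∑ h : Fin (↑t+1) → (Fin N → Fin k),
          ((if h (Fin.last ↑t) = ystar (x ↑t) then (1:ℝ) else 0) *
            Lam ↑t (fun s : Fin ↑t => h s.castSucc)) *
          (P ((fun ω => (fun s : Fin (↑t+1) => Y ↑s ω)) ⁻¹' {h})).toReal := by
      exact aux_integral' P (hHmeas (↑t+1))
        (fun h => (if h (Fin.last ↑t) = ystar (x ↑t) then (1:ℝ) else 0) *
          Lam ↑t (fun s : Fin ↑t => h s.castSucc)) (fun ω => rfl)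
    rw [hq, hr]
    rw [← Equiv.sum_comp (Fin.snocEquiv (fun _ => (Fin N → Fin k)))]
    rw [Fintype.sum_prod_type]
    have hterm : ∀ (y : Fin N → Fin k) (h0 : Fin ↑t → (Fin N → Fin k)),
        ((if (Fin.snocEquiv (fun _ => (Fin N → Fin k)) (y, h0)) (Fin.last ↑t) = ystar (x ↑t)
            then (1:ℝ) else 0) *
          Lam ↑t (fun s : Fin ↑t => (Fin.snocEquiv (fun _ => (Fin N → Fin k)) (y, h0)) s.castSucc)) *
          (P ((fun ω => (fun s : Fin (↑t+1) => Y ↑s ω)) ⁻¹'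
            {Fin.snocEquiv (fun _ => (Fin N → Fin k)) (y, h0)})).toReal =
        (if y = ystar (x ↑t) then (1:ℝ) else 0) * Lam ↑t h0 *
          (q ↑t h0 y * (P {ω | ∀ s : Fin ↑t, Y ↑s ω = h0 s}).toReal) := by
      intro y h0
      have hsnoc1 : (Fin.snocEquiv (fun _ => (Fin N → Fin k)) (y, h0)) (Fin.last ↑t) = y := by
        simp [Fin.snocEquiv]
      have hsnoc2 : (fun s : Fin ↑t =>
          (Fin.snocEquiv (fun _ => (Fin N → Fin k)) (y, h0)) s.castSucc) = h0 := by
        funext s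
        simp [Fin.snocEquiv]
      have hset : ((fun ω => (fun s : Fin (↑t+1) => Y ↑s ω)) ⁻¹'
          {Fin.snocEquiv (fun _ => (Fin N → Fin k)) (y, h0)}) =
          {ω | (∀ s : Fin ↑t, Y ↑s ω = h0 s) ∧ Y ↑t ω = y} := by
        ext ω
        simp only [Set.mem_preimage, Set.mem_singleton_iff, funext_iff, Set.mem_setOf_eq]
        have hsc : ∀ s : Fin ↑t,
            (Fin.snocEquiv (fun _ => (Fin N → Fin k)) (y, h0)) s.castSucc = h0 s := by
          intro s
          simp [Fin.snocEquiv]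
        constructor
        · intro hh
          constructor
          · intro s
            have h1 := hh s.castSucc
            rw [hsc s] at h1
            simpa [Fin.coe_castSucc] using h1
          · have h1 := hh (Fin.last ↑t)
            rw [hsnoc1] at h1
            simpa [Fin.val_last] using h1
        · rintro ⟨hp, hl⟩ i
          refine Fin.lastCases ?_ ?_ i
          · rw [hsnoc1]
            simpa [Fin.val_last] using hl
          · intro s
            rw [hsc s]
            simpa [Fin.coe_castSucc] using hp s
      rw [hsnoc1, hsnoc2, hset, hYlaw ↑t t.isLt h0 y, ENNReal.toReal_mul,
        ENNReal.toReal_ofReal (hq0 _ _ _)]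
    calc ∑ h : Fin ↑t → (Fin N → Fin k), (q ↑t h (ystar (x ↑t)) * Lam ↑t h) *
          (P {ω | ∀ s : Fin ↑t, Y ↑s ω = h s}).toReal
        = ∑ y : Fin N → Fin k, ∑ h0 : Fin ↑t → (Fin N → Fin k),
            (if y = ystar (x ↑t) then (1:ℝ) else 0) * Lam ↑t h0 *
              (q ↑t h0 y * (P {ω | ∀ s : Fin ↑t, Y ↑s ω = h0 s}).toReal) := by
          rw [Finset.sum_comm]
          apply Finset.sum_congr rfl
          intro h0 _
          rw [← Finset.sum_filter_add_sum_filter_not Finset.univ (fun y => y = ystar (x ↑t))]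
          simp [Finset.filter_eq', mul_comm, mul_assoc, mul_left_comm]
      _ = ∑ y : Fin N → Fin k, ∑ h0 : Fin ↑t → (Fin N → Fin k),
            ((if (Fin.snocEquiv (fun _ => (Fin N → Fin k)) (y, h0)) (Fin.last ↑t) = ystar (x ↑t)
              then (1:ℝ) else 0) *
            Lam ↑t (fun s : Fin ↑t =>
              (Fin.snocEquiv (fun _ => (Fin N → Fin k)) (y, h0)) s.castSucc)) *
            (P ((fun ω => (fun s : Fin (↑t+1) => Y ↑s ω)) ⁻¹'
              {Fin.snocEquiv (fun _ => (Fin N → Fin k)) (y, h0)})).toReal := by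
          apply Finset.sum_congr rfl
          intro y _
          apply Finset.sum_congr rfl
          intro h0 _
          rw [hterm y h0]
  -- assembling
  have hgoalfun : (fun ω => (1 / (T : ℝ)) * ∑ t : Fin T,
      (- q (t : ℕ) (fun s : Fin (t : ℕ) => Y s ω) (ystar (x t)) *
        Real.log (pSeq φ (W ω (t : ℕ)) (x t) (ystar (x t))))) =
      (fun ω => ∑ t : Fin T, (1 / (T : ℝ)) *
        (q ↑t (fun s : Fin ↑t => Y ↑s ω) (ystar (x ↑t)) *
          Lam ↑t (fun s : Fin ↑t => Y ↑s ω))) := by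
    funext ω
    rw [Finset.mul_sum]
    apply Finset.sum_congr rfl
    intro t _
    rw [hLamdef]
    simp only []
    rw [← hWit ω ↑t t.isLt.le]
    ring
  rw [hgoalfun]
  have hint_q : ∀ t : Fin T, Integrable (fun ω =>
      q ↑t (fun s : Fin ↑t => Y ↑s ω) (ystar (x ↑t)) *
        Lam ↑t (fun s : Fin ↑t => Y ↑s ω)) P :=
    fun t => aux_integrable' P (hHmeas ↑t)
      (fun h => q ↑t h (ystar (x ↑t)) * Lam ↑t h) (fun ω => rfl)
  have hint_r : ∀ t : Fin T, Integrable (fun ω =>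
      (if Y ↑t ω = ystar (x ↑t) then (1:ℝ) else 0) *
        Lam ↑t (fun s : Fin ↑t => Y ↑s ω)) P :=
    fun t => aux_integrable' P (hHmeas (↑t+1))
      (fun h => (if h (Fin.last ↑t) = ystar (x ↑t) then (1:ℝ) else 0) *
        Lam ↑t (fun s : Fin ↑t => h s.castSucc)) (fun ω => rfl)
  rw [integral_finset_sum _ (fun t _ => (hint_q t).const_mul _)]
  have hswap : ∀ t : Fin T, ∫ ω, (1 / (T : ℝ)) *
      (q ↑t (fun s : Fin ↑t => Y ↑s ω) (ystar (x ↑t)) *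
        Lam ↑t (fun s : Fin ↑t => Y ↑s ω)) ∂P =
      ∫ ω, (1 / (T : ℝ)) * ((if Y ↑t ω = ystar (x ↑t) then (1:ℝ) else 0) *
        Lam ↑t (fun s : Fin ↑t => Y ↑s ω)) ∂P := by
    intro t
    rw [integral_const_mul, integral_const_mul, hkey t]
  rw [Finset.sum_congr rfl (fun t _ => hswap t)]
  rw [← integral_finset_sum _ (fun t _ => (hint_r t).const_mul _)]
  have hbound : ∀ ω, ∑ t : Fin T, (1 / (T : ℝ)) *
      ((if Y ↑t ω = ystar (x ↑t) then (1:ℝ) else 0) *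
        Lam ↑t (fun s : Fin ↑t => Y ↑s ω)) ≤
      10 * N * L ^ 2 / (γ ^ 2 * T) := by
    intro ω
    have h1 : ∑ t : Fin T, (1 / (T : ℝ)) *
        ((if Y ↑t ω = ystar (x ↑t) then (1:ℝ) else 0) *
          Lam ↑t (fun s : Fin ↑t => Y ↑s ω)) =
        (1 / (T : ℝ)) * ∑ t : Fin T, ((if Y ↑t ω = ystar (x ↑t) then (1:ℝ) else 0) *
          (-Real.log (pSeq φ (W ω ↑t) (x ↑t) (ystar (x ↑t))))) := by
      rw [Finset.mul_sum]
      apply Finset.sum_congr rfl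
      intro t _
      rw [hLamdef]
      simp only []
      rw [← hWit ω ↑t t.isLt.le]
    rw [h1]
    have h2 := mul_le_mul_of_nonneg_left (hpath ω) (show (0:ℝ) ≤ 1 / T by positivity)
    calc (1 / (T : ℝ)) * ∑ t : Fin T, ((if Y ↑t ω = ystar (x ↑t) then (1:ℝ) else 0) *
          (-Real.log (pSeq φ (W ω ↑t) (x ↑t) (ystar (x ↑t)))))
        ≤ (1 / (T : ℝ)) * (10 * N * L ^ 2 / γ ^ 2) := h2
      _ = 10 * N * L ^ 2 / (γ ^ 2 * T) := by
          field_simp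
  have hint_sum : Integrable (fun ω => ∑ t : Fin T, (1 / (T : ℝ)) *
      ((if Y ↑t ω = ystar (x ↑t) then (1:ℝ) else 0) *
        Lam ↑t (fun s : Fin ↑t => Y ↑s ω))) P :=
    integrable_finset_sum _ (fun t _ => (hint_r t).const_mul _)
  calc ∫ ω, ∑ t : Fin T, (1 / (T : ℝ)) *
        ((if Y ↑t ω = ystar (x ↑t) then (1:ℝ) else 0) *
          Lam ↑t (fun s : Fin ↑t => Y ↑s ω)) ∂P
      ≤ ∫ _ω, 10 * N * L ^ 2 / (γ ^ 2 * T) ∂P :=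
        integral_mono hint_sum (integrable_const _) hbound
    _ = 10 * N * L ^ 2 / (γ ^ 2 * T) := by
        rw [integral_const, probReal_univ, one_smul]
end
end

section
/- Let (x^{(t)}, y*(x^{(t)}))_{t=0}^{T-1} be an arbitrary (possibly adversarial, non-random) sequence of contexts and correct responses which satisfies the γ-margin inequalities with a common unit vector w*, let λ > 0, and suppose N k T γ²/λ ≥ e. Consider PG-OR iterates on this sequence with adaptive learning rate η_t = 1 / (2(λ + ‖∇_w log p_{w_t}(y^{(t)} | x^{(t)})‖₂)) and initialization ‖w_0‖₂ ≤ (1/γ) log(N k T γ² / λ), where each behavior policy q_t may depend measurably on the past draws. Then, in expectation over the random draws y^{(0)}, …, y^{(T-1)}, E[ (1/T) ∑_{t=0}^{T-1} q_t(y*(x^{(t)}) | x^{(t)}) · min( λ/2, − log p_{w_t}(y*(x^{(t)}) | x^{(t)}) ) ] ≤ 20 λ (log(N k T γ² / λ))² / (γ² T). -/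
open MeasureTheory ProbabilityTheory
open scoped BigOperators RealInnerProductSpace ENNReal

noncomputable section

namespace PGORAux

open InnerProductSpace

abbrev E (D : ℕ) := EuclideanSpace ℝ (Fin D)

variable {D k N : ℕ} [NeZero k] {𝒳 : Type}

def smZ (v : Fin k → E D) (w : E D) : ℝ := ∑ b, Real.exp ⟪v b, w⟫
def sm (v : Fin k → E D) (w : E D) (a : Fin k) : ℝ := Real.exp ⟪v a, w⟫ / smZ v w
def gradTok (v : Fin k → E D) (w : E D) (a : Fin k) : E D := v a - ∑ b, sm v w b • v b

lemma smZ_pos (v : Fin k → E D) (w : E D) : 0 < smZ v w :=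
  Finset.sum_pos (fun _ _ => Real.exp_pos _) Finset.univ_nonempty

lemma sm_pos (v : Fin k → E D) (w : E D) (a : Fin k) : 0 < sm v w a :=
  div_pos (Real.exp_pos _) (smZ_pos v w)

lemma sm_le_one (v : Fin k → E D) (w : E D) (a : Fin k) : sm v w a ≤ 1 := by
  rw [sm, div_le_one (smZ_pos v w), smZ]
  exact Finset.single_le_sum (f := fun b => Real.exp ⟪v b, w⟫)
    (fun b _ => (Real.exp_pos _).le) (Finset.mem_univ a)

lemma sm_sum (v : Fin k → E D) (w : E D) : ∑ a, sm v w a = 1 := by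
  simp only [sm]
  rw [← Finset.sum_div, ← smZ, div_self (smZ_pos v w).ne']

lemma log_sm (v : Fin k → E D) (w : E D) (a : Fin k) :
    Real.log (sm v w a) = ⟪v a, w⟫ - Real.log (smZ v w) := by
  rw [sm, Real.log_div (Real.exp_pos _).ne' (smZ_pos v w).ne', Real.log_exp]

lemma hasFDerivAt_smZ (v : Fin k → E D) (w : E D) :
    HasFDerivAt (smZ v) (∑ b, Real.exp ⟪v b, w⟫ • (innerSL ℝ (v b))) w := by
  apply HasFDerivAt.fun_sum
  intro b _
  exact (Real.hasDerivAt_exp _).comp_hasFDerivAt w ((innerSL ℝ (v b)).hasFDerivAt)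

lemma hasGradientAt_log_sm (v : Fin k → E D) (w : E D) (a : Fin k) :
    HasGradientAt (fun w => Real.log (sm v w a)) (gradTok v w a) w := by
  have hfd : HasFDerivAt (fun w => Real.log (sm v w a))
      ((innerSL ℝ (v a)) - (smZ v w)⁻¹ • (∑ b, Real.exp ⟪v b, w⟫ • (innerSL ℝ (v b)))) w := by
    have h1 : HasFDerivAt (fun w : E D => ⟪v a, w⟫) (innerSL ℝ (v a)) w :=
      (innerSL ℝ (v a)).hasFDerivAt
    have h2 : HasFDerivAt (fun w => Real.log (smZ v w))
        ((smZ v w)⁻¹ • (∑ b, Real.exp ⟪v b, w⟫ • (innerSL ℝ (v b)))) w :=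
      (Real.hasDerivAt_log (smZ_pos v w).ne').comp_hasFDerivAt w (hasFDerivAt_smZ v w)
    have := h1.fun_sub h2
    simpa [funext fun w => log_sm v w a] using this
  rw [hasGradientAt_iff_hasFDerivAt]
  convert hfd using 1
  all_goals try rfl
  apply ContinuousLinearMap.ext
  intro u
  simp [toDual_apply_apply, gradTok, inner_sub_left, sum_inner, real_inner_smul_left, sm,
    ContinuousLinearMap.sub_apply, ContinuousLinearMap.smul_apply,
    ContinuousLinearMap.sum_apply, innerSL_apply_apply, Finset.mul_sum, div_mul_eq_mul_div,
    div_eq_inv_mul, mul_assoc]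

lemma logZ_lower (v : Fin k → E D) (w u : E D) :
    (∑ b, sm v w b * ⟪v b, u - w⟫) + Real.log (smZ v w) ≤ Real.log (smZ v u) := by
  set m := ∑ b, sm v w b * ⟪v b, u - w⟫ with hm
  have hZw := smZ_pos v w
  have key : Real.exp m * smZ v w ≤ smZ v u := by
    have h1 : ∀ b : Fin k, Real.exp m * (Real.exp ⟪v b, w⟫ * (1 + (⟪v b, u - w⟫ - m)))
        ≤ Real.exp ⟪v b, u⟫ := by
      intro b
      have : ⟪v b, u⟫ = ⟪v b, w⟫ + ⟪v b, u - w⟫ := by rw [inner_sub_right]; ring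
      rw [this, Real.exp_add]
      have h2 : Real.exp ⟪v b, u - w⟫ = Real.exp m * Real.exp (⟪v b, u - w⟫ - m) := by
        rw [← Real.exp_add]; ring_nf
      rw [h2]
      have h3 : (1 + (⟪v b, u - w⟫ - m)) ≤ Real.exp (⟪v b, u - w⟫ - m) := by
        have := Real.add_one_le_exp (⟪v b, u - w⟫ - m); linarith
      calc Real.exp m * (Real.exp ⟪v b, w⟫ * (1 + (⟪v b, u - w⟫ - m)))
          ≤ Real.exp m * (Real.exp ⟪v b, w⟫ * Real.exp (⟪v b, u - w⟫ - m)) := by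
            apply mul_le_mul_of_nonneg_left _ (Real.exp_pos m).le
            exact mul_le_mul_of_nonneg_left h3 (Real.exp_pos _).le
        _ = Real.exp ⟪v b, w⟫ * (Real.exp m * Real.exp (⟪v b, u - w⟫ - m)) := by ring
    have h4 : ∑ b, Real.exp m * (Real.exp ⟪v b, w⟫ * (1 + (⟪v b, u - w⟫ - m)))
        ≤ smZ v u := by
      rw [smZ]; exact Finset.sum_le_sum fun b _ => h1 b
    have h5 : ∑ b, Real.exp m * (Real.exp ⟪v b, w⟫ * (1 + (⟪v b, u - w⟫ - m)))
        = Real.exp m * smZ v w := by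
      have hsum : ∑ b, Real.exp ⟪v b, w⟫ * ⟪v b, u - w⟫ = smZ v w * m := by
        rw [hm, Finset.mul_sum]
        apply Finset.sum_congr rfl
        intro b _
        rw [sm]; field_simp
      rw [← Finset.mul_sum]
      congr 1
      have expand : ∀ b : Fin k, Real.exp ⟪v b, w⟫ * (1 + (⟪v b, u - w⟫ - m))
          = Real.exp ⟪v b, w⟫ + Real.exp ⟪v b, w⟫ * ⟪v b, u - w⟫ - m * Real.exp ⟪v b, w⟫ :=
        fun b => by ring
      rw [Finset.sum_congr rfl fun b _ => expand b, Finset.sum_sub_distrib,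
        Finset.sum_add_distrib, hsum, ← Finset.mul_sum, ← smZ]
      ring
    linarith
  calc m + Real.log (smZ v w) = Real.log (Real.exp m * smZ v w) := by
        rw [Real.log_mul (Real.exp_pos m).ne' hZw.ne', Real.log_exp]
    _ ≤ Real.log (smZ v u) := Real.log_le_log (by positivity) key

lemma log_sm_concave (v : Fin k → E D) (w u : E D) (a : Fin k) :
    Real.log (sm v u a) ≤ Real.log (sm v w a) + ⟪gradTok v w a, u - w⟫ := by
  have hg : ⟪gradTok v w a, u - w⟫ = ⟪v a, u - w⟫ - ∑ b, sm v w b * ⟪v b, u - w⟫ := by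
    rw [gradTok, inner_sub_left, sum_inner]
    simp [real_inner_smul_left, Finset.mul_sum, mul_assoc]
  have h1 := logZ_lower v w u
  have h2 : ⟪v a, u⟫ = ⟪v a, w⟫ + ⟪v a, u - w⟫ := by rw [inner_sub_right]; ring
  rw [log_sm, log_sm, hg, h2]
  linarith

lemma gradTok_norm (v : Fin k → E D) (w : E D) (a : Fin k) (hv : ∀ b, ‖v b‖ ≤ 1) :
    ‖gradTok v w a‖ ≤ 2 * (1 - sm v w a) := by
  have hrw : gradTok v w a = ∑ b, sm v w b • (v a - v b) := by
    rw [gradTok]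
    simp only [smul_sub, Finset.sum_sub_distrib, ← Finset.sum_smul, sm_sum, one_smul]
  rw [hrw]
  have h1 : ‖∑ b, sm v w b • (v a - v b)‖ ≤ ∑ b, sm v w b * ‖v a - v b‖ := by
    refine (norm_sum_le _ _).trans_eq ?_
    apply Finset.sum_congr rfl
    intro b _
    rw [norm_smul, Real.norm_eq_abs, abs_of_pos (sm_pos v w b)]
  refine h1.trans ?_
  rw [← Finset.add_sum_erase _ _ (Finset.mem_univ a), sub_self, norm_zero, mul_zero, zero_add]
  have h2 : ∑ b ∈ Finset.univ.erase a, sm v w b * ‖v a - v b‖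
      ≤ ∑ b ∈ Finset.univ.erase a, sm v w b * 2 := by
    apply Finset.sum_le_sum
    intro b _
    apply mul_le_mul_of_nonneg_left _ (sm_pos v w b).le
    calc ‖v a - v b‖ ≤ ‖v a‖ + ‖v b‖ := norm_sub_le _ _
      _ ≤ 2 := by have := hv a; have := hv b; linarith
  refine h2.trans ?_
  rw [← Finset.sum_mul]
  have h3 : ∑ b ∈ Finset.univ.erase a, sm v w b = 1 - sm v w a := by
    have := Finset.add_sum_erase Finset.univ (sm v w) (Finset.mem_univ a)
    rw [sm_sum] at this
    linarith
  rw [h3]; linarith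

lemma neg_log_sm_margin (v : Fin k → E D) (wstar : E D) (a : Fin k) (ρ γ : ℝ) (hρ : 0 ≤ ρ)
    (hmar : ∀ b : Fin k, b ≠ a → ⟪v b, wstar⟫ + γ ≤ ⟪v a, wstar⟫) :
    - Real.log (sm v (ρ • wstar) a) ≤ (k : ℝ) * Real.exp (-(ρ * γ)) := by
  set u := ρ • wstar
  have hlog : - Real.log (sm v u a) = Real.log (∑ b, Real.exp (⟪v b, u⟫ - ⟪v a, u⟫)) := by
    rw [log_sm]
    rw [show ∑ b, Real.exp (⟪v b, u⟫ - ⟪v a, u⟫) = smZ v u / Real.exp ⟪v a, u⟫ by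
      rw [smZ, Finset.sum_div]
      exact Finset.sum_congr rfl fun b _ => Real.exp_sub _ _]
    rw [Real.log_div (smZ_pos v u).ne' (Real.exp_pos _).ne', Real.log_exp]
    ring
  rw [hlog]
  have hsum_pos : (0:ℝ) < ∑ b, Real.exp (⟪v b, u⟫ - ⟪v a, u⟫) :=
    Finset.sum_pos (fun _ _ => Real.exp_pos _) Finset.univ_nonempty
  have hstep := Real.log_le_sub_one_of_pos hsum_pos
  refine hstep.trans ?_
  rw [← Finset.add_sum_erase _ _ (Finset.mem_univ a), sub_self, Real.exp_zero]
  have hterm : ∀ b ∈ Finset.univ.erase a, Real.exp (⟪v b, u⟫ - ⟪v a, u⟫)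
      ≤ Real.exp (-(ρ * γ)) := by
    intro b hb
    apply Real.exp_le_exp.2
    have hb' : b ≠ a := Finset.ne_of_mem_erase hb
    have h1 : ⟪v b, u⟫ = ρ * ⟪v b, wstar⟫ := real_inner_smul_right _ _ _
    have h2 : ⟪v a, u⟫ = ρ * ⟪v a, wstar⟫ := real_inner_smul_right _ _ _
    rw [h1, h2]
    have := hmar b hb'
    nlinarith
  have hcard : ∑ b ∈ Finset.univ.erase a, Real.exp (⟪v b, u⟫ - ⟪v a, u⟫)
      ≤ (k - 1 : ℝ) * Real.exp (-(ρ * γ)) := by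
    refine (Finset.sum_le_sum hterm).trans_eq ?_
    rw [Finset.sum_const, Finset.card_erase_of_mem (Finset.mem_univ a)]
    rw [nsmul_eq_mul, Finset.card_univ, Fintype.card_fin,
      Nat.cast_sub (Nat.one_le_iff_ne_zero.2 (NeZero.ne k)), Nat.cast_one]
  have hexp : (0:ℝ) < Real.exp (-(ρ * γ)) := Real.exp_pos _
  nlinarith [Nat.one_le_iff_ne_zero.2 (NeZero.ne k), hexp]

def vtok (φ : 𝒳 → List (Fin k) → E D) (x : 𝒳) (pre : List (Fin k)) : Fin k → E D :=
  fun b => φ x (pre ++ [b])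

lemma pTok_eq (φ : 𝒳 → List (Fin k) → E D) (w : E D) (x : 𝒳) (pre : List (Fin k)) (a : Fin k) :
    pTok φ w x pre a = sm (vtok φ x pre) w a := by
  simp only [pTok, sm, smZ, vtok, real_inner_comm]

lemma pref_succ (y : Fin N → Fin k) (i : ℕ) (hi : i < N) :
    pref y (i + 1) = pref y i ++ [y ⟨i, hi⟩] := by
  rw [pref, pref, List.take_succ]
  congr
  rw [List.getElem?_eq_getElem (by simpa using hi)]
  simp

lemma pref_length (y : Fin N → Fin k) (i : ℕ) (hi : i ≤ N) : (pref y i).length = i := by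
  simp [pref]; omega

def gSeq (φ : 𝒳 → List (Fin k) → E D) (x : 𝒳) (y : Fin N → Fin k) (w : E D) : E D :=
  ∑ i : Fin N, gradTok (vtok φ x (pref y i)) w (y i)

lemma pSeq_pos (φ : 𝒳 → List (Fin k) → E D) (w : E D) (x : 𝒳) (y : Fin N → Fin k) :
    0 < pSeq φ w x y :=
  Finset.prod_pos fun i _ => (pTok_eq φ w x _ _) ▸ sm_pos _ w (y i)

lemma pSeq_le_one (φ : 𝒳 → List (Fin k) → E D) (w : E D) (x : 𝒳) (y : Fin N → Fin k) :
    pSeq φ w x y ≤ 1 :=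
  Finset.prod_le_one (fun i _ => ((pTok_eq φ w x _ _) ▸ sm_pos _ w (y i)).le)
    (fun i _ => (pTok_eq φ w x _ _) ▸ sm_le_one _ w (y i))

lemma neg_log_pSeq_nonneg (φ : 𝒳 → List (Fin k) → E D) (w : E D) (x : 𝒳) (y : Fin N → Fin k) :
    0 ≤ - Real.log (pSeq φ w x y) := by
  have := Real.log_nonpos (pSeq_pos φ w x y).le (pSeq_le_one φ w x y)
  linarith

lemma log_pSeq (φ : 𝒳 → List (Fin k) → E D) (w : E D) (x : 𝒳) (y : Fin N → Fin k) :
    Real.log (pSeq φ w x y) = ∑ i : Fin N, Real.log (sm (vtok φ x (pref y i)) w (y i)) := by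
  rw [pSeq, Real.log_prod]
  · exact Finset.sum_congr rfl fun i _ => by rw [pTok_eq]
  · exact fun i _ => ((pTok_eq φ w x _ _) ▸ sm_pos _ w (y i)).ne'

lemma hasGradientAt_log_pSeq (φ : 𝒳 → List (Fin k) → E D) (x : 𝒳) (y : Fin N → Fin k)
    (w : E D) : HasGradientAt (fun w => Real.log (pSeq φ w x y)) (gSeq φ x y w) w := by
  have funeq : (fun w => Real.log (pSeq φ w x y))
      = fun w => ∑ i : Fin N, Real.log (sm (vtok φ x (pref y i)) w (y i)) :=
    funext fun w => log_pSeq φ w x y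
  rw [funeq, hasGradientAt_iff_hasFDerivAt]
  have h := HasFDerivAt.fun_sum (fun (i : Fin N) (_ : i ∈ Finset.univ) =>
    (hasGradientAt_log_sm (vtok φ x (pref y i)) w (y i)).hasFDerivAt)
  convert h using 1
  all_goals try rfl
  rw [gSeq, map_sum]

lemma log_pSeq_concave (φ : 𝒳 → List (Fin k) → E D) (x : 𝒳) (y : Fin N → Fin k)
    (w u : E D) :
    Real.log (pSeq φ u x y) ≤ Real.log (pSeq φ w x y) + ⟪gSeq φ x y w, u - w⟫ := by
  rw [log_pSeq, log_pSeq, gSeq, sum_inner, ← Finset.sum_add_distrib]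
  exact Finset.sum_le_sum fun i _ => log_sm_concave _ w u (y i)

lemma gSeq_norm (φ : 𝒳 → List (Fin k) → E D) (x : 𝒳) (y : Fin N → Fin k) (w : E D)
    (hφ : ∀ l : List (Fin k), l ≠ [] → l.length ≤ N → ‖φ x l‖ ≤ 1) :
    ‖gSeq φ x y w‖ ≤ 2 * (- Real.log (pSeq φ w x y)) := by
  have hv : ∀ i : Fin N, ∀ b, ‖vtok φ x (pref y i) b‖ ≤ 1 := by
    intro i b
    apply hφ _ (by simp [vtok]) _
    show (pref y ↑i ++ [b]).length ≤ N
    rw [List.length_append, pref_length y i i.2.le]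
    exact i.2
  rw [log_pSeq]
  calc ‖gSeq φ x y w‖ ≤ ∑ i : Fin N, ‖gradTok (vtok φ x (pref y i)) w (y i)‖ :=
        norm_sum_le _ _
    _ ≤ ∑ i : Fin N, 2 * (- Real.log (sm (vtok φ x (pref y i)) w (y i))) := by
        apply Finset.sum_le_sum
        intro i _
        refine (gradTok_norm _ w (y i) (hv i)).trans ?_
        have h1 : Real.log (sm (vtok φ x (pref y i)) w (y i))
            ≤ sm (vtok φ x (pref y i)) w (y i) - 1 :=
          Real.log_le_sub_one_of_pos (sm_pos _ w (y i))
        linarith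
    _ = 2 * (- ∑ i : Fin N, Real.log (sm (vtok φ x (pref y i)) w (y i))) := by
        simp [Finset.mul_sum]

lemma pSeq_margin (φ : 𝒳 → List (Fin k) → E D) (x : 𝒳) (ys : Fin N → Fin k)
    (wstar : E D) (ρ γ : ℝ) (hρ : 0 ≤ ρ)
    (hmar : ∀ i : Fin N, ∀ a : Fin k, a ≠ ys i →
      ⟪wstar, φ x (pref ys ((i : ℕ) + 1))⟫ ≥ ⟪wstar, φ x (pref ys (i : ℕ) ++ [a])⟫ + γ) :
    - Real.log (pSeq φ (ρ • wstar) x ys) ≤ (N : ℝ) * k * Real.exp (-(ρ * γ)) := by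
  rw [log_pSeq, ← Finset.sum_neg_distrib]
  have htok : ∀ i : Fin N,
      - Real.log (sm (vtok φ x (pref ys i)) (ρ • wstar) (ys i))
        ≤ (k : ℝ) * Real.exp (-(ρ * γ)) := by
    intro i
    apply neg_log_sm_margin _ wstar (ys i) ρ γ hρ
    intro b hb
    have := hmar i b hb
    have hps : pref ys ((i : ℕ) + 1) = pref ys (i : ℕ) ++ [ys i] := by
      rw [pref_succ ys i i.2]
    rw [hps] at this
    have e1 : ⟪vtok φ x (pref ys ↑i) b, wstar⟫ = ⟪wstar, φ x (pref ys ↑i ++ [b])⟫ :=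
      real_inner_comm _ _
    have e2 : ⟪vtok φ x (pref ys ↑i) (ys i), wstar⟫ = ⟪wstar, φ x (pref ys ↑i ++ [ys i])⟫ :=
      real_inner_comm _ _
    rw [e1, e2]
    linarith
  calc ∑ i : Fin N, - Real.log (sm (vtok φ x (pref ys i)) (ρ • wstar) (ys i))
      ≤ ∑ _i : Fin N, (k : ℝ) * Real.exp (-(ρ * γ)) :=
        Finset.sum_le_sum fun i _ => htok i
    _ = (N : ℝ) * k * Real.exp (-(ρ * γ)) := by
        rw [Finset.sum_const, Finset.card_univ, Fintype.card_fin, nsmul_eq_mul]; ring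

lemma eta_ell (lam ℓ G : ℝ) (hlam : 0 < lam) (hℓ : 0 ≤ ℓ) (hG0 : 0 ≤ G) (hG : G ≤ 2*ℓ) :
    min (lam/2) ℓ / (4*lam) ≤ (2*(lam+G))⁻¹ * ℓ := by
  have hpos : 0 < lam + G := by linarith
  rw [inv_mul_eq_div]
  rcases le_total ℓ (lam/2) with h | h
  · rw [min_eq_right h, div_le_div_iff₀ (by linarith) (by linarith)]
    nlinarith
  · rw [min_eq_left h, div_le_div_iff₀ (by linarith) (by linarith)]
    nlinarith

lemma descent_step {D : ℕ} (w u g : E D) (ℓ ε lam : ℝ) (hlam : 0 < lam) (hε : 0 ≤ ε)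
    (hℓ : 0 ≤ ℓ) (hkey : ℓ - ε ≤ ⟪g, u - w⟫) (hgn : ‖g‖ ≤ 2*ℓ) :
    ‖(w + (2*(lam+‖g‖))⁻¹ • ((1:ℝ) • g)) - u‖^2
      ≤ ‖w - u‖^2 - min (lam/2) ℓ / (4*lam) + ε/lam := by
  set G := ‖g‖ with hGdef
  have hG0 : 0 ≤ G := norm_nonneg g
  have hpos : 0 < lam + G := by linarith
  set η := (2*(lam+G))⁻¹ with hη
  have hη0 : 0 < η := by positivity
  have hrw : (w + η • ((1:ℝ) • g)) - u = (w - u) + η • g := by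
    rw [one_smul]; abel
  rw [hrw]
  have hexp : ‖(w - u) + η • g‖^2 = ‖w - u‖^2 + 2 * (η * ⟪w - u, g⟫) + η^2 * G^2 := by
    rw [norm_add_sq_real, real_inner_smul_right, norm_smul, Real.norm_eq_abs,
      abs_of_pos hη0, mul_pow]
  rw [hexp]
  have hinner : ⟪w - u, g⟫ ≤ ε - ℓ := by
    have : ⟪w - u, g⟫ = - ⟪g, u - w⟫ := by
      rw [real_inner_comm, ← inner_neg_right]; congr 1; abel
    rw [this]; linarith
  have hηG : η * G ≤ 1/2 := by
    rw [hη]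
    rw [inv_mul_le_iff₀ (by positivity)]
    nlinarith
  have h2 : η^2 * G^2 ≤ η * ℓ := by
    have hq : η^2 * G^2 = (η*G)*(η*G) := by ring
    rw [hq]
    have h3 : η * G ≤ η * (2*ℓ) := by
      apply mul_le_mul_of_nonneg_left hgn hη0.le
    calc (η*G)*(η*G) ≤ (1/2) * (η*(2*ℓ)) :=
          mul_le_mul hηG h3 (mul_nonneg hη0.le hG0) (by norm_num)
      _ = η * ℓ := by ring
  have h4 : min (lam/2) ℓ / (4*lam) ≤ η * ℓ := eta_ell lam ℓ G hlam hℓ hG0 hgn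
  have h5 : 2 * (η * ε) ≤ ε / lam := by
    rw [div_eq_inv_mul]
    have h6 : (2*(lam+G))⁻¹ ≤ (2*lam)⁻¹ := by
      apply inv_anti₀ (by linarith) (by linarith)
    calc 2*(η*ε) ≤ 2*((2*lam)⁻¹*ε) := by
          have := mul_le_mul_of_nonneg_right h6 hε
          rw [hη]; nlinarith
      _ = lam⁻¹ * ε := by rw [mul_inv]; ring
  nlinarith [mul_le_mul_of_nonneg_left hinner (by linarith : (0:ℝ) ≤ 2*η)]

/-- One PG-OR update step. -/
lemma onestep (φ : 𝒳 → List (Fin k) → E D) (xt : 𝒳) (ys yd : Fin N → Fin k)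
    (w u : E D) (lam ε : ℝ) (hlam : 0 < lam) (hε : 0 ≤ ε)
    (hmargu : - Real.log (pSeq φ u xt ys) ≤ ε)
    (hφ : ∀ l : List (Fin k), l ≠ [] → l.length ≤ N → ‖φ xt l‖ ≤ 1) :
    ‖(w + (2*(lam+‖gSeq φ xt yd w‖))⁻¹ •
        ((if yd = ys then (1:ℝ) else 0) • gSeq φ xt yd w)) - u‖^2
      ≤ ‖w - u‖^2 + (if yd = ys then
          (- (min (lam/2) (- Real.log (pSeq φ w xt ys)) / (4*lam)) + ε/lam) else 0) := by
  by_cases hyd : yd = ys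
  · subst hyd
    rw [show (if yd = yd then (1:ℝ) else 0) = 1 from if_pos rfl,
      show (if yd = yd then
          (- (min (lam/2) (- Real.log (pSeq φ w xt yd)) / (4*lam)) + ε/lam) else 0)
        = - (min (lam/2) (- Real.log (pSeq φ w xt yd)) / (4*lam)) + ε/lam from if_pos rfl]
    have hkey : - Real.log (pSeq φ w xt yd) - ε ≤ ⟪gSeq φ xt yd w, u - w⟫ := by
      have := log_pSeq_concave φ xt yd w u
      linarith
    have h := descent_step w u (gSeq φ xt yd w) (- Real.log (pSeq φ w xt yd)) ε lam hlam hε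
      (neg_log_pSeq_nonneg φ w xt yd) hkey (gSeq_norm φ xt yd w hφ)
    linarith
  · simp only [if_neg hyd, zero_smul, smul_zero, add_zero, le_refl]

/-- PG-OR iterates as a function of the history of draws. -/
def wit (φ : 𝒳 → List (Fin k) → E D) (x : ℕ → 𝒳) (ystar : 𝒳 → Fin N → Fin k)
    (lam : ℝ) (w0 : E D) : (t : ℕ) → (Fin t → (Fin N → Fin k)) → E D
  | 0, _ => w0
  | (t+1), h =>
      wit φ x ystar lam w0 t (fun s => h s.castSucc) +
        (2*(lam + ‖gSeq φ (x t) (h (Fin.last t))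
            (wit φ x ystar lam w0 t (fun s => h s.castSucc))‖))⁻¹ •
        ((if h (Fin.last t) = ystar (x t) then (1:ℝ) else 0) •
          gSeq φ (x t) (h (Fin.last t)) (wit φ x ystar lam w0 t (fun s => h s.castSucc)))

def mu (Ω : Type*) [MeasurableSpace Ω] (P : MeasureTheory.Measure Ω) {V : Type*}
    (Y : ℕ → Ω → V) (t : ℕ) (h : Fin t → V) : ℝ :=
  (P {ω | ∀ s : Fin t, Y ↑s ω = h s}).toReal

lemma sum_snoc {V : Type*} [Fintype V] (n : ℕ) (f : (Fin (n+1) → V) → ℝ) :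
    ∑ h : Fin (n+1) → V, f h = ∑ p : V × (Fin n → V), f (Fin.snoc p.2 p.1) :=
  (Fintype.sum_equiv (Fin.snocEquiv (fun _ => V)) _ _ (fun p => by
    congr 1)).symm

end PGORAux
set_option maxHeartbeats 1600000 in
/-- (Proposition: online PG with outcome reward and adaptive learning
rate `η_t = 1/(2(λ + ‖∇ log p_{w_t}(y^{(t)}|x^{(t)})‖))` on an arbitrary, possibly
adversarial, sequence of contexts satisfying the γ-margin inequalities with a common unit
vector `w*`).  The behavior policy at round `t` is an arbitrary function `q t` of the past
draws; conditionally on the history the draw `Y t` has law `q t`.  Then the expected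
average of `q_t(y*(x^{(t)})|x^{(t)}) · min(λ/2, −log p_{w_t}(y*(x^{(t)})|x^{(t)}))` is at
most `20 λ (log(N k T γ²/λ))² / (γ² T)`. -/
theorem pg_or_adaptive_lr_online
    (𝒳 : Type) (D k N T : ℕ) (hk : 2 ≤ k) (hN : 1 ≤ N) (hD : 1 ≤ D) (hT : 1 ≤ T)
    (φ : 𝒳 → List (Fin k) → EuclideanSpace ℝ (Fin D))
    (x : ℕ → 𝒳) (ystar : 𝒳 → Fin N → Fin k) (γ lam : ℝ) (hγ : 0 < γ) (hlam : 0 < lam)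
    -- γ-margin inequalities along the sequence, with a common unit vector
    (hmargin : ∃ wstar : EuclideanSpace ℝ (Fin D), ‖wstar‖ = 1 ∧
      ∀ t : Fin T, ∀ i : Fin N, ∀ a : Fin k, a ≠ ystar (x t) i →
        ⟪wstar, φ (x t) (pref (ystar (x t)) ((i : ℕ) + 1))⟫ ≥
          ⟪wstar, φ (x t) (pref (ystar (x t)) (i : ℕ) ++ [a])⟫ + γ)
    (hφnorm : ∀ x' : 𝒳, ∀ l : List (Fin k), l ≠ [] → l.length ≤ N → ‖φ x' l‖ ≤ 1)
    (hscale : Real.exp 1 ≤ (N : ℝ) * k * T * γ ^ 2 / lam)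
    -- behavior policies: arbitrary functions of the history of past draws
    (q : (t : ℕ) → (Fin t → (Fin N → Fin k)) → (Fin N → Fin k) → ℝ)
    (hq0 : ∀ t h y, 0 ≤ q t h y) (hq1 : ∀ t h, ∑ y : Fin N → Fin k, q t h y = 1)
    -- probability space carrying the draws
    (Ω : Type) [MeasurableSpace Ω] (P : Measure Ω) [IsProbabilityMeasure P]
    (Y : ℕ → Ω → (Fin N → Fin k)) (hYm : ∀ t, Measurable (Y t))
    -- conditional law of `Y t` given the history equals `q t`
    (hYlaw : ∀ t < T, ∀ (h : Fin t → (Fin N → Fin k)) (y : Fin N → Fin k),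
      P {ω | (∀ s : Fin t, Y s ω = h s) ∧ Y t ω = y} =
        ENNReal.ofReal (q t h y) * P {ω | ∀ s : Fin t, Y s ω = h s})
    -- PG-OR iterates
    (w0 : EuclideanSpace ℝ (Fin D))
    (hw0 : ‖w0‖ ≤ γ⁻¹ * Real.log ((N : ℝ) * k * T * γ ^ 2 / lam))
    (W : Ω → ℕ → EuclideanSpace ℝ (Fin D))
    (hW0 : ∀ ω, W ω 0 = w0)
    (hWrec : ∀ ω, ∀ t : Fin T,
      W ω ((t : ℕ) + 1) = W ω (t : ℕ) +
        (2 * (lam + ‖gradient (fun w => Real.log (pSeq φ w (x t) (Y t ω)))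
            (W ω (t : ℕ))‖))⁻¹ •
        ((if Y t ω = ystar (x t) then (1 : ℝ) else 0) •
          gradient (fun w => Real.log (pSeq φ w (x t) (Y t ω))) (W ω (t : ℕ)))) :
    ∫ ω, (1 / (T : ℝ)) * ∑ t : Fin T,
        (q (t : ℕ) (fun s : Fin (t : ℕ) => Y s ω) (ystar (x t)) *
          min (lam / 2) (- Real.log (pSeq φ (W ω (t : ℕ)) (x t) (ystar (x t))))) ∂P ≤
      20 * lam * (Real.log ((N : ℝ) * k * T * γ ^ 2 / lam)) ^ 2 / (γ ^ 2 * T) := by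
  classical
  haveI : NeZero k := ⟨by omega⟩
  obtain ⟨wstar, hws, hmar⟩ := hmargin
  have hT0 : (0:ℝ) < T := by exact_mod_cast hT
  have hN0 : (0:ℝ) < N := by exact_mod_cast hN
  have hk0 : (0:ℝ) < k := by positivity
  have hγ2 : (0:ℝ) < γ^2 := by positivity
  have hA0 : (0:ℝ) < (N:ℝ)*k*T*γ^2/lam := lt_of_lt_of_le (Real.exp_pos 1) hscale
  set L := Real.log ((N:ℝ)*k*T*γ^2/lam) with hLdef
  have hL1 : 1 ≤ L := by
    rw [hLdef, ← Real.log_exp 1]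
    exact Real.log_le_log (Real.exp_pos 1) hscale
  set ρ := γ⁻¹ * L with hρdef
  have hρ0 : 0 ≤ ρ := mul_nonneg (inv_nonneg.2 hγ.le) (by linarith)
  set u : EuclideanSpace ℝ (Fin D) := ρ • wstar with hudef
  set ε := lam / ((T:ℝ)*γ^2) with hεdef
  have hε0 : 0 ≤ ε := by positivity
  have hεeq : (N:ℝ)*k*Real.exp (-(ρ*γ)) = ε := by
    have hrg : ρ * γ = L := by rw [hρdef]; field_simp
    rw [hrg, hLdef, Real.exp_neg, Real.exp_log hA0, hεdef]
    field_simp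
  have hmargu : ∀ t : Fin T, - Real.log (pSeq φ u (x t) (ystar (x t))) ≤ ε := by
    intro t
    have := PGORAux.pSeq_margin φ (x t) (ystar (x t)) wstar ρ γ hρ0 (hmar t)
    rw [hεeq] at this
    exact this
  -- the iterates as a function of the history
  have hwit : ∀ ω, ∀ t, t ≤ T →
      W ω t = PGORAux.wit φ x ystar lam w0 t (fun s : Fin t => Y ↑s ω) := by
    intro ω t
    induction t with
    | zero => intro _; rw [hW0]; rfl
    | succ t ih =>
      intro ht
      have htT : t < T := by omega
      have hrec := hWrec ω ⟨t, htT⟩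
      have hgr := (PGORAux.hasGradientAt_log_pSeq φ (x t) (Y t ω)
        (W ω t)).gradient
      rw [hgr] at hrec
      rw [hrec, ih (by omega)]
      rfl
  -- events and their probabilities
  have hEv : ∀ (t : ℕ) (h : Fin t → Fin N → Fin k),
      MeasurableSet {ω | ∀ s : Fin t, Y ↑s ω = h s} := by
    intro t h
    have : {ω | ∀ s : Fin t, Y ↑s ω = h s} = ⋂ s : Fin t, (Y ↑s)⁻¹' {h s} := by
      ext ω; simp [Set.mem_iInter]
    rw [this]
    exact MeasurableSet.iInter fun s => (hYm ↑s) (measurableSet_singleton _)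
  set μ : (t : ℕ) → (Fin t → Fin N → Fin k) → ℝ := PGORAux.mu Ω P Y with hμdef
  have hμnn : ∀ t h, 0 ≤ μ t h := fun t h => ENNReal.toReal_nonneg
  have hμzero : ∀ h : Fin 0 → Fin N → Fin k, μ 0 h = 1 := by
    intro h
    have he : {ω | ∀ s : Fin 0, Y ↑s ω = h s} = Set.univ := by
      ext ω; simp
    show (P {ω | ∀ s : Fin 0, Y ↑s ω = h s}).toReal = 1
    rw [he, measure_univ, ENNReal.toReal_one]
  have hμfac : ∀ t, t < T → ∀ h : Fin (t+1) → Fin N → Fin k,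
      μ (t+1) h = q t (fun s => h s.castSucc) (h (Fin.last t)) *
        μ t (fun s => h s.castSucc) := by
    intro t htT h
    have hlaw := hYlaw t htT (fun s => h s.castSucc) (h (Fin.last t))
    have hevE : {ω | (∀ s : Fin t, Y ↑s ω = h s.castSucc) ∧ Y t ω = h (Fin.last t)}
        = {ω | ∀ s : Fin (t+1), Y ↑s ω = h s} := by
      ext ω
      simp only [Set.mem_setOf_eq]
      constructor
      · rintro ⟨ha, hb⟩ s
        refine Fin.lastCases ?_ ?_ s
        · exact hb
        · intro j; exact ha j
      · intro hall
        exact ⟨fun j => hall j.castSucc, hall (Fin.last t)⟩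
    rw [hevE] at hlaw
    show (P {ω | ∀ s : Fin (t+1), Y ↑s ω = h s}).toReal = _ * (P _).toReal
    rw [hlaw, ENNReal.toReal_mul, ENNReal.toReal_ofReal (hq0 _ _ _)]
  have hμsum : ∀ t, t ≤ T → ∑ h : Fin t → Fin N → Fin k, μ t h = 1 := by
    intro t
    induction t with
    | zero =>
      intro _
      rw [Fintype.sum_eq_single (fun s : Fin 0 => s.elim0) (fun h hne => by
        exact absurd (funext fun s => s.elim0) hne)]
      exact hμzero _
    | succ t ih =>
      intro ht
      have htT : t < T := by omega
      rw [PGORAux.sum_snoc t (μ (t+1))]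
      have hterm : ∀ p : (Fin N → Fin k) × (Fin t → Fin N → Fin k),
          μ (t+1) (Fin.snoc p.2 p.1) = q t p.2 p.1 * μ t p.2 := by
        intro p
        rw [hμfac t htT]
        congr 1
        · congr 1
          · funext s; rw [Fin.snoc_castSucc]
          · rw [Fin.snoc_last]
        · congr 1; funext s; rw [Fin.snoc_castSucc]
      rw [Finset.sum_congr rfl fun p _ => hterm p, Fintype.sum_prod_type_right]
      have hinner : ∀ hh : Fin t → Fin N → Fin k,
          ∑ yv : Fin N → Fin k, q t hh yv * μ t hh = μ t hh := by
        intro hh; rw [← Finset.sum_mul, hq1, one_mul]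
      rw [Finset.sum_congr rfl fun hh _ => hinner hh]
      exact ih (by omega)
  -- marginalization
  have hmarg : ∀ (t : ℕ) (f : (Fin t → Fin N → Fin k) → ℝ) (m : ℕ) (htm : t ≤ m), m ≤ T →
      ∑ h : Fin m → Fin N → Fin k, μ m h * f (fun s : Fin t => h (Fin.castLE htm s))
        = ∑ h : Fin t → Fin N → Fin k, μ t h * f h := by
    intro t f m htm
    induction m, htm using Nat.le_induction with
    | base => intro _; rfl
    | succ m htm ih =>
      intro hm
      have hmT : m < T := by omega
      rw [PGORAux.sum_snoc m]
      have hterm : ∀ p : (Fin N → Fin k) × (Fin m → Fin N → Fin k),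
          μ (m+1) (Fin.snoc p.2 p.1) *
            f (fun s : Fin t => (Fin.snoc p.2 p.1 : Fin (m+1) → Fin N → Fin k)
              (Fin.castLE (le_trans htm (Nat.le_succ m)) s))
          = q m p.2 p.1 * (μ m p.2 * f (fun s : Fin t => p.2 (Fin.castLE htm s))) := by
        intro p
        have h1 : μ (m+1) (Fin.snoc p.2 p.1) = q m p.2 p.1 * μ m p.2 := by
          rw [hμfac m hmT]
          congr 1
          · congr 1
            · funext s; rw [Fin.snoc_castSucc]
            · rw [Fin.snoc_last]
          · congr 1; funext s; rw [Fin.snoc_castSucc]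
        have h2 : (fun s : Fin t => (Fin.snoc p.2 p.1 : Fin (m+1) → Fin N → Fin k)
              (Fin.castLE (le_trans htm (Nat.le_succ m)) s))
            = (fun s : Fin t => p.2 (Fin.castLE htm s)) := by
          funext s
          have hcast : (Fin.castLE (le_trans htm (Nat.le_succ m)) s : Fin (m+1))
              = (Fin.castLE htm s).castSucc := by
            apply Fin.ext; rfl
          rw [hcast, Fin.snoc_castSucc]
        rw [h1, h2]; ring
      rw [Finset.sum_congr rfl fun p _ => hterm p, Fintype.sum_prod_type_right]
      have hinner : ∀ hh : Fin m → Fin N → Fin k,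
          ∑ yv : Fin N → Fin k,
            q m hh yv * (μ m hh * f (fun s : Fin t => hh (Fin.castLE htm s)))
            = μ m hh * f (fun s : Fin t => hh (Fin.castLE htm s)) := by
        intro hh; rw [← Finset.sum_mul, hq1, one_mul]
      rw [Finset.sum_congr rfl fun hh _ => hinner hh]
      exact ih (by omega)
  -- abbreviations
  set wf := PGORAux.wit φ x ystar lam w0 with hwf
  set Φ : (t : ℕ) → (Fin t → Fin N → Fin k) → ℝ :=
    fun t h => ‖wf t h - u‖^2 with hΦ
  set ℓf : (t : ℕ) → (Fin t → Fin N → Fin k) → ℝ :=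
    fun t h => - Real.log (pSeq φ (wf t h) (x t) (ystar (x t))) with hℓf
  set c : (t : ℕ) → (Fin t → Fin N → Fin k) → ℝ :=
    fun t h => q t h (ystar (x t)) * min (lam/2) (ℓf t h) with hc
  set C : ℕ → ℝ := fun t => ∑ h : Fin t → Fin N → Fin k, μ t h * c t h with hC
  -- pointwise descent
  have hpoint : ∀ t, t < T → ∀ (h : Fin t → Fin N → Fin k) (yv : Fin N → Fin k),
      Φ (t+1) (Fin.snoc h yv) ≤ Φ t h +
        (if yv = ystar (x t) then
          (- (min (lam/2) (ℓf t h) / (4*lam)) + ε/lam) else 0) := by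
    intro t htT h yv
    have e1 : (fun s : Fin t => (Fin.snoc h yv : Fin (t+1) → Fin N → Fin k) s.castSucc) = h :=
      funext fun s => Fin.snoc_castSucc _ _ _
    have e2 : (Fin.snoc h yv : Fin (t+1) → Fin N → Fin k) (Fin.last t) = yv :=
      Fin.snoc_last _ _
    have hsn : wf (t+1) (Fin.snoc h yv) = wf t h +
        (2*(lam + ‖PGORAux.gSeq φ (x t) yv (wf t h)‖))⁻¹ •
        ((if yv = ystar (x t) then (1:ℝ) else 0) • PGORAux.gSeq φ (x t) yv (wf t h)) := by
      rw [hwf]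
      show PGORAux.wit φ x ystar lam w0 (t+1) (Fin.snoc h yv) = _
      rw [PGORAux.wit, e1, e2]
    rw [hΦ]
    show ‖wf (t+1) (Fin.snoc h yv) - u‖^2 ≤ _
    rw [hsn]
    exact PGORAux.onestep φ (x t) (ystar (x t)) yv (wf t h) u lam ε hlam hε0
      (hmargu ⟨t, htT⟩) (hφnorm (x t))
  -- q(y*) ≤ 1
  have hqle1 : ∀ t (h : Fin t → Fin N → Fin k), q t h (ystar (x t)) ≤ 1 := by
    intro t h
    rw [← hq1 t h]
    exact Finset.single_le_sum (fun yv _ => hq0 t h yv) (Finset.mem_univ _)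
  -- one expected step
  have hstep : ∀ t, t < T →
      ∑ h : Fin (t+1) → Fin N → Fin k, μ (t+1) h * Φ (t+1) h
        ≤ (∑ h : Fin t → Fin N → Fin k, μ t h * Φ t h) - (1/(4*lam)) * C t + ε/lam := by
    intro t htT
    rw [PGORAux.sum_snoc t]
    have hfac : ∀ p : (Fin N → Fin k) × (Fin t → Fin N → Fin k),
        μ (t+1) (Fin.snoc p.2 p.1) * Φ (t+1) (Fin.snoc p.2 p.1)
        = q t p.2 p.1 * μ t p.2 * Φ (t+1) (Fin.snoc p.2 p.1) := by
      intro p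
      congr 1
      rw [hμfac t htT]
      congr 1
      · congr 1
        · funext s; rw [Fin.snoc_castSucc]
        · rw [Fin.snoc_last]
      · congr 1; funext s; rw [Fin.snoc_castSucc]
    rw [Finset.sum_congr rfl fun p _ => hfac p, Fintype.sum_prod_type_right]
    have hrow : ∀ h : Fin t → Fin N → Fin k,
        ∑ yv : Fin N → Fin k, q t h yv * μ t h * Φ (t+1) (Fin.snoc h yv)
          ≤ μ t h * Φ t h - (1/(4*lam)) * (μ t h * c t h) + μ t h * (ε/lam) := by
      intro h
      have hbd : ∑ yv : Fin N → Fin k, q t h yv * μ t h * Φ (t+1) (Fin.snoc h yv)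
          ≤ ∑ yv : Fin N → Fin k, q t h yv * μ t h *
            (Φ t h + (if yv = ystar (x t) then
              (- (min (lam/2) (ℓf t h) / (4*lam)) + ε/lam) else 0)) := by
        apply Finset.sum_le_sum
        intro yv _
        exact mul_le_mul_of_nonneg_left (hpoint t htT h yv)
          (mul_nonneg (hq0 t h yv) (hμnn t h))
      refine hbd.trans ?_
      have hsplit : ∑ yv : Fin N → Fin k, q t h yv * μ t h *
          (Φ t h + (if yv = ystar (x t) then
            (- (min (lam/2) (ℓf t h) / (4*lam)) + ε/lam) else 0))
          = μ t h * Φ t h + q t h (ystar (x t)) * μ t h *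
              (- (min (lam/2) (ℓf t h) / (4*lam)) + ε/lam) := by
        have expand : ∀ yv : Fin N → Fin k, q t h yv * μ t h *
            (Φ t h + (if yv = ystar (x t) then
              (- (min (lam/2) (ℓf t h) / (4*lam)) + ε/lam) else 0))
            = q t h yv * (μ t h * Φ t h) +
              (if yv = ystar (x t) then
                q t h yv * μ t h * (- (min (lam/2) (ℓf t h) / (4*lam)) + ε/lam) else 0) := by
          intro yv
          by_cases hy : yv = ystar (x t)
          · rw [if_pos hy, if_pos hy]; ring
          · rw [if_neg hy, if_neg hy]; ring
        rw [Finset.sum_congr rfl fun yv _ => expand yv, Finset.sum_add_distrib,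
          ← Finset.sum_mul, hq1, one_mul, Finset.sum_ite_eq' Finset.univ (ystar (x t))]
        rw [if_pos (Finset.mem_univ _)]
      rw [hsplit]
      have hmin0 : 0 ≤ min (lam/2) (ℓf t h) := by
        apply le_min (by linarith)
        rw [hℓf]
        exact PGORAux.neg_log_pSeq_nonneg φ (wf t h) (x t) (ystar (x t))
      have hq0' := hq0 t h (ystar (x t))
      have hq1' := hqle1 t h
      have hμ' := hμnn t h
      have hc' : c t h = q t h (ystar (x t)) * min (lam/2) (ℓf t h) := rfl
      rw [hc']
      have h1 : q t h (ystar (x t)) * μ t h *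
          (- (min (lam/2) (ℓf t h) / (4*lam)) + ε/lam)
          = - (1/(4*lam)) * (μ t h * (q t h (ystar (x t)) * min (lam/2) (ℓf t h)))
            + q t h (ystar (x t)) * μ t h * (ε/lam) := by ring
      rw [h1]
      have h2 : q t h (ystar (x t)) * μ t h * (ε/lam) ≤ μ t h * (ε/lam) := by
        have hεl : 0 ≤ ε/lam := by positivity
        nlinarith [mul_nonneg (mul_nonneg (sub_nonneg.2 hq1') hμ') hεl]
      linarith
    calc ∑ h : Fin t → Fin N → Fin k,
          ∑ yv : Fin N → Fin k, q t h yv * μ t h * Φ (t+1) (Fin.snoc h yv)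
        ≤ ∑ h : Fin t → Fin N → Fin k,
            (μ t h * Φ t h - (1/(4*lam)) * (μ t h * c t h) + μ t h * (ε/lam)) :=
          Finset.sum_le_sum fun h _ => hrow h
      _ = (∑ h : Fin t → Fin N → Fin k, μ t h * Φ t h) - (1/(4*lam)) * C t + ε/lam := by
          rw [Finset.sum_add_distrib, Finset.sum_sub_distrib, ← Finset.mul_sum,
            ← Finset.sum_mul, hμsum t (by omega), one_mul, hC]
  -- telescoping
  have htel : ∀ t, t ≤ T →
      (∑ h : Fin t → Fin N → Fin k, μ t h * Φ t h)
        + (1/(4*lam)) * ∑ s ∈ Finset.range t, C s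
      ≤ ‖w0 - u‖^2 + t * (ε/lam) := by
    intro t
    induction t with
    | zero =>
      intro _
      have hB0 : ∑ h : Fin 0 → Fin N → Fin k, μ 0 h * Φ 0 h = ‖w0 - u‖^2 := by
        rw [Fintype.sum_unique (fun h : Fin 0 → Fin N → Fin k => μ 0 h * Φ 0 h)]
        rw [hμzero _, one_mul]
        rfl
      rw [hB0, Finset.sum_range_zero, mul_zero, add_zero, Nat.cast_zero, zero_mul, add_zero]
    | succ t ih =>
      intro ht
      have htT : t < T := by omega
      have h1 := hstep t htT
      have h2 := ih (by omega)
      rw [Finset.sum_range_succ]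
      push_cast
      linarith [h1, h2]
  -- final sum bound
  have hBTnn : 0 ≤ ∑ h : Fin T → Fin N → Fin k, μ T h * Φ T h :=
    Finset.sum_nonneg fun h _ => mul_nonneg (hμnn T h) (pow_two_nonneg ‖wf T h - u‖)
  have hw0u : ‖w0 - u‖^2 ≤ 4*L^2/γ^2 := by
    have hnu : ‖u‖ = ρ := by
      rw [hudef, norm_smul, hws, mul_one, Real.norm_eq_abs, abs_of_nonneg hρ0]
    have h1 : ‖w0 - u‖ ≤ 2*ρ := by
      have h2 := norm_sub_le w0 u
      rw [hnu] at h2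
      have hw0' : ‖w0‖ ≤ ρ := by rw [hρdef]; exact hw0
      linarith
    have h2 : ‖w0 - u‖^2 ≤ (2*ρ)^2 := by
      apply pow_le_pow_left₀ (norm_nonneg _) h1
    have h3 : (2*ρ)^2 = 4*L^2/γ^2 := by
      rw [hρdef]; field_simp; ring
    linarith
  have hSfin : ∑ s ∈ Finset.range T, C s ≤ 16*lam*L^2/γ^2 + 4*(T:ℝ)*ε := by
    have h1 := htel T le_rfl
    have h2 : (1/(4*lam)) * ∑ s ∈ Finset.range T, C s ≤ 4*L^2/γ^2 + (T:ℝ)*(ε/lam) := by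
      linarith
    have h3 : ∑ s ∈ Finset.range T, C s
        = (4*lam) * ((1/(4*lam)) * ∑ s ∈ Finset.range T, C s) := by
      field_simp
    rw [h3]
    calc (4*lam) * ((1/(4*lam)) * ∑ s ∈ Finset.range T, C s)
        ≤ (4*lam) * (4*L^2/γ^2 + (T:ℝ)*(ε/lam)) :=
          mul_le_mul_of_nonneg_left h2 (by positivity)
      _ = 16*lam*L^2/γ^2 + 4*(T:ℝ)*ε := by field_simp; ring
  -- the integrand as a function of the full history
  set F : (Fin T → Fin N → Fin k) → ℝ :=
    fun h => (1/(T:ℝ)) * ∑ t : Fin T, c ↑t (fun s : Fin ↑t => h (Fin.castLE t.2.le s)) with hF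
  have hrep : ∀ ω, (1/(T:ℝ)) * ∑ t : Fin T,
      (q ↑t (fun s : Fin ↑t => Y ↑s ω) (ystar (x ↑t)) *
        min (lam/2) (- Real.log (pSeq φ (W ω ↑t) (x ↑t) (ystar (x ↑t)))))
      = F (fun s : Fin T => Y ↑s ω) := by
    intro ω
    rw [hF]
    congr 1
    apply Finset.sum_congr rfl
    intro t _
    rw [hwit ω ↑t t.2.le]
    rfl
  have hint : ∫ ω, F (fun s : Fin T => Y ↑s ω) ∂P
      = ∑ h : Fin T → Fin N → Fin k, μ T h * F h := by
    have hfun : (fun ω => F (fun s : Fin T => Y ↑s ω))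
        = fun ω => ∑ h : Fin T → Fin N → Fin k,
            Set.indicator {ω' | ∀ s : Fin T, Y ↑s ω' = h s} (fun _ => F h) ω := by
      funext ω
      rw [Finset.sum_eq_single (fun s : Fin T => Y ↑s ω)]
      · exact (Set.indicator_of_mem
          (show ω ∈ {ω' | ∀ s : Fin T, Y ↑s ω' = (fun s' : Fin T => Y ↑s' ω) s}
            from fun s => rfl)
          (fun _ => F (fun s' : Fin T => Y ↑s' ω))).symm
      · intro h _ hne
        apply Set.indicator_of_notMem
        intro hmem
        exact hne (funext fun s => (hmem s).symm)
      · intro habs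
        exact absurd (Finset.mem_univ _) habs
    rw [hfun, MeasureTheory.integral_finset_sum]
    · refine Finset.sum_congr rfl fun h _ => ?_
      rw [MeasureTheory.integral_indicator_const (F h) (hEv T h), smul_eq_mul]
      rfl
    · intro h _
      exact (MeasureTheory.integrable_const (F h)).indicator (hEv T h)
  have hswap : ∑ h : Fin T → Fin N → Fin k, μ T h * F h
      = (1/(T:ℝ)) * ∑ t : Fin T, C ↑t := by
    rw [hF]
    have hdist : ∀ h : Fin T → Fin N → Fin k,
        μ T h * ((1/(T:ℝ)) * ∑ t : Fin T, c ↑t (fun s : Fin ↑t => h (Fin.castLE t.2.le s)))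
        = (1/(T:ℝ)) * ∑ t : Fin T,
            μ T h * c ↑t (fun s : Fin ↑t => h (Fin.castLE t.2.le s)) := by
      intro h
      rw [← mul_assoc, mul_comm (μ T h) (1/(T:ℝ)), mul_assoc, Finset.mul_sum]
    rw [Finset.sum_congr rfl fun h _ => hdist h, ← Finset.mul_sum]
    congr 1
    rw [Finset.sum_comm]
    apply Finset.sum_congr rfl
    intro t _
    exact hmarg ↑t (c ↑t) T t.2.le le_rfl
  simp only [hrep]
  rw [hint, hswap]
  have hfinsum : ∑ t : Fin T, C ↑t = ∑ s ∈ Finset.range T, C s :=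
    Fin.sum_univ_eq_sum_range C T
  rw [hfinsum]
  have hL2 : 1 ≤ L^2 := by nlinarith
  have hgoal : (1/(T:ℝ)) * (16*lam*L^2/γ^2 + 4*(T:ℝ)*ε) ≤ 20*lam*L^2/(γ^2*(T:ℝ)) := by
    rw [hεdef]
    have e : (1/(T:ℝ))*(16*lam*L^2/γ^2 + 4*(T:ℝ)*(lam/((T:ℝ)*γ^2)))
        = (16*lam*L^2 + 4*lam)/(γ^2*(T:ℝ)) := by
      field_simp
    rw [e]
    apply div_le_div_of_nonneg_right ?_ (by positivity)
    nlinarith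
  calc (1/(T:ℝ)) * ∑ s ∈ Finset.range T, C s
      ≤ (1/(T:ℝ)) * (16*lam*L^2/γ^2 + 4*(T:ℝ)*ε) :=
        mul_le_mul_of_nonneg_left hSfin (by positivity)
    _ ≤ 20*lam*L^2/(γ^2*(T:ℝ)) := hgoal
end
end
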